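/- arXiv:2304.05728 — 12 statements merged into one kernel-verified Lean document; each statement's English description precedes it below -/
import Mathlib

section
/- The number of random walk labelings of the path graph P_n on n ≥ 1 vertices equals 2^(n-1). -/
/-- The number of random walk labelings of a graph `G` with vertex set `V` of size `m`:
labelings (bijections `V ≃ Fin m`) such that every vertex not labeled `0` is adjacent
to a vertex with a smaller label. -/
noncomputable def rwlCount {V : Type*} (G : SimpleGraph V) (m : ℕ) : ℕ :=
  Nat.card {σ : V ≃ Fin m // ∀ v : V, (σ v : ℕ) ≠ 0 → ∃ w : V, G.Adj v w ∧ σ w < σ v}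

/-- The path graph on `n` vertices: `i` and `j` are adjacent iff `|i - j| = 1`. -/
def pathGraph' (n : ℕ) : SimpleGraph (Fin n) :=
  SimpleGraph.fromRel (fun i j => (i : ℕ) + 1 = (j : ℕ))

namespace RWL
variable {m : ℕ}

def T (b : Fin m → Bool) : ℕ := (Finset.univ.filter fun j => b j = true).card
def Lc (b : Fin m → Bool) (k : ℕ) : ℕ :=
  (Finset.univ.filter fun j : Fin m => (j : ℕ) < k ∧ b j = true).card
def Fc (b : Fin m → Bool) (k : ℕ) : ℕ :=
  (Finset.univ.filter fun j : Fin m => (j : ℕ) < k ∧ ¬ b j = true).card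

lemma T_le (b : Fin m → Bool) : T b ≤ m := by
  simpa [T] using (Finset.card_filter_le Finset.univ fun j => b j = true)

lemma Lc_le_T (b : Fin m → Bool) (k : ℕ) : Lc b k ≤ T b := by
  apply Finset.card_le_card
  intro j hj
  simp only [Finset.mem_filter] at hj ⊢
  exact ⟨hj.1, hj.2.2⟩

lemma Lc_mono (b : Fin m → Bool) {k k' : ℕ} (h : k ≤ k') : Lc b k ≤ Lc b k' := by
  apply Finset.card_le_card
  intro j hj
  simp only [Finset.mem_filter] at hj ⊢
  exact ⟨hj.1, lt_of_lt_of_le hj.2.1 h, hj.2.2⟩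

lemma Fc_mono (b : Fin m → Bool) {k k' : ℕ} (h : k ≤ k') : Fc b k ≤ Fc b k' := by
  apply Finset.card_le_card
  intro j hj
  simp only [Finset.mem_filter] at hj ⊢
  exact ⟨hj.1, lt_of_lt_of_le hj.2.1 h, hj.2.2⟩

lemma Lc_succ (b : Fin m → Bool) {k : ℕ} (hk : k < m) :
    Lc b (k + 1) = Lc b k + (if b ⟨k, hk⟩ then 1 else 0) := by
  by_cases hb : b ⟨k, hk⟩
  · rw [if_pos hb]
    have : (Finset.univ.filter fun j : Fin m => (j : ℕ) < k + 1 ∧ b j = true)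
        = insert ⟨k, hk⟩ (Finset.univ.filter fun j : Fin m => (j : ℕ) < k ∧ b j = true) := by
      ext j
      simp only [Finset.mem_filter, Finset.mem_insert, Finset.mem_univ, true_and]
      constructor
      · rintro ⟨hj, hbj⟩
        rcases Nat.lt_succ_iff_lt_or_eq.mp hj with h | h
        · exact Or.inr ⟨h, hbj⟩
        · exact Or.inl (Fin.ext h)
      · rintro (rfl | ⟨hj, hbj⟩)
        · exact ⟨Nat.lt_succ_self _, hb⟩
        · exact ⟨Nat.lt_succ_of_lt hj, hbj⟩
    rw [Lc, Lc, this, Finset.card_insert_of_notMem]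
    simp
  · rw [if_neg hb]
    have : (Finset.univ.filter fun j : Fin m => (j : ℕ) < k + 1 ∧ b j = true)
        = (Finset.univ.filter fun j : Fin m => (j : ℕ) < k ∧ b j = true) := by
      ext j
      simp only [Finset.mem_filter, Finset.mem_univ, true_and]
      constructor
      · rintro ⟨hj, hbj⟩
        rcases Nat.lt_succ_iff_lt_or_eq.mp hj with h | h
        · exact ⟨h, hbj⟩
        · exact absurd hbj (by rwa [show j = ⟨k, hk⟩ from Fin.ext h])
      · rintro ⟨hj, hbj⟩
        exact ⟨Nat.lt_succ_of_lt hj, hbj⟩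
    rw [Lc, Lc, this]
    simp

lemma Fc_succ (b : Fin m → Bool) {k : ℕ} (hk : k < m) :
    Fc b (k + 1) = Fc b k + (if b ⟨k, hk⟩ then 0 else 1) := by
  by_cases hb : b ⟨k, hk⟩
  · rw [if_pos hb]
    have : (Finset.univ.filter fun j : Fin m => (j : ℕ) < k + 1 ∧ ¬ b j = true)
        = (Finset.univ.filter fun j : Fin m => (j : ℕ) < k ∧ ¬ b j = true) := by
      ext j
      simp only [Finset.mem_filter, Finset.mem_univ, true_and]
      constructor
      · rintro ⟨hj, hbj⟩
        rcases Nat.lt_succ_iff_lt_or_eq.mp hj with h | h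
        · exact ⟨h, hbj⟩
        · exact absurd hb (by rw [show (⟨k, hk⟩ : Fin m) = j from Fin.ext h.symm]; exact hbj)
      · rintro ⟨hj, hbj⟩
        exact ⟨Nat.lt_succ_of_lt hj, hbj⟩
    rw [Fc, Fc, this]
    simp
  · rw [if_neg hb]
    have : (Finset.univ.filter fun j : Fin m => (j : ℕ) < k + 1 ∧ ¬ b j = true)
        = insert ⟨k, hk⟩ (Finset.univ.filter fun j : Fin m => (j : ℕ) < k ∧ ¬ b j = true) := by
      ext j
      simp only [Finset.mem_filter, Finset.mem_insert, Finset.mem_univ, true_and]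
      constructor
      · rintro ⟨hj, hbj⟩
        rcases Nat.lt_succ_iff_lt_or_eq.mp hj with h | h
        · exact Or.inr ⟨h, hbj⟩
        · exact Or.inl (Fin.ext h)
      · rintro (rfl | ⟨hj, hbj⟩)
        · exact ⟨Nat.lt_succ_self _, hb⟩
        · exact ⟨Nat.lt_succ_of_lt hj, hbj⟩
    rw [Fc, Fc, this, Finset.card_insert_of_notMem]
    simp

lemma Lc_add_Fc (b : Fin m → Bool) : ∀ {k : ℕ}, k ≤ m → Lc b k + Fc b k = k := by
  intro k
  induction k with
  | zero => intro _; simp [Lc, Fc]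
  | succ k ih =>
    intro hk
    have hk' : k < m := hk
    rw [Lc_succ b hk', Fc_succ b hk']
    by_cases hb : b ⟨k, hk'⟩ <;> simp [hb, ih (le_of_lt hk')] <;> omega

lemma Lc_m (b : Fin m → Bool) : Lc b m = T b := by
  unfold Lc T
  congr 1
  ext j
  simp [j.isLt]

lemma T_add_Fc_le (b : Fin m → Bool) {k : ℕ} (hk : k ≤ m) : T b + Fc b k ≤ m := by
  have h1 := Fc_mono b hk
  have h2 := Lc_add_Fc b (le_refl m)
  rw [Lc_m b] at h2
  omega

noncomputable def posb (b : Fin m → Bool) (k : ℕ) : ℕ :=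
  if ∃ j : Fin m, (j : ℕ) + 1 = k ∧ b j then T b - Lc b k else T b + Fc b k

lemma posb_zero (b : Fin m → Bool) : posb b 0 = T b := by
  rw [posb, if_neg, Fc]
  · simp
  · rintro ⟨j, hj, -⟩; omega

lemma one_le_Lc (b : Fin m → Bool) (j : Fin m) (hb : b j) : 1 ≤ Lc b ((j : ℕ) + 1) := by
  refine Finset.card_pos.mpr ⟨j, ?_⟩
  simp [hb]

lemma one_le_Fc (b : Fin m → Bool) (j : Fin m) (hb : ¬ b j) : 1 ≤ Fc b ((j : ℕ) + 1) := by
  refine Finset.card_pos.mpr ⟨j, ?_⟩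
  simp [hb]

lemma posb_true (b : Fin m → Bool) (j : Fin m) (hb : b j) :
    posb b ((j : ℕ) + 1) = T b - Lc b ((j : ℕ) + 1) := by
  rw [posb, if_pos ⟨j, rfl, hb⟩]

lemma posb_false (b : Fin m → Bool) (j : Fin m) (hb : ¬ b j) :
    posb b ((j : ℕ) + 1) = T b + Fc b ((j : ℕ) + 1) := by
  rw [posb, if_neg]
  rintro ⟨j', hj', hbj'⟩
  exact hb (by rwa [show j = j' from Fin.ext (by omega)])

lemma posb_true_lt (b : Fin m → Bool) (j : Fin m) (hb : b j) :
    posb b ((j : ℕ) + 1) < T b := by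
  rw [posb_true b j hb]
  have h1 := one_le_Lc b j hb
  have h2 := Lc_le_T b ((j : ℕ) + 1)
  omega

lemma posb_false_gt (b : Fin m → Bool) (j : Fin m) (hb : ¬ b j) :
    T b < posb b ((j : ℕ) + 1) := by
  rw [posb_false b j hb]
  have h1 := one_le_Fc b j hb
  omega

lemma Lc_strict (b : Fin m → Bool) (j j' : Fin m) (h : j < j') (hb' : b j') :
    Lc b ((j : ℕ) + 1) < Lc b ((j' : ℕ) + 1) := by
  apply Finset.card_lt_card
  constructor
  · intro i hi
    simp only [Finset.mem_filter, Finset.mem_univ, true_and] at hi ⊢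
    have : (j : ℕ) < (j' : ℕ) := h
    exact ⟨by omega, hi.2⟩
  · intro hsub
    have hmem : j' ∈ Finset.univ.filter fun i : Fin m => (i : ℕ) < (j' : ℕ) + 1 ∧ b i = true := by
      simp [hb']
    have := hsub hmem
    simp only [Finset.mem_filter, Finset.mem_univ, true_and] at this
    have : (j' : ℕ) < (j : ℕ) + 1 := this.1
    have hlt : (j : ℕ) < (j' : ℕ) := h
    omega

lemma Fc_strict (b : Fin m → Bool) (j j' : Fin m) (h : j < j') (hb' : ¬ b j') :
    Fc b ((j : ℕ) + 1) < Fc b ((j' : ℕ) + 1) := by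
  apply Finset.card_lt_card
  constructor
  · intro i hi
    simp only [Finset.mem_filter, Finset.mem_univ, true_and] at hi ⊢
    have : (j : ℕ) < (j' : ℕ) := h
    exact ⟨by omega, hi.2⟩
  · intro hsub
    have hmem : j' ∈ Finset.univ.filter fun i : Fin m => (i : ℕ) < (j' : ℕ) + 1 ∧ ¬ b i = true := by
      simp [hb']
    have := hsub hmem
    simp only [Finset.mem_filter, Finset.mem_univ, true_and] at this
    have : (j' : ℕ) < (j : ℕ) + 1 := this.1
    have hlt : (j : ℕ) < (j' : ℕ) := h
    omega

lemma posb_le (b : Fin m → Bool) {k : ℕ} (hk : k ≤ m) : posb b k ≤ m := by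
  rw [posb]
  split
  · have := T_le b; omega
  · exact T_add_Fc_le b hk

/-- The key destructor: a nonzero label `k ≤ m` comes from an index `j = k - 1`. -/
lemma exists_pred {k : ℕ} (h0 : k ≠ 0) (hk : k ≤ m) : ∃ j : Fin m, (j : ℕ) + 1 = k :=
  ⟨⟨k - 1, by omega⟩, by simp; omega⟩

lemma posb_inj (b : Fin m → Bool) {k k' : ℕ} (hk : k ≤ m) (hk' : k' ≤ m)
    (h : posb b k = posb b k') : k = k' := by
  by_contra hne
  -- handle zero cases and split by sign of b at predecessors
  rcases Nat.eq_zero_or_pos k with rfl | hk0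
  · obtain ⟨j', rfl⟩ := exists_pred (by omega) hk'
    rw [posb_zero] at h
    by_cases hb' : b j'
    · have := posb_true_lt b j' hb'; omega
    · have := posb_false_gt b j' hb'; omega
  rcases Nat.eq_zero_or_pos k' with rfl | hk0'
  · obtain ⟨j, rfl⟩ := exists_pred (by omega) hk
    rw [posb_zero] at h
    by_cases hb : b j
    · have := posb_true_lt b j hb; omega
    · have := posb_false_gt b j hb; omega
  obtain ⟨j, rfl⟩ := exists_pred (by omega) hk
  obtain ⟨j', rfl⟩ := exists_pred (by omega) hk'
  have hjj' : j ≠ j' := fun hjeq => hne (by rw [hjeq])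
  by_cases hb : b j <;> by_cases hb' : b j'
  · rw [posb_true b j hb, posb_true b j' hb'] at h
    rcases lt_or_gt_of_ne hjj' with hlt | hlt
    · have h1 := Lc_strict b j j' hlt hb'
      have h2 := Lc_le_T b ((j' : ℕ) + 1)
      omega
    · have h1 := Lc_strict b j' j hlt hb
      have h2 := Lc_le_T b ((j : ℕ) + 1)
      omega
  · have h1 := posb_true_lt b j hb
    have h2 := posb_false_gt b j' hb'
    omega
  · have h1 := posb_false_gt b j hb
    have h2 := posb_true_lt b j' hb'
    omega
  · rw [posb_false b j hb, posb_false b j' hb'] at h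
    rcases lt_or_gt_of_ne hjj' with hlt | hlt
    · have h1 := Fc_strict b j j' hlt hb'
      omega
    · have h1 := Fc_strict b j' j hlt hb
      omega

noncomputable def pb (b : Fin m → Bool) : Fin (m + 1) → Fin (m + 1) := fun k =>
  ⟨posb b k.val, Nat.lt_succ_of_le (posb_le b (Nat.lt_succ_iff.mp k.isLt))⟩

lemma pb_injective (b : Fin m → Bool) : Function.Injective (pb b) := by
  intro k k' h
  have := posb_inj b (Nat.lt_succ_iff.mp k.isLt) (Nat.lt_succ_iff.mp k'.isLt)
    (congrArg Fin.val h)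
  exact Fin.ext this

noncomputable def eb (b : Fin m → Bool) : Fin (m + 1) ≃ Fin (m + 1) :=
  Equiv.ofBijective (pb b) (Finite.injective_iff_bijective.mp (pb_injective b))

lemma eb_apply (b : Fin m → Bool) (k : Fin (m + 1)) : eb b k = pb b k := rfl

/-- The labeling obtained from the left/right choices `b`. -/
noncomputable def Gb (b : Fin m → Bool) : Fin (m + 1) ≃ Fin (m + 1) := (eb b).symm

lemma pb_Gb (b : Fin m → Bool) (v : Fin (m + 1)) : pb b (Gb b v) = v :=
  (eb b).apply_symm_apply v

lemma Gb_valid (b : Fin m → Bool) : ∀ v : Fin (m + 1), ((Gb b) v : ℕ) ≠ 0 →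
    ∃ w : Fin (m + 1), (pathGraph' (m + 1)).Adj v w ∧ (Gb b) w < (Gb b) v := by
  intro v h0
  set k := Gb b v with hkdef
  have hv : pb b k = v := pb_Gb b v
  obtain ⟨j, hj⟩ := exists_pred h0 (Nat.lt_succ_iff.mp k.isLt)
  have hvval : (v : ℕ) = posb b ((j : ℕ) + 1) := by
    rw [← hv]; simp only [pb, hj]
  by_cases hb : b j
  · -- left extension: neighbor to the right has a smaller label
    have hvT : (v : ℕ) < T b := by rw [hvval]; exact posb_true_lt b j hb
    have hTm := T_le b
    refine ⟨⟨(v : ℕ) + 1, by omega⟩, ?_, ?_⟩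
    · rw [pathGraph', SimpleGraph.fromRel_adj]
      constructor
      · intro h; apply_fun Fin.val at h; simp at h
      · exact Or.inl rfl
    · set w : Fin (m + 1) := ⟨(v : ℕ) + 1, by omega⟩ with hwdef
      set k' := Gb b w with hk'def
      have hw : pb b k' = w := pb_Gb b w
      by_contra hle
      push_neg at hle
      have hne : k' ≠ k := by
        intro h
        rw [h, hv] at hw
        apply_fun Fin.val at hw
        simp [hwdef] at hw
      have hkk' : k < k' := lt_of_le_of_ne hle (Ne.symm hne)
      have hk'0 : (k' : ℕ) ≠ 0 := by omega
      obtain ⟨j', hj'⟩ := exists_pred hk'0 (Nat.lt_succ_iff.mp k'.isLt)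
      have hjj' : j < j' := by
        have : (k : ℕ) < (k' : ℕ) := hkk'
        exact Fin.lt_def.mpr (by omega)
      have hwval : (w : ℕ) = posb b ((j' : ℕ) + 1) := by
        rw [← hw]; simp only [pb, hj']
      have hwv : (w : ℕ) = (v : ℕ) + 1 := rfl
      have hL1 := one_le_Lc b j hb
      have hLT := Lc_le_T b ((j : ℕ) + 1)
      rw [posb_true b j hb] at hvval
      by_cases hb' : b j'
      · have hstrict := Lc_strict b j j' hjj' hb'
        have hLT' := Lc_le_T b ((j' : ℕ) + 1)
        rw [posb_true b j' hb'] at hwval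
        omega
      · have := posb_false_gt b j' hb'
        omega
  · -- right extension: neighbor to the left has a smaller label
    have hF1 := one_le_Fc b j hb
    rw [posb_false b j hb] at hvval
    have hvT : T b + 1 ≤ (v : ℕ) := by omega
    refine ⟨⟨(v : ℕ) - 1, by omega⟩, ?_, ?_⟩
    · rw [pathGraph', SimpleGraph.fromRel_adj]
      constructor
      · intro h; apply_fun Fin.val at h; simp at h; omega
      · right; simp; omega
    · set w : Fin (m + 1) := ⟨(v : ℕ) - 1, by omega⟩ with hwdef
      set k' := Gb b w with hk'def
      have hw : pb b k' = w := pb_Gb b w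
      by_contra hle
      push_neg at hle
      have hne : k' ≠ k := by
        intro h
        rw [h, hv] at hw
        apply_fun Fin.val at hw
        simp [hwdef] at hw
        omega
      have hkk' : k < k' := lt_of_le_of_ne hle (Ne.symm hne)
      have hk'0 : (k' : ℕ) ≠ 0 := by omega
      obtain ⟨j', hj'⟩ := exists_pred hk'0 (Nat.lt_succ_iff.mp k'.isLt)
      have hjj' : j < j' := by
        have : (k : ℕ) < (k' : ℕ) := hkk'
        exact Fin.lt_def.mpr (by omega)
      have hwval : (w : ℕ) = posb b ((j' : ℕ) + 1) := by
        rw [← hw]; simp only [pb, hj']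
      have hwv : (w : ℕ) = (v : ℕ) - 1 := rfl
      by_cases hb' : b j'
      · have h1 := posb_true_lt b j' hb'
        omega
      · have hstrict := Fc_strict b j j' hjj' hb'
        rw [posb_false b j' hb'] at hwval
        omega

/-- The left/right choices extracted from a labeling. -/
def Fb (σ : Fin (m + 1) ≃ Fin (m + 1)) : Fin m → Bool := fun j =>
  decide (σ.symm j.succ < σ.symm 0)

/-- Lemma A: the position of the label 0 equals the number of labels placed to its left. -/
lemma T_Fb (σ : Fin (m + 1) ≃ Fin (m + 1)) : T (Fb σ) = ((σ.symm 0 : Fin (m + 1)) : ℕ) := by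
  have : T (Fb σ) = (Finset.Iio (σ.symm 0)).card := by
    refine Finset.card_bij' (fun j _ => σ.symm j.succ)
      (fun v hv => (σ v).pred (by
        intro h
        have hveq : v = σ.symm 0 := by rw [← h]; simp
        rw [Finset.mem_Iio] at hv
        exact absurd hveq (ne_of_lt hv))) ?_ ?_ ?_ ?_
    · intro j hj
      simp only [Finset.mem_filter, Finset.mem_univ, true_and, Fb, decide_eq_true_eq] at hj
      exact Finset.mem_Iio.mpr hj
    · intro v hv
      simp only [Finset.mem_filter, Finset.mem_univ, true_and, Fb, decide_eq_true_eq]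
      rw [Fin.succ_pred, Equiv.symm_apply_apply]
      exact Finset.mem_Iio.mp hv
    · intro j hj
      apply Fin.ext
      simp [Fin.coe_pred]
    · intro v hv
      apply (Equiv.symm_apply_eq σ).mpr
      exact (Fin.succ_pred _ _)
  rw [this, Fin.card_Iio]

lemma Lc_zero (b : Fin m → Bool) : Lc b 0 = 0 := by simp [Lc]
lemma Fc_zero (b : Fin m → Bool) : Fc b 0 = 0 := by simp [Fc]

lemma image_Iic (σ : Fin (m + 1) ≃ Fin (m + 1))
    (hσ : ∀ v : Fin (m + 1), ((σ v : Fin (m + 1)) : ℕ) ≠ 0 →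
      ∃ w : Fin (m + 1), (pathGraph' (m + 1)).Adj v w ∧ σ w < σ v) :
    ∀ k : ℕ, (hk : k ≤ m) →
      (Finset.Iic (⟨k, Nat.lt_succ_of_le hk⟩ : Fin (m + 1))).image
          (fun i => ((σ.symm i : Fin (m + 1)) : ℕ))
        = Finset.Icc (T (Fb σ) - Lc (Fb σ) k) (T (Fb σ) + Fc (Fb σ) k) := by
  intro k
  induction k with
  | zero =>
    intro hk
    rw [Lc_zero, Fc_zero]
    ext x
    simp only [Finset.mem_image, Finset.mem_Iic, Finset.mem_Icc, Nat.sub_zero, Nat.add_zero]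
    constructor
    · rintro ⟨i, hi, rfl⟩
      have : i = 0 := le_antisymm hi (Fin.zero_le _)
      subst this
      rw [T_Fb σ]
      omega
    · intro hx
      refine ⟨0, Fin.zero_le _, ?_⟩
      rw [T_Fb σ] at hx
      omega
  | succ k ih =>
    intro hk1
    have hkm : k < m := hk1
    have hIH := ih (le_of_lt hkm)
    set b := Fb σ with hbdef
    set a := T b - Lc b k with hadef
    set c := T b + Fc b k with hcdef
    have hIic : (Finset.Iic (⟨k + 1, Nat.lt_succ_of_le hk1⟩ : Fin (m + 1)))
        = insert ⟨k + 1, Nat.lt_succ_of_le hk1⟩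
            (Finset.Iic (⟨k, Nat.lt_succ_of_le (le_of_lt hkm)⟩ : Fin (m + 1))) := by
      ext i
      simp only [Finset.mem_Iic, Finset.mem_insert, Fin.le_def, Fin.ext_iff]
      omega
    rw [hIic, Finset.image_insert, hIH]
    set v : Fin (m + 1) := σ.symm ⟨k + 1, Nat.lt_succ_of_le hk1⟩ with hvdef
    have hσv : σ v = ⟨k + 1, Nat.lt_succ_of_le hk1⟩ := Equiv.apply_symm_apply σ _
    obtain ⟨w, hadj, hlt⟩ := hσ v (by rw [hσv]; simp)
    have hwle : (σ w : ℕ) < k + 1 := by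
      rw [hσv] at hlt
      exact hlt
    have hwmem : (w : ℕ) ∈ Finset.Icc a c := by
      rw [← hIH]
      refine Finset.mem_image.mpr ⟨σ w, Finset.mem_Iic.mpr (Fin.le_def.mpr (by simp; omega)), ?_⟩
      simp
    have hvnot : (v : ℕ) ∉ Finset.Icc a c := by
      rw [← hIH]
      intro hmem
      obtain ⟨i, hi, hival⟩ := Finset.mem_image.mp hmem
      have h1 : σ.symm i = v := Fin.ext hival
      have h2 : i = (⟨k + 1, Nat.lt_succ_of_le hk1⟩ : Fin (m + 1)) := by
        apply σ.symm.injective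
        rw [h1, hvdef]
      rw [Finset.mem_Iic, h2, Fin.le_def] at hi
      simp only [Fin.val_mk] at hi
      omega
    rw [pathGraph', SimpleGraph.fromRel_adj] at hadj
    obtain ⟨-, hadj2⟩ := hadj
    rw [Finset.mem_Icc] at hwmem hvnot
    have hv2 : (v : ℕ) + 1 = a ∨ (v : ℕ) = c + 1 := by omega
    have hsucc : ((⟨k, hkm⟩ : Fin m).succ : Fin (m + 1))
        = ⟨k + 1, Nat.lt_succ_of_le hk1⟩ := rfl
    rcases hv2 with hv2 | hv2
    · have hbtrue : b ⟨k, hkm⟩ = true := by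
        rw [hbdef]
        simp only [Fb, decide_eq_true_eq, Fin.lt_def, hsucc]
        rw [← hvdef, ← T_Fb σ, ← hbdef]
        omega
      have hLsucc : Lc b (k + 1) = Lc b k + 1 := by
        rw [Lc_succ b hkm, if_pos hbtrue]
      have hFsucc : Fc b (k + 1) = Fc b k := by
        rw [Fc_succ b hkm, if_pos hbtrue]
        simp
      have hLle := Lc_le_T b (k + 1)
      rw [hLsucc, hFsucc]
      ext x
      simp only [Finset.mem_insert, Finset.mem_Icc]
      omega
    · have hbfalse : b ⟨k, hkm⟩ = false := by
        rw [hbdef]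
        simp only [Fb, decide_eq_false_iff_not, Fin.lt_def, hsucc, not_lt]
        rw [← hvdef, ← T_Fb σ, ← hbdef]
        omega
      have hLsucc : Lc b (k + 1) = Lc b k := by
        rw [Lc_succ b hkm, if_neg (by simp [hbfalse])]
        simp
      have hFsucc : Fc b (k + 1) = Fc b k + 1 := by
        rw [Fc_succ b hkm, if_neg (by simp [hbfalse])]
      rw [hLsucc, hFsucc]
      ext x
      simp only [Finset.mem_insert, Finset.mem_Icc]
      omega

lemma pointwise (σ : Fin (m + 1) ≃ Fin (m + 1))
    (hσ : ∀ v : Fin (m + 1), ((σ v : Fin (m + 1)) : ℕ) ≠ 0 →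
      ∃ w : Fin (m + 1), (pathGraph' (m + 1)).Adj v w ∧ σ w < σ v) :
    ∀ k : ℕ, (hk : k ≤ m) →
      ((σ.symm ⟨k, Nat.lt_succ_of_le hk⟩ : Fin (m + 1)) : ℕ) = posb (Fb σ) k := by
  intro k hk
  match k, hk with
  | 0, hk =>
    rw [posb_zero]
    exact (T_Fb σ).symm
  | (k + 1), hk1 =>
    have hkm : k < m := hk1
    have h1 := image_Iic σ hσ k (le_of_lt hkm)
    have h2 := image_Iic σ hσ (k + 1) hk1
    set v : Fin (m + 1) := σ.symm ⟨k + 1, Nat.lt_succ_of_le hk1⟩ with hvdef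
    have hvmem : (v : ℕ) ∈ Finset.Icc (T (Fb σ) - Lc (Fb σ) (k + 1)) (T (Fb σ) + Fc (Fb σ) (k + 1)) := by
      rw [← h2]
      exact Finset.mem_image.mpr ⟨⟨k + 1, Nat.lt_succ_of_le hk1⟩, Finset.mem_Iic.mpr le_rfl, rfl⟩
    have hvnot : (v : ℕ) ∉ Finset.Icc (T (Fb σ) - Lc (Fb σ) k) (T (Fb σ) + Fc (Fb σ) k) := by
      rw [← h1]
      intro hmem
      obtain ⟨i, hi, hival⟩ := Finset.mem_image.mp hmem
      have he1 : σ.symm i = v := Fin.ext hival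
      have he2 : i = (⟨k + 1, Nat.lt_succ_of_le hk1⟩ : Fin (m + 1)) := by
        apply σ.symm.injective
        rw [he1, hvdef]
      rw [Finset.mem_Iic, he2, Fin.le_def] at hi
      simp only [Fin.val_mk] at hi
      omega
    rw [Finset.mem_Icc] at hvmem hvnot
    have hLle := Lc_le_T (Fb σ) (k + 1)
    by_cases hb : Fb σ ⟨k, hkm⟩
    · have hLsucc : Lc (Fb σ) (k + 1) = Lc (Fb σ) k + 1 := by
        rw [Lc_succ (Fb σ) hkm, if_pos hb]
      have hFsucc : Fc (Fb σ) (k + 1) = Fc (Fb σ) k := by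
        rw [Fc_succ (Fb σ) hkm, if_pos hb]
        simp
      have hpos : posb (Fb σ) (k + 1) = T (Fb σ) - Lc (Fb σ) (k + 1) := posb_true (Fb σ) ⟨k, hkm⟩ hb
      rw [hpos]
      rw [hLsucc, hFsucc] at hvmem
      omega
    · have hLsucc : Lc (Fb σ) (k + 1) = Lc (Fb σ) k := by
        rw [Lc_succ (Fb σ) hkm, if_neg hb]
        simp
      have hFsucc : Fc (Fb σ) (k + 1) = Fc (Fb σ) k + 1 := by
        rw [Fc_succ (Fb σ) hkm, if_neg hb]
      have hpos : posb (Fb σ) (k + 1) = T (Fb σ) + Fc (Fb σ) (k + 1) := posb_false (Fb σ) ⟨k, hkm⟩ hb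
      rw [hpos]
      rw [hLsucc, hFsucc] at hvmem
      omega

lemma sigma_eq (σ : Fin (m + 1) ≃ Fin (m + 1))
    (hσ : ∀ v : Fin (m + 1), ((σ v : Fin (m + 1)) : ℕ) ≠ 0 →
      ∃ w : Fin (m + 1), (pathGraph' (m + 1)).Adj v w ∧ σ w < σ v) :
    σ = Gb (Fb σ) := by
  have hsymm : ∀ i : Fin (m + 1), σ.symm i = (Gb (Fb σ)).symm i := by
    intro i
    apply Fin.ext
    have hi : (i : ℕ) ≤ m := Nat.lt_succ_iff.mp i.isLt
    have h1 := pointwise σ hσ (i : ℕ) hi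
    have h2 : (((Gb (Fb σ)).symm i : Fin (m + 1)) : ℕ) = posb (Fb σ) (i : ℕ) := rfl
    rw [h2, ← h1]
  apply Equiv.ext
  intro x
  have h := hsymm ((Gb (Fb σ)) x)
  rw [Equiv.symm_apply_apply] at h
  exact (Equiv.apply_eq_iff_eq_symm_apply σ).mpr h.symm

lemma Fb_Gb (b : Fin m → Bool) : Fb (Gb b) = b := by
  funext j
  have h1 : (((Gb b).symm j.succ : Fin (m + 1)) : ℕ) = posb b ((j : ℕ) + 1) := rfl
  have h0 : (((Gb b).symm 0 : Fin (m + 1)) : ℕ) = posb b 0 := rfl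
  by_cases hb : b j
  · rw [hb]
    simp only [Fb, decide_eq_true_eq, Fin.lt_def, h1, h0, posb_zero]
    exact posb_true_lt b j hb
  · rw [Bool.eq_false_iff.mpr hb]
    simp only [Fb, decide_eq_false_iff_not, Fin.lt_def, h1, h0, posb_zero, not_lt]
    exact le_of_lt (posb_false_gt b j hb)

end RWL

theorem rwl_path (n : ℕ) (hn : 1 ≤ n) :
    rwlCount (pathGraph' n) n = 2 ^ (n - 1) := by
  obtain ⟨m, rfl⟩ : ∃ m, n = m + 1 := ⟨n - 1, by omega⟩
  rw [rwlCount]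
  have E : (Fin m → Bool) ≃ {σ : Fin (m + 1) ≃ Fin (m + 1) //
      ∀ v : Fin (m + 1), ((σ v : Fin (m + 1)) : ℕ) ≠ 0 →
        ∃ w : Fin (m + 1), (pathGraph' (m + 1)).Adj v w ∧ σ w < σ v} :=
    { toFun := fun b => ⟨RWL.Gb b, RWL.Gb_valid b⟩
      invFun := fun σ => RWL.Fb σ.1
      left_inv := fun b => RWL.Fb_Gb b
      right_inv := fun σ => Subtype.ext (RWL.sigma_eq σ.1 σ.2).symm }
  rw [Nat.card_congr E.symm, Nat.card_eq_fintype_card]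
  simp
end

section
/- The number of random walk labelings of the cycle graph C_n on n ≥ 3 vertices equals n·2^(n-2). -/
/-- The cycle graph on vertex set `ZMod n`: `i` and `j` are adjacent iff `i - j ≡ ±1 (mod n)`. -/
def cycleGraph' (n : ℕ) : SimpleGraph (ZMod n) :=
  SimpleGraph.fromRel (fun i j => i - j = 1)

namespace RWL

/-- number of `true` bits among indices `< k` -/
def cnt (B : ℕ → Bool) : ℕ → ℕ
  | 0 => 0
  | k+1 => cnt B k + (if B k then 1 else 0)

lemma cnt_le (B : ℕ → Bool) : ∀ k, cnt B k ≤ k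
  | 0 => le_refl 0
  | k+1 => by
      have := cnt_le B k
      simp only [cnt]; split <;> omega

lemma cnt_congr {B B' : ℕ → Bool} : ∀ k, (∀ j, j < k → B j = B' j) → cnt B k = cnt B' k
  | 0, _ => rfl
  | k+1, h => by
      have h1 := cnt_congr k (fun j hj => h j (by omega))
      have h2 := h k (by omega)
      simp only [cnt, h1, h2]

/-- the walk function determined by start `a` and bits `B` -/
def fA {n : ℕ} (a : ZMod n) (B : ℕ → Bool) : ℕ → ZMod n
  | 0 => a
  | k+1 => if B k then a + ((cnt B (k+1) : ℕ) : ZMod n)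
           else a + ((cnt B (k+1) : ℕ) : ZMod n) - ((k+1 : ℕ) : ZMod n)

/-- left end of the arc occupied after `k` steps -/
def eA {n : ℕ} (a : ZMod n) (B : ℕ → Bool) (k : ℕ) : ZMod n :=
  a + ((cnt B k : ℕ) : ZMod n) - ((k : ℕ) : ZMod n)

lemma eA_zero {n : ℕ} (a : ZMod n) (B : ℕ → Bool) : eA a B 0 = a := by
  simp [eA, cnt]

lemma eA_succ_true {n : ℕ} (a : ZMod n) (B : ℕ → Bool) {k : ℕ} (h : B k = true) :
    eA a B (k+1) = eA a B k := by
  simp [eA, cnt, h]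
  push_cast
  ring

lemma eA_succ_false {n : ℕ} (a : ZMod n) (B : ℕ → Bool) {k : ℕ} (h : B k = false) :
    eA a B (k+1) = eA a B k - 1 := by
  simp [eA, cnt, h]
  push_cast
  ring

lemma fA_succ_true {n : ℕ} (a : ZMod n) (B : ℕ → Bool) {k : ℕ} (h : B k = true) :
    fA a B (k+1) = eA a B k + ((k+1 : ℕ) : ZMod n) := by
  simp [fA, eA, cnt, h]
  push_cast
  ring

lemma fA_succ_false {n : ℕ} (a : ZMod n) (B : ℕ → Bool) {k : ℕ} (h : B k = false) :
    fA a B (k+1) = eA a B k - 1 := by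
  simp [fA, eA, cnt, h]
  push_cast
  ring

/-- right end: `eA a B k + k = a + cnt B k` -/
lemma eA_add {n : ℕ} (a : ZMod n) (B : ℕ → Bool) (k : ℕ) :
    eA a B k + ((k : ℕ) : ZMod n) = a + ((cnt B k : ℕ) : ZMod n) := by
  simp [eA]

/-- the set of visited vertices after `k` steps is an arc -/
lemma arc {n : ℕ} (a : ZMod n) (B : ℕ → Bool) :
    ∀ k, Finset.image (fA a B) (Finset.range (k+1)) =
      Finset.image (fun i : ℕ => eA a B k + (i : ZMod n)) (Finset.range (k+1))
  | 0 => by simp [fA, eA_zero]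
  | k+1 => by
      have ih := arc a B k
      have step : Finset.image (fA a B) (Finset.range (k+1+1)) =
          insert (fA a B (k+1)) (Finset.image (fA a B) (Finset.range (k+1))) := by
        rw [Finset.range_add_one, Finset.image_insert]
      rw [step, ih]
      cases hB : B k with
      | true =>
          rw [fA_succ_true a B hB, eA_succ_true a B hB]
          ext x
          simp only [Finset.mem_insert, Finset.mem_image, Finset.mem_range]
          constructor
          · rintro (rfl | ⟨i, hi, rfl⟩)
            · exact ⟨k+1, by omega, rfl⟩
            · exact ⟨i, by omega, rfl⟩
          · rintro ⟨i, hi, rfl⟩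
            rcases Nat.lt_or_ge i (k+1) with h | h
            · exact Or.inr ⟨i, h, rfl⟩
            · have : i = k+1 := by omega
              subst this; exact Or.inl rfl
      | false =>
          rw [fA_succ_false a B hB, eA_succ_false a B hB]
          ext x
          simp only [Finset.mem_insert, Finset.mem_image, Finset.mem_range]
          constructor
          · rintro (rfl | ⟨i, hi, rfl⟩)
            · exact ⟨0, by omega, by simp⟩
            · exact ⟨i+1, by omega, by push_cast; ring⟩
          · rintro ⟨i, hi, rfl⟩
            rcases i with _ | j
            · exact Or.inl (by simp)
            · exact Or.inr ⟨j, by omega, by push_cast; ring⟩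

lemma cast_inj {n : ℕ} [NeZero n] {i j : ℕ} (hi : i < n) (hj : j < n)
    (h : (i : ZMod n) = (j : ZMod n)) : i = j := by
  have := congrArg ZMod.val h
  rwa [ZMod.val_cast_of_lt hi, ZMod.val_cast_of_lt hj] at this

/-- each new vertex is fresh (while fewer than `n` vertices are visited) -/
lemma fA_new {n : ℕ} [NeZero n] (a : ZMod n) (B : ℕ → Bool) {k : ℕ} (hk : k + 1 < n) :
    fA a B (k+1) ∉ Finset.image (fA a B) (Finset.range (k+1)) := by
  rw [arc a B k]
  simp only [Finset.mem_image, Finset.mem_range]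
  rintro ⟨i, hi, hEq⟩
  cases hB : B k with
  | true =>
      rw [fA_succ_true a B hB] at hEq
      have : i = k + 1 := cast_inj (by omega) hk (add_left_cancel hEq)
      omega
  | false =>
      rw [fA_succ_false a B hB] at hEq
      have h2 : ((i + 1 : ℕ) : ZMod n) = ((0 : ℕ) : ZMod n) := by
        push_cast
        have : eA a B k + (i : ZMod n) + 1 = eA a B k - 1 + 1 := by rw [hEq]
        linear_combination this
      have := cast_inj (by omega) (by omega) h2
      omega

lemma fA_inj {n : ℕ} [NeZero n] (a : ZMod n) (B : ℕ → Bool) {i j : ℕ}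
    (hi : i < n) (hj : j < n) (h : fA a B i = fA a B j) : i = j := by
  rcases Nat.lt_trichotomy i j with hij | hij | hij
  · exfalso
    obtain ⟨m, rfl⟩ := Nat.exists_eq_add_of_lt hij
    exact fA_new a B (k := i + m) (by omega)
      (Finset.mem_image.2 ⟨i, Finset.mem_range.2 (by omega), h⟩)
  · exact hij
  · exfalso
    obtain ⟨m, rfl⟩ := Nat.exists_eq_add_of_lt hij
    exact fA_new a B (k := j + m) (by omega)
      (Finset.mem_image.2 ⟨j, Finset.mem_range.2 (by omega), h.symm⟩)

/-- extend bits `Fin (n-2) → Bool` to `ℕ → Bool`, forcing `true` from index `n-2` on -/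
def ext2 (n : ℕ) (b : Fin (n-2) → Bool) : ℕ → Bool :=
  fun j => if h : j < n-2 then b ⟨j, h⟩ else true

noncomputable def F (n : ℕ) (a : ZMod n) (b : Fin (n-2) → Bool) : Fin n → ZMod n :=
  fun k => fA a (ext2 n b) k.val

lemma F_bij (n : ℕ) [NeZero n] (a : ZMod n) (b : Fin (n-2) → Bool) :
    Function.Bijective (F n a b) := by
  rw [Fintype.bijective_iff_injective_and_card]
  refine ⟨fun i j h => Fin.ext (fA_inj a (ext2 n b) i.isLt j.isLt h), by simp [ZMod.card]⟩

lemma one_lt_cast_ne {n : ℕ} [NeZero n] (hn : 1 < n) : (1 : ZMod n) ≠ 0 := by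
  intro h
  have : ((1 : ℕ) : ZMod n) = ((0 : ℕ) : ZMod n) := by push_cast; exact h
  have := cast_inj (by omega) (by omega) this
  omega

lemma sigma_valid (n : ℕ) [NeZero n] (hn : 3 ≤ n) (a : ZMod n) (b : Fin (n-2) → Bool) :
    ∀ v : ZMod n, (((Equiv.ofBijective _ (F_bij n a b)).symm v : Fin n) : ℕ) ≠ 0 →
      ∃ w : ZMod n, (cycleGraph' n).Adj v w ∧
        (Equiv.ofBijective _ (F_bij n a b)).symm w < (Equiv.ofBijective _ (F_bij n a b)).symm v := by
  intro v hv
  set e := Equiv.ofBijective _ (F_bij n a b) with he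
  set B := ext2 n b with hB
  obtain ⟨m, hm⟩ := Nat.exists_eq_succ_of_ne_zero hv
  have hvF : F n a b (e.symm v) = v := e.apply_symm_apply v
  have hmn : m + 1 < n := by have := (e.symm v).isLt; omega
  have hv2 : v = fA a B (m+1) := by
    rw [← hvF]; unfold F; rw [hm]
  -- the neighbour inside the already-visited arc
  have harc := arc a B m
  cases hBm : B m with
  | true =>
      have ht : eA a B m + ((m : ℕ) : ZMod n) ∈
          Finset.image (fA a B) (Finset.range (m+1)) := by
        rw [harc]
        exact Finset.mem_image.2 ⟨m, Finset.mem_range.2 (by omega), rfl⟩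
      obtain ⟨i, hi, hfi⟩ := Finset.mem_image.1 ht
      rw [Finset.mem_range] at hi
      refine ⟨eA a B m + ((m : ℕ) : ZMod n), ?_, ?_⟩
      · have hsub : v - (eA a B m + ((m : ℕ) : ZMod n)) = 1 := by
          rw [hv2, fA_succ_true a B hBm]; push_cast; ring
        simp only [cycleGraph', SimpleGraph.fromRel_adj]
        refine ⟨fun hcon => ?_, Or.inl hsub⟩
        rw [hcon] at hsub
        simp at hsub
        exact one_lt_cast_ne (by omega) hsub.symm
      · have : e.symm (eA a B m + ((m : ℕ) : ZMod n)) = ⟨i, by omega⟩ := by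
          rw [← hfi]
          have : fA a B i = F n a b ⟨i, by omega⟩ := rfl
          rw [this, Equiv.ofBijective_symm_apply_apply]
        rw [this]
        simp only [Fin.lt_def]
        omega
  | false =>
      have ht : eA a B m ∈ Finset.image (fA a B) (Finset.range (m+1)) := by
        rw [harc]
        exact Finset.mem_image.2 ⟨0, Finset.mem_range.2 (by omega), by simp⟩
      obtain ⟨i, hi, hfi⟩ := Finset.mem_image.1 ht
      rw [Finset.mem_range] at hi
      refine ⟨eA a B m, ?_, ?_⟩
      · have hsub : eA a B m - v = 1 := by
          rw [hv2, fA_succ_false a B hBm]; ring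
        simp only [cycleGraph', SimpleGraph.fromRel_adj]
        refine ⟨fun hcon => ?_, Or.inr hsub⟩
        rw [hcon] at hsub
        simp at hsub
        exact one_lt_cast_ne (by omega) hsub.symm
      · have : e.symm (eA a B m) = ⟨i, by omega⟩ := by
          rw [← hfi]
          have : fA a B i = F n a b ⟨i, by omega⟩ := rfl
          rw [this, Equiv.ofBijective_symm_apply_apply]
        rw [this]
        simp only [Fin.lt_def]
        omega

noncomputable def Phi (n : ℕ) [NeZero n] (hn : 3 ≤ n) :
    ZMod n × (Fin (n-2) → Bool) →
      {σ : ZMod n ≃ Fin n // ∀ v : ZMod n, (σ v : ℕ) ≠ 0 →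
        ∃ w : ZMod n, (cycleGraph' n).Adj v w ∧ σ w < σ v} :=
  fun p => ⟨(Equiv.ofBijective _ (F_bij n p.1 p.2)).symm, sigma_valid n hn p.1 p.2⟩

lemma Phi_inj (n : ℕ) [NeZero n] (hn : 3 ≤ n) : Function.Injective (Phi n hn) := by
  rintro ⟨a, b⟩ ⟨a', b'⟩ h
  have h1 : (Equiv.ofBijective _ (F_bij n a b)).symm
      = (Equiv.ofBijective _ (F_bij n a' b')).symm := Subtype.ext_iff.mp h
  have h2 := congrArg Equiv.symm h1
  simp only [Equiv.symm_symm] at h2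
  have hFk : ∀ k, k < n → fA a (ext2 n b) k = fA a' (ext2 n b') k := by
    intro k hk
    exact DFunLike.congr_fun h2 (⟨k, hk⟩ : Fin n)
  have ha : a = a' := hFk 0 (by omega)
  subst ha
  have hbits : ∀ j, j < n - 2 → ext2 n b j = ext2 n b' j := by
    intro j
    induction j using Nat.strong_induction_on with
    | _ j ih =>
      intro hj
      have hagree : ∀ i, i < j → ext2 n b i = ext2 n b' i := by
        intro i hi
        by_cases hi2 : i < n-2
        · exact ih i hi hi2
        · simp [ext2, hi2]
      have hc : cnt (ext2 n b) j = cnt (ext2 n b') j := cnt_congr j hagree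
      have hkey := hFk (j+1) (by omega)
      cases hbj : ext2 n b j <;> cases hbj' : ext2 n b' j
      · rfl
      · exfalso
        simp only [fA, cnt, hbj, hbj', hc, if_true, if_false, Bool.false_eq_true] at hkey
        have hz : ((j+2 : ℕ) : ZMod n) = ((0:ℕ) : ZMod n) := by
          push_cast at hkey ⊢
          linear_combination -hkey
        have := cast_inj (by omega) (by omega) hz
        omega
      · exfalso
        simp only [fA, cnt, hbj, hbj', hc, if_true, if_false, Bool.false_eq_true] at hkey
        have hz : ((j+2 : ℕ) : ZMod n) = ((0:ℕ) : ZMod n) := by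
          push_cast at hkey ⊢
          linear_combination hkey
        have := cast_inj (by omega) (by omega) hz
        omega
      · rfl
  have hb : b = b' := by
    funext i
    have := hbits i.val i.isLt
    simpa [ext2, i.isLt] using this
  subst hb
  rfl

/-- the "number of right-steps" sequence recovered from a walk `g` -/
def rfun {n : ℕ} (g : ℕ → ZMod n) : ℕ → ℕ
  | 0 => 0
  | k+1 => rfun g k + (if g (k+1) = g 0 + ((rfun g k : ℕ) : ZMod n) + 1 then 1 else 0)

/-- the bits recovered from a walk `g` -/
noncomputable def bfun (n : ℕ) (g : ℕ → ZMod n) : Fin (n-2) → Bool :=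
  fun j => decide (g (j.val+1) = g 0 + ((rfun g j.val : ℕ) : ZMod n) + 1)

lemma cnt_ext2_rfun (n : ℕ) (g : ℕ → ZMod n) :
    ∀ k, k ≤ n - 2 → cnt (ext2 n (bfun n g)) k = rfun g k
  | 0, _ => rfl
  | k+1, h => by
      have ih := cnt_ext2_rfun n g k (by omega)
      have hk2 : k < n - 2 := by omega
      simp only [cnt, rfun, ih, ext2, bfun, hk2, dif_pos]
      congr 1
      by_cases hc : g (k+1) = g 0 + ((rfun g k : ℕ) : ZMod n) + 1
      · simp [hc]
      · simp [hc]

lemma Phi_surj (n : ℕ) [NeZero n] (hn : 3 ≤ n) : Function.Surjective (Phi n hn) := by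
  rintro ⟨σ, hσ⟩
  classical
  set g : ℕ → ZMod n := fun k => if h : k < n then σ.symm ⟨k, h⟩ else 0 with hg
  set a : ZMod n := g 0 with ha
  set b : Fin (n-2) → Bool := bfun n g with hb
  set B : ℕ → Bool := ext2 n b with hB
  -- main claim: g agrees with fA a B below n
  have main : ∀ k, k < n → g k = fA a B k := by
    intro k
    induction k using Nat.strong_induction_on with
    | _ k ih =>
      intro hk
      match k with
      | 0 => rfl
      | m+1 =>
        have ihall : ∀ j, j < m+1 → g j = fA a B j := fun j hj => ih j hj (by omega)
        have himg : Finset.image g (Finset.range (m+1)) =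
            Finset.image (fun i : ℕ => eA a B m + (i : ZMod n)) (Finset.range (m+1)) := by
          rw [← arc a B m]
          apply Finset.image_congr
          intro j hj
          exact ihall j (Finset.mem_range.1 hj)
        -- g (m+1) is not among the previously visited vertices
        have hfresh : g (m+1) ∉ Finset.image g (Finset.range (m+1)) := by
          simp only [Finset.mem_image, Finset.mem_range]
          rintro ⟨j, hj, hEq⟩
          have hjn : j < n := by omega
          simp only [hg, dif_pos hjn, dif_pos hk] at hEq
          have := σ.symm.injective hEq
          simp only [Fin.mk.injEq] at this
          omega
        -- use validity of σ at v = g (m+1)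
        have hv0 : σ (g (m+1)) = ⟨m+1, hk⟩ := by
          simp [hg, hk, dif_pos]
        obtain ⟨w, hadj, hlt⟩ := hσ (g (m+1)) (by rw [hv0]; simp)
        -- w was visited earlier
        have hw : w ∈ Finset.image g (Finset.range (m+1)) := by
          have hwv : σ.symm (σ w) = w := σ.symm_apply_apply w
          refine Finset.mem_image.2 ⟨(σ w).val, Finset.mem_range.2 ?_, ?_⟩
          · have := hlt
            rw [hv0, Fin.lt_def] at this
            exact this
          · simpa [hg, (σ w).isLt, dif_pos] using hwv
        rw [himg] at hw
        obtain ⟨i, hi, hiw⟩ := Finset.mem_image.1 hw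
        rw [Finset.mem_range] at hi
        -- adjacency gives the two possibilities
        rw [cycleGraph'] at hadj
        rw [SimpleGraph.fromRel_adj] at hadj
        obtain ⟨hne, hcase⟩ := hadj
        have htwo : g (m+1) = eA a B m + ((m+1 : ℕ) : ZMod n) ∨ g (m+1) = eA a B m - 1 := by
          rcases hcase with h1 | h1
          · -- g(m+1) - w = 1
            have hgm : g (m+1) = eA a B m + ((i+1 : ℕ) : ZMod n) := by
              push_cast
              linear_combination h1 - hiw
            rcases Nat.lt_or_ge i m with him | him
            · exfalso
              apply hfresh
              rw [himg]
              exact Finset.mem_image.2 ⟨i+1, Finset.mem_range.2 (by omega), hgm.symm⟩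
            · have : i = m := by omega
              subst this
              exact Or.inl hgm
          · -- w - g(m+1) = 1
            have hgm : g (m+1) = eA a B m + (i : ZMod n) - 1 := by
              linear_combination -h1 - hiw
            rcases Nat.eq_zero_or_pos i with him | him
            · subst him
              exact Or.inr (by simpa using hgm)
            · exfalso
              apply hfresh
              rw [himg]
              refine Finset.mem_image.2 ⟨i-1, Finset.mem_range.2 (by omega), ?_⟩
              rw [hgm]
              have hcast : (i : ZMod n) = ((i-1 : ℕ) : ZMod n) + 1 := by
                conv_lhs => rw [show i = (i-1)+1 from by omega]
                push_cast
                ring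
              rw [hcast]
              ring
        -- identify fA a B (m+1)
        rcases Nat.lt_or_ge m (n-2) with hm2 | hm2
        · -- m < n-2 : bit m is recovered by `bfun`
          have hcnt : cnt B m = rfun g m := cnt_ext2_rfun n g m (by omega)
          have hBm : B m = decide (g (m+1) = a + ((rfun g m : ℕ) : ZMod n) + 1) := by
            simp [hB, ext2, hm2, hb, bfun, ha]
          have hright : eA a B m + ((m+1 : ℕ) : ZMod n)
              = a + ((rfun g m : ℕ) : ZMod n) + 1 := by
            rw [← hcnt, eA]
            push_cast
            ring
          rcases htwo with h2 | h2
          · have hBtrue : B m = true := by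
              rw [hBm, decide_eq_true_eq, ← hright]
              exact h2
            rw [fA_succ_true a B hBtrue, ← h2]
          · have hBfalse : B m = false := by
              rw [hBm, decide_eq_false_iff_not]
              intro hcon
              rw [← hright] at hcon
              rw [h2] at hcon
              have hz : ((m+2 : ℕ) : ZMod n) = ((0 : ℕ) : ZMod n) := by
                push_cast at hcon ⊢
                linear_combination -hcon
              have := cast_inj (by omega) (by omega) hz
              omega
            rw [fA_succ_false a B hBfalse, ← h2]
        · -- m = n-2 : forced last step, both ends coincide
          have hm2' : m = n - 2 := by omega
          have hBtrue : B m = true := by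
            simp [hB, ext2, hm2']
          rw [fA_succ_true a B hBtrue]
          have hcoe : ((m+1 : ℕ) : ZMod n) = (-1 : ZMod n) := by
            have : m + 1 = n - 1 := by omega
            rw [this]
            have h1 : ((n - 1 : ℕ) : ZMod n) + 1 = 0 := by
              have : ((n - 1 : ℕ) : ZMod n) + ((1:ℕ) : ZMod n) = ((n : ℕ) : ZMod n) := by
                rw [← Nat.cast_add]
                congr 1
                omega
              simpa [ZMod.natCast_self] using this
            linear_combination h1
          rcases htwo with h2 | h2
          · exact h2
          · rw [h2, hcoe]
            ring
  -- now assemble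
  refine ⟨(a, b), ?_⟩
  have hfun : Equiv.ofBijective _ (F_bij n a b) = σ.symm := by
    apply Equiv.ext
    intro k
    have h1 : (Equiv.ofBijective _ (F_bij n a b)) k = fA a B k.val := rfl
    rw [h1, ← main k.val k.isLt]
    simp [hg, k.isLt, dif_pos]
  apply Subtype.ext
  show (Equiv.ofBijective _ (F_bij n a b)).symm = σ
  rw [hfun]
  exact σ.symm_symm

end RWL

theorem rwl_cycle (n : ℕ) (hn : 3 ≤ n) :
    rwlCount (cycleGraph' n) n = n * 2 ^ (n - 2) := by
  haveI : NeZero n := ⟨by omega⟩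
  rw [rwlCount,
    ← Nat.card_eq_of_bijective (RWL.Phi n hn) ⟨RWL.Phi_inj n hn, RWL.Phi_surj n hn⟩]
  simp [Nat.card_eq_fintype_card, ZMod.card]
end

section
/- For every n ≥ 1, the number of random walk labelings of the King's graph KG_{2,n} of size 2×n equals 2^(n-1) · (n+1)! · C_n, where C_n = (1/(n+1))·binom(2n,n) is the n-th Catalan number. -/
/-- The King's graph of size `2 × n`: two distinct vertices `(i₁,j₁)`, `(i₂,j₂)` are adjacent
iff `|i₁ - i₂| ≤ 1` and `|j₁ - j₂| ≤ 1`. -/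
def kingGraph (n : ℕ) : SimpleGraph (Fin 2 × Fin n) :=
  SimpleGraph.fromRel
    (fun a b => |(a.1 : ℤ) - (b.1 : ℤ)| ≤ 1 ∧ |(a.2 : ℤ) - (b.2 : ℤ)| ≤ 1)

open Finset Function

namespace RWLKing
def Vp {n : ℕ} (e : Equiv.Perm (Fin n)) : Prop :=
  ∀ a b c : Fin n, a ≤ b → b ≤ c → e b ≤ e a ∨ e b ≤ e c

/-- valley shape: antitone before the position of 0, monotone after -/
def W {k : ℕ} (e : Equiv.Perm (Fin (k + 1))) : Prop :=
  (∀ a b : Fin (k + 1), a ≤ b → b ≤ e.symm 0 → e b ≤ e a) ∧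
  (∀ a b : Fin (k + 1), e.symm 0 ≤ a → a ≤ b → e a ≤ e b)

lemma vp_iff_w {k : ℕ} (e : Equiv.Perm (Fin (k + 1))) : Vp e ↔ W e := by
  constructor
  · intro h
    constructor
    · intro a b hab hbz
      rcases h a b (e.symm 0) hab hbz with h' | h'
      · exact h'
      · rw [Equiv.apply_symm_apply] at h'
        exact le_trans h' (Fin.zero_le _)
    · intro a b hza hab
      rcases h (e.symm 0) a b hza hab with h' | h'
      · rw [Equiv.apply_symm_apply] at h'
        exact le_trans h' (Fin.zero_le _)
      · exact h'
  · intro h a b c hab hbc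
    rcases le_total b (e.symm 0) with hb | hb
    · exact Or.inl (h.1 a b hab hb)
    · exact Or.inr (h.2 b c hb hbc)

section Strip

variable {k : ℕ}

lemma succ_ne_last_of_zero {e : Equiv.Perm (Fin (k + 2))} (h0 : e 0 = Fin.last (k + 1))
    (i : Fin (k + 1)) : e i.succ ≠ Fin.last (k + 1) := fun hc =>
  Fin.succ_ne_zero i (e.injective (hc.trans h0.symm))

/-- strip a permutation fixing `last ↦ first position`, i.e. with `e 0 = last` -/
noncomputable def stripT (e : Equiv.Perm (Fin (k + 2))) (h0 : e 0 = Fin.last (k + 1)) :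
    Equiv.Perm (Fin (k + 1)) :=
  Equiv.ofBijective (fun i => (e i.succ).castPred (succ_ne_last_of_zero h0 i)) <| by
    rw [← Finite.injective_iff_bijective]
    intro a b hab
    exact Fin.succ_injective _ (e.injective (Fin.castPred_inj.mp hab))

lemma stripT_castSucc {e : Equiv.Perm (Fin (k + 2))} (h0 : e 0 = Fin.last (k + 1))
    (i : Fin (k + 1)) : (stripT e h0 i).castSucc = e i.succ := by
  simp [stripT, Equiv.ofBijective, Fin.castSucc_castPred]

/-- extend a permutation by putting `last` at position `0` -/
noncomputable def extT (e' : Equiv.Perm (Fin (k + 1))) : Equiv.Perm (Fin (k + 2)) :=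
  Equiv.ofBijective (Fin.cons (Fin.last (k + 1)) (fun i => (e' i).castSucc)) <| by
    rw [← Finite.injective_iff_bijective]
    intro a b hab
    induction a using Fin.cases <;> induction b using Fin.cases <;>
      simp_all [(Fin.castSucc_lt_last _).ne, (Fin.castSucc_lt_last _).ne',
        Fin.castSucc_inj, e'.injective.eq_iff]
lemma extT_zero (e' : Equiv.Perm (Fin (k + 1))) : extT e' 0 = Fin.last (k + 1) := by
  simp [extT, Equiv.ofBijective]

lemma extT_succ (e' : Equiv.Perm (Fin (k + 1))) (i : Fin (k + 1)) :
    extT e' i.succ = (e' i).castSucc := by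
  simp [extT, Equiv.ofBijective]

lemma stripT_extT (e' : Equiv.Perm (Fin (k + 1))) :
    stripT (extT e') (extT_zero e') = e' := by
  apply Equiv.ext
  intro i
  apply Fin.castSucc_injective
  rw [stripT_castSucc, extT_succ]

lemma extT_stripT (e : Equiv.Perm (Fin (k + 2))) (h0 : e 0 = Fin.last (k + 1)) :
    extT (stripT e h0) = e := by
  apply Equiv.ext
  intro v
  induction v using Fin.cases with
  | zero => rw [extT_zero, h0]
  | succ i => rw [extT_succ, stripT_castSucc]

lemma w_stripT {e : Equiv.Perm (Fin (k + 2))} (he : W e) (h0 : e 0 = Fin.last (k + 1)) :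
    W (stripT e h0) := by
  have hz : ((stripT e h0).symm 0).succ = e.symm 0 := by
    apply e.injective
    rw [Equiv.apply_symm_apply, ← stripT_castSucc h0, Equiv.apply_symm_apply, Fin.castSucc_zero]
  constructor
  · intro a b hab hbz
    rw [← Fin.castSucc_le_castSucc_iff, stripT_castSucc, stripT_castSucc]
    exact he.1 a.succ b.succ (Fin.succ_le_succ_iff.mpr hab)
      (by rw [← hz]; exact Fin.succ_le_succ_iff.mpr hbz)
  · intro a b hza hab
    rw [← Fin.castSucc_le_castSucc_iff, stripT_castSucc, stripT_castSucc]
    exact he.2 a.succ b.succ (by rw [← hz]; exact Fin.succ_le_succ_iff.mpr hza)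
      (Fin.succ_le_succ_iff.mpr hab)

lemma w_extT {e' : Equiv.Perm (Fin (k + 1))} (he : W e') : W (extT e') := by
  have hz : (extT e').symm 0 = (e'.symm 0).succ := by
    apply (extT e').injective
    rw [Equiv.apply_symm_apply, extT_succ, Equiv.apply_symm_apply, Fin.castSucc_zero]
  constructor
  · intro a b hab hbz
    induction a using Fin.cases with
    | zero => rw [extT_zero]; exact Fin.le_last _
    | succ a' =>
      induction b using Fin.cases with
      | zero => exact absurd (Fin.le_zero_iff.mp hab) (Fin.succ_ne_zero a')
      | succ b' =>
        rw [extT_succ, extT_succ, Fin.castSucc_le_castSucc_iff]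
        rw [hz] at hbz
        exact he.1 a' b' (Fin.succ_le_succ_iff.mp hab) (Fin.succ_le_succ_iff.mp hbz)
  · intro a b hza hab
    rw [hz] at hza
    induction a using Fin.cases with
    | zero => exact absurd (Fin.le_zero_iff.mp hza) (Fin.succ_ne_zero _)
    | succ a' =>
      induction b using Fin.cases with
      | zero => exact absurd (Fin.le_zero_iff.mp (le_trans hza hab)) (Fin.succ_ne_zero _)
      | succ b' =>
        rw [extT_succ, extT_succ, Fin.castSucc_le_castSucc_iff]
        exact he.2 a' b' (Fin.succ_le_succ_iff.mp hza) (Fin.succ_le_succ_iff.mp hab)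

end Strip

section StripB
variable {k : ℕ}

lemma top_at_last {e : Equiv.Perm (Fin (k + 2))} (he : W e) (h0 : e 0 ≠ Fin.last (k + 1)) :
    e (Fin.last (k + 1)) = Fin.last (k + 1) := by
  set p := e.symm (Fin.last (k + 1)) with hp
  rcases le_total p (e.symm 0) with h | h
  · exfalso
    have := he.1 0 p (Fin.zero_le _) h
    rw [Equiv.apply_symm_apply] at this
    exact h0 (le_antisymm (Fin.le_last _) this)
  · have := he.2 p (Fin.last (k + 1)) h (Fin.le_last _)
    rw [Equiv.apply_symm_apply] at this
    exact le_antisymm (Fin.le_last _) this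

lemma castSucc_ne_last_of_lastfix {e : Equiv.Perm (Fin (k + 2))}
    (hL : e (Fin.last (k + 1)) = Fin.last (k + 1)) (i : Fin (k + 1)) :
    e i.castSucc ≠ Fin.last (k + 1) := fun hc =>
  (Fin.castSucc_lt_last i).ne (e.injective (hc.trans hL.symm))

noncomputable def stripB (e : Equiv.Perm (Fin (k + 2))) (hL : e (Fin.last (k+1)) = Fin.last (k+1)) :
    Equiv.Perm (Fin (k + 1)) :=
  Equiv.ofBijective (fun i => (e i.castSucc).castPred (castSucc_ne_last_of_lastfix hL i)) <| by
    rw [← Finite.injective_iff_bijective]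
    intro a b hab
    exact Fin.castSucc_injective _ (e.injective (Fin.castPred_inj.mp hab))

lemma stripB_castSucc {e : Equiv.Perm (Fin (k + 2))} (hL : e (Fin.last (k+1)) = Fin.last (k+1))
    (i : Fin (k + 1)) : (stripB e hL i).castSucc = e i.castSucc := by
  simp [stripB, Equiv.ofBijective, Fin.castSucc_castPred]

noncomputable def extB (e' : Equiv.Perm (Fin (k + 1))) : Equiv.Perm (Fin (k + 2)) :=
  Equiv.ofBijective (Fin.snoc (fun i => (e' i).castSucc) (Fin.last (k + 1))) <| by
    rw [← Finite.injective_iff_bijective]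
    intro a b hab
    induction a using Fin.lastCases <;> induction b using Fin.lastCases <;>
      simp_all [(Fin.castSucc_lt_last _).ne, (Fin.castSucc_lt_last _).ne',
        Fin.castSucc_inj, e'.injective.eq_iff]

lemma extB_last (e' : Equiv.Perm (Fin (k + 1))) : extB e' (Fin.last (k+1)) = Fin.last (k + 1) := by
  simp [extB, Equiv.ofBijective]

lemma extB_castSucc (e' : Equiv.Perm (Fin (k + 1))) (i : Fin (k + 1)) :
    extB e' i.castSucc = (e' i).castSucc := by
  simp [extB, Equiv.ofBijective]

lemma stripB_extB (e' : Equiv.Perm (Fin (k + 1))) :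
    stripB (extB e') (extB_last e') = e' := by
  apply Equiv.ext
  intro i
  apply Fin.castSucc_injective
  rw [stripB_castSucc, extB_castSucc]

lemma extB_stripB (e : Equiv.Perm (Fin (k + 2))) (hL : e (Fin.last (k+1)) = Fin.last (k+1)) :
    extB (stripB e hL) = e := by
  apply Equiv.ext
  intro v
  induction v using Fin.lastCases with
  | last => rw [extB_last, hL]
  | cast i => rw [extB_castSucc, stripB_castSucc]

lemma extB_zero_ne_last (e' : Equiv.Perm (Fin (k + 1))) : extB e' 0 ≠ Fin.last (k + 1) := by
  have : (0 : Fin (k+2)) = (0 : Fin (k+1)).castSucc := by simp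
  rw [this, extB_castSucc]
  exact (Fin.castSucc_lt_last _).ne

lemma w_stripB {e : Equiv.Perm (Fin (k + 2))} (he : W e)
    (hL : e (Fin.last (k+1)) = Fin.last (k+1)) : W (stripB e hL) := by
  have hz : ((stripB e hL).symm 0).castSucc = e.symm 0 := by
    apply e.injective
    rw [Equiv.apply_symm_apply, ← stripB_castSucc hL, Equiv.apply_symm_apply, Fin.castSucc_zero]
  constructor
  · intro a b hab hbz
    rw [← Fin.castSucc_le_castSucc_iff, stripB_castSucc, stripB_castSucc]
    exact he.1 a.castSucc b.castSucc (Fin.castSucc_le_castSucc_iff.mpr hab)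
      (by rw [← hz]; exact Fin.castSucc_le_castSucc_iff.mpr hbz)
  · intro a b hza hab
    rw [← Fin.castSucc_le_castSucc_iff, stripB_castSucc, stripB_castSucc]
    exact he.2 a.castSucc b.castSucc (by rw [← hz]; exact Fin.castSucc_le_castSucc_iff.mpr hza)
      (Fin.castSucc_le_castSucc_iff.mpr hab)

lemma w_extB {e' : Equiv.Perm (Fin (k + 1))} (he : W e') : W (extB e') := by
  have hz : (extB e').symm 0 = (e'.symm 0).castSucc := by
    apply (extB e').injective
    rw [Equiv.apply_symm_apply, extB_castSucc, Equiv.apply_symm_apply, Fin.castSucc_zero]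
  constructor
  · intro a b hab hbz
    rw [hz] at hbz
    induction b using Fin.lastCases with
    | last => exact absurd (le_antisymm (Fin.le_last _) hbz) (Fin.castSucc_lt_last _).ne
    | cast b' =>
      induction a using Fin.lastCases with
      | last => exact absurd (le_antisymm (Fin.le_last _) hab) (Fin.castSucc_lt_last _).ne
      | cast a' =>
        rw [extB_castSucc, extB_castSucc, Fin.castSucc_le_castSucc_iff]
        exact he.1 a' b' (Fin.castSucc_le_castSucc_iff.mp hab)
          (Fin.castSucc_le_castSucc_iff.mp hbz)
  · intro a b hza hab
    rw [hz] at hza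
    induction b using Fin.lastCases with
    | last => rw [extB_last]; exact Fin.le_last _
    | cast b' =>
      induction a using Fin.lastCases with
      | last => exact absurd (le_antisymm (Fin.le_last _) hab) (Fin.castSucc_lt_last _).ne
      | cast a' =>
        rw [extB_castSucc, extB_castSucc, Fin.castSucc_le_castSucc_iff]
        exact he.2 a' b' (Fin.castSucc_le_castSucc_iff.mp hza)
          (Fin.castSucc_le_castSucc_iff.mp hab)

end StripB

open Classical in
lemma card_w_succ (k : ℕ) :
    Nat.card {e : Equiv.Perm (Fin (k + 2)) // W e} =
      2 * Nat.card {e : Equiv.Perm (Fin (k + 1)) // W e} := by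
  classical
  have hsplit : Nat.card {e : Equiv.Perm (Fin (k + 2)) // W e} =
      Nat.card {e : Equiv.Perm (Fin (k + 2)) // W e ∧ e 0 = Fin.last (k+1)} +
      Nat.card {e : Equiv.Perm (Fin (k + 2)) // W e ∧ ¬ e 0 = Fin.last (k+1)} := by
    rw [← Nat.card_sum]
    apply Nat.card_congr
    refine Equiv.trans (Equiv.sumCompl (fun x : {e : Equiv.Perm (Fin (k+2)) // W e} =>
      x.1 0 = Fin.last (k+1))).symm ?_
    exact Equiv.sumCongr
      (Equiv.subtypeSubtypeEquivSubtypeInter W (fun e => e 0 = Fin.last (k+1)))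
      (Equiv.subtypeSubtypeEquivSubtypeInter W (fun e => ¬ e 0 = Fin.last (k+1)))
  have h1 : Nat.card {e : Equiv.Perm (Fin (k + 2)) // W e ∧ e 0 = Fin.last (k+1)} =
      Nat.card {e : Equiv.Perm (Fin (k + 1)) // W e} := by
    apply Nat.card_eq_of_bijective
      (fun x => (⟨stripT x.1 x.2.2, w_stripT x.2.1 x.2.2⟩ : {e : Equiv.Perm (Fin (k+1)) // W e}))
    constructor
    · rintro ⟨e, he, h0⟩ ⟨e', he', h0'⟩ h
      have := congrArg (fun y : {e : Equiv.Perm (Fin (k+1)) // W e} => extT y.1) h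
      simp only [extT_stripT] at this
      exact Subtype.ext this
    · rintro ⟨e', he'⟩
      refine ⟨⟨extT e', w_extT he', extT_zero e'⟩, ?_⟩
      exact Subtype.ext (stripT_extT e')
  have h2 : Nat.card {e : Equiv.Perm (Fin (k + 2)) // W e ∧ ¬ e 0 = Fin.last (k+1)} =
      Nat.card {e : Equiv.Perm (Fin (k + 1)) // W e} := by
    apply Nat.card_eq_of_bijective
      (fun x => (⟨stripB x.1 (top_at_last x.2.1 x.2.2), w_stripB x.2.1 _⟩ :
        {e : Equiv.Perm (Fin (k+1)) // W e}))
    constructor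
    · rintro ⟨e, he, h0⟩ ⟨e', he', h0'⟩ h
      have := congrArg (fun y : {e : Equiv.Perm (Fin (k+1)) // W e} => extB y.1) h
      simp only [extB_stripB] at this
      exact Subtype.ext this
    · rintro ⟨e', he'⟩
      refine ⟨⟨extB e', w_extB he', extB_zero_ne_last e'⟩, ?_⟩
      exact Subtype.ext (stripB_extB e')
  rw [hsplit, h1, h2]; ring

lemma card_w (k : ℕ) : Nat.card {e : Equiv.Perm (Fin (k + 1)) // W e} = 2 ^ k := by
  induction k with
  | zero =>
    haveI : Subsingleton (Fin (0+1)) := ⟨fun a b => Fin.ext (by omega)⟩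
    have w1 : W (1 : Equiv.Perm (Fin (0+1))) := by
      constructor <;> intro a b _ _ <;> exact le_of_eq (congrArg _ (Subsingleton.elim _ _))
    haveI : Subsingleton (Fin (0+1)) := ⟨fun a b => Fin.ext (by omega)⟩
    haveI : Unique {e : Equiv.Perm (Fin (0+1)) // W e} :=
      ⟨⟨⟨1, w1⟩⟩, fun x => Subtype.ext (Equiv.ext fun i => Subsingleton.elim _ _)⟩
    simp [Nat.card_unique]
  | succ k ih =>
    rw [card_w_succ, ih]
    ring

lemma card_vp (k : ℕ) : Nat.card {e : Equiv.Perm (Fin (k + 1)) // Vp e} = 2 ^ k := by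
  rw [← card_w k]
  exact Nat.card_congr (Equiv.subtypeEquivRight vp_iff_w)

variable {n : ℕ}

def P (f : Fin n → ℕ) : Prop :=
  ∀ j : Fin n, (∃ j0, f j0 < f j) →
    ∃ j' : Fin n, (((j' : ℕ) = (j : ℕ) + 1) ∨ ((j : ℕ) = (j' : ℕ) + 1)) ∧ f j' < f j

/-- quasiconvexity -/
def QC (f : Fin n → ℕ) : Prop :=
  ∀ a b c : Fin n, a ≤ b → b ≤ c → f b ≤ f a ∨ f b ≤ f c

lemma p_of_qc {f : Fin n → ℕ} (hf : Injective f) (hq : QC f) : P f := by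
  intro j hj
  obtain ⟨j0, hj0⟩ := hj
  rcases lt_trichotomy j0 j with h | h | h
  · have h' := Fin.lt_def.mp h
    have hj1 : (1 : ℕ) ≤ (j : ℕ) := by omega
    set j1 : Fin n := ⟨(j : ℕ) - 1, by omega⟩ with hj1def
    have hj1v : (j1 : ℕ) = (j : ℕ) - 1 := rfl
    refine ⟨j1, Or.inr (by omega), ?_⟩
    have hle : j0 ≤ j1 := by rw [Fin.le_def, hj1v]; omega
    have hle2 : j1 ≤ j := by rw [Fin.le_def, hj1v]; omega
    have hne : j1 ≠ j := fun he => by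
      have := congrArg Fin.val he; rw [hj1v] at this; omega
    rcases hq j0 j1 j hle hle2 with hle3 | hle3
    · exact lt_of_le_of_lt hle3 hj0
    · exact lt_of_le_of_ne hle3 (fun hh => hne (hf hh))
  · exact absurd hj0 (by rw [h]; omega)
  · have h' := Fin.lt_def.mp h
    have hjn : (j : ℕ) + 1 < n := by have := j0.isLt; omega
    set j1 : Fin n := ⟨(j : ℕ) + 1, hjn⟩ with hj1def
    have hj1v : (j1 : ℕ) = (j : ℕ) + 1 := rfl
    refine ⟨j1, Or.inl hj1v, ?_⟩
    have hle : j ≤ j1 := by rw [Fin.le_def, hj1v]; omega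
    have hle2 : j1 ≤ j0 := by rw [Fin.le_def, hj1v]; omega
    have hne : j1 ≠ j := fun he => by
      have := congrArg Fin.val he; rw [hj1v] at this; omega
    rcases hq j j1 j0 hle hle2 with hle3 | hle3
    · exact lt_of_le_of_ne hle3 (fun hh => hne (hf hh))
    · exact lt_of_le_of_lt hle3 hj0

lemma sublevel_convex {f : Fin n → ℕ} (hf : Injective f) (hp : P f) :
    ∀ x : ℕ, ∀ a b c : Fin n, a ≤ b → b ≤ c → f a ≤ x → f c ≤ x → f b ≤ x := by
  intro x
  induction x using Nat.strong_induction_on with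
  | _ x ih =>
    intro a b c hab hbc hfa hfc
    by_cases hex : ∃ p, f p = x
    · obtain ⟨p, hpx⟩ := hex
      by_cases hsm : ∃ q, f q < x
      · -- main case
        obtain ⟨q, hq⟩ := hsm
        have hx1 : 1 ≤ x := by omega
        obtain ⟨j', hj', hj'lt⟩ := hp p ⟨q, by omega⟩
        by_contra hb
        push_neg at hb
        have hba : a ≠ b := fun h => by rw [h] at hfa; omega
        have hbc' : b ≠ c := fun h => by rw [← h] at hfc; omega
        have hab' : (a : ℕ) < (b : ℕ) :=
          lt_of_le_of_ne (Fin.le_def.mp hab) (fun h => hba (Fin.ext h))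
        have hbc'' : (b : ℕ) < (c : ℕ) :=
          lt_of_le_of_ne (Fin.le_def.mp hbc) (fun h => hbc' (Fin.ext h))
        have key : ∀ u w : Fin n, u ≤ b → b ≤ w → f u < x → f w < x → False := by
          intro u w hub hbw hu hw
          have := ih (x - 1) (by omega) u b w hub hbw (by omega) (by omega)
          omega
        rw [hpx] at hj'lt
        by_cases hap : a = p
        · have hapv : (a : ℕ) = (p : ℕ) := congrArg Fin.val hap
          have hcp : c ≠ p := fun h => by
            have : (c : ℕ) = (p : ℕ) := congrArg Fin.val h; omega
          have hfc' : f c < x := lt_of_le_of_ne hfc (fun h => hcp (hf (by rw [h, hpx])))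
          have hj'b : j' ≤ b := by rw [Fin.le_def]; omega
          exact key j' c hj'b hbc hj'lt hfc'
        · have hfa' : f a < x := lt_of_le_of_ne hfa (fun h => hap (hf (by rw [h, hpx])))
          by_cases hcp : c = p
          · have hcpv : (c : ℕ) = (p : ℕ) := congrArg Fin.val hcp
            have hbj' : b ≤ j' := by rw [Fin.le_def]; omega
            exact key a j' hab hbj' hfa' hj'lt
          · have hfc' : f c < x := lt_of_le_of_ne hfc (fun h => hcp (hf (by rw [h, hpx])))
            exact key a c hab hbc hfa' hfc'
      · push_neg at hsm
        have ha' : f a = x := le_antisymm hfa (hsm a)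
        have hc' : f c = x := le_antisymm hfc (hsm c)
        have hac : a = c := hf (ha'.trans hc'.symm)
        rw [hac] at hab
        have : b = c := le_antisymm hbc hab
        rw [this, hc']
    · push_neg at hex
      rcases Nat.eq_zero_or_pos x with h0 | h0
      · exact absurd (by omega : f a = x) (hex a)
      · have := ih (x - 1) (by omega) a b c hab hbc
          (by have h1 := hex a; omega) (by have h1 := hex c; omega)
        omega

lemma qc_of_p {f : Fin n → ℕ} (hf : Injective f) (hp : P f) : QC f := by
  intro a b c hab hbc
  have := sublevel_convex hf hp (max (f a) (f c)) a b c hab hbc (le_max_left _ _) (le_max_right _ _)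
  rcases le_max_iff.mp this with h | h
  · exact Or.inl h
  · exact Or.inr h

section Rank

variable (f : Fin n → ℕ)

/-- the rank of `f j` among the values of `f` -/
def rkN (j : Fin n) : ℕ := (univ.filter (fun j' => f j' < f j)).card

lemma rkN_lt (j : Fin n) : rkN f j < n := by
  unfold rkN
  have hsub : univ.filter (fun j' => f j' < f j) ⊆ univ.erase j := by
    intro x hx
    simp only [mem_filter] at hx
    exact mem_erase.mpr ⟨fun h => by rw [h] at hx; omega, mem_univ x⟩
  have := card_le_card hsub
  rw [card_erase_of_mem (mem_univ j), card_univ, Fintype.card_fin] at this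
  have := j.pos
  omega

variable {f}

lemma rkN_lt_of_lt (hab : f a < f b) : rkN f a < rkN f b := by
  apply card_lt_card
  constructor
  · intro x hx
    simp only [mem_filter] at *
    exact ⟨mem_univ x, by omega⟩
  · intro hsub
    have := hsub (mem_filter.mpr ⟨mem_univ a, hab⟩)
    simp only [mem_filter] at this
    omega

lemma rkN_lt_iff (hf : Injective f) {a b : Fin n} : rkN f a < rkN f b ↔ f a < f b := by
  constructor
  · intro h
    rcases lt_trichotomy (f a) (f b) with h' | h' | h'
    · exact h'
    · rw [hf h'] at h; omega
    · exact absurd (rkN_lt_of_lt h') (by omega)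
  · exact rkN_lt_of_lt

lemma rkN_le_iff (hf : Injective f) {a b : Fin n} : rkN f a ≤ rkN f b ↔ f a ≤ f b := by
  rcases lt_trichotomy (f a) (f b) with h | h | h
  · simp [le_of_lt h, le_of_lt (rkN_lt_of_lt h)]
  · simp [hf h]
  · have := rkN_lt_of_lt h
    constructor
    · intro h'; omega
    · intro h'; omega

lemma rkN_injective (hf : Injective f) : Injective (rkN f) := by
  intro a b h
  apply hf
  have h1 := (rkN_le_iff hf (a := a) (b := b)).mp (le_of_eq h)
  have h2 := (rkN_le_iff hf (a := b) (b := a)).mp (le_of_eq h.symm)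
  omega

/-- the rank permutation of an injective sequence -/
noncomputable def rkE (hf : Injective f) : Equiv.Perm (Fin n) :=
  Equiv.ofBijective (fun j => ⟨rkN f j, rkN_lt f j⟩) <| by
    rw [← Finite.injective_iff_bijective]
    intro a b h
    exact rkN_injective hf (congrArg Fin.val h)

lemma rkE_apply (hf : Injective f) (j : Fin n) : (rkE hf j : ℕ) = rkN f j := rfl

lemma rkN_comp (e : Equiv.Perm (Fin n)) (j : Fin n) : rkN (f ∘ e) j = rkN f (e j) := by
  unfold rkN
  apply card_nbij (i := fun x => e x)
  · intro x hx; simp only [mem_coe, mem_filter, comp_apply] at *; exact ⟨mem_univ _, hx.2⟩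
  · intro x hx y hy h; exact e.injective h
  · intro y hy
    simp only [Set.mem_image, mem_coe, mem_filter, comp_apply] at *
    exact ⟨e.symm y, ⟨mem_univ _, by simp [hy.2]⟩, by simp⟩

end Rank

lemma king_adj {a b : Fin 2 × Fin n} :
    (kingGraph n).Adj a b ↔ a ≠ b ∧ |((a.2 : ℕ) : ℤ) - ((b.2 : ℕ) : ℤ)| ≤ 1 := by
  have hrow : ∀ i1 i2 : Fin 2, |((i1 : ℕ) : ℤ) - ((i2 : ℕ) : ℤ)| ≤ 1 := by decide
  rw [kingGraph, SimpleGraph.fromRel_adj]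
  constructor
  · rintro ⟨hne, h | h⟩
    · exact ⟨hne, h.2⟩
    · refine ⟨hne, ?_⟩
      rw [abs_sub_comm]
      exact h.2
  · rintro ⟨hne, h⟩
    exact ⟨hne, Or.inl ⟨hrow _ _, h⟩⟩

def KGvalid (σ : (Fin 2 × Fin n) ≃ Fin (2 * n)) : Prop :=
  ∀ v : Fin 2 × Fin n, (σ v : ℕ) ≠ 0 → ∃ w, (kingGraph n).Adj v w ∧ σ w < σ v

/-- the smaller of the two labels in column `j` -/
def tmin (σ : (Fin 2 × Fin n) ≃ Fin (2 * n)) (j : Fin n) : ℕ :=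
  min ((σ (0, j) : ℕ)) ((σ (1, j) : ℕ))

lemma tmin_exists (σ : (Fin 2 × Fin n) ≃ Fin (2 * n)) (j : Fin n) :
    ∃ i : Fin 2, (σ (i, j) : ℕ) = tmin σ j := by
  rcases min_cases ((σ (0, j) : ℕ)) ((σ (1, j) : ℕ)) with ⟨h, _⟩ | ⟨h, _⟩
  · exact ⟨0, h.symm⟩
  · exact ⟨1, h.symm⟩

lemma tmin_le (σ : (Fin 2 × Fin n) ≃ Fin (2 * n)) (i : Fin 2) (j : Fin n) :
    tmin σ j ≤ (σ (i, j) : ℕ) := by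
  fin_cases i
  · exact min_le_left _ _
  · exact min_le_right _ _

lemma tmin_injective (σ : (Fin 2 × Fin n) ≃ Fin (2 * n)) : Injective (tmin σ) := by
  intro a b h
  obtain ⟨i, hi⟩ := tmin_exists σ a
  obtain ⟨i', hi'⟩ := tmin_exists σ b
  have : σ (i, a) = σ (i', b) := Fin.ext (by rw [hi, hi', h])
  have := σ.injective this
  exact (Prod.ext_iff.mp this).2

lemma valid_iff_p (σ : (Fin 2 × Fin n) ≃ Fin (2 * n)) : KGvalid σ ↔ P (tmin σ) := by
  constructor
  · intro hval j hj
    obtain ⟨j0, hj0⟩ := hj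
    obtain ⟨i, hi⟩ := tmin_exists σ j
    have hne0 : (σ (i, j) : ℕ) ≠ 0 := by omega
    obtain ⟨w, hadj, hlt⟩ := hval (i, j) hne0
    obtain ⟨hne, habs⟩ := king_adj.mp hadj
    have habs' : |((j : ℕ) : ℤ) - ((w.2 : ℕ) : ℤ)| ≤ 1 := habs
    have hltv : (σ w : ℕ) < tmin σ j := by
      rw [← hi]; exact Fin.lt_def.mp hlt
    have htw : tmin σ w.2 ≤ (σ w : ℕ) := tmin_le σ w.1 w.2
    have hwj : (w.2 : ℕ) ≠ (j : ℕ) := by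
      intro hc
      have hfin : w.2 = j := Fin.ext hc
      rw [hfin] at htw
      omega
    refine ⟨w.2, ?_, lt_of_le_of_lt htw hltv⟩
    rw [abs_le] at habs'
    omega
  · intro hp v hv0
    obtain ⟨i, j⟩ := v
    rcases lt_or_eq_of_le (tmin_le σ i j) with hlt | heq
    · obtain ⟨i', hi'⟩ := tmin_exists σ j
      have hii' : i' ≠ i := fun h => by rw [h] at hi'; omega
      refine ⟨(i', j), ?_, ?_⟩
      · rw [king_adj]
        refine ⟨fun h => hii' (congrArg Prod.fst h).symm, ?_⟩
        show |((j : ℕ) : ℤ) - ((j : ℕ) : ℤ)| ≤ 1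
        simp
      · rw [Fin.lt_def, hi']
        exact hlt
    · have hn0 : 0 < 2 * n := by have := j.pos; omega
      have hj0 : ∃ j0, tmin σ j0 < tmin σ j := by
        set u := σ.symm ⟨0, hn0⟩ with hu
        refine ⟨u.2, ?_⟩
        have h1 : tmin σ u.2 ≤ ((⟨0, hn0⟩ : Fin (2 * n)) : ℕ) := by
          have h2 := tmin_le σ u.1 u.2
          have he : σ (u.1, u.2) = (⟨0, hn0⟩ : Fin (2 * n)) := by
            rw [show (u.1, u.2) = u from rfl, hu, Equiv.apply_symm_apply]
          rwa [he] at h2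
        have h3 : tmin σ j ≠ 0 := by rw [heq]; exact hv0
        simp only [] at h1
        omega
      obtain ⟨j', hcond, hlt'⟩ := hp j hj0
      obtain ⟨i', hi'⟩ := tmin_exists σ j'
      refine ⟨(i', j'), ?_, ?_⟩
      · rw [king_adj]
        constructor
        · intro h
          have hv : (j : ℕ) = (j' : ℕ) := congrArg (fun x : Fin 2 × Fin n => ((x.2 : ℕ))) h
          omega
        · show |((j : ℕ) : ℤ) - ((j' : ℕ) : ℤ)| ≤ 1
          rw [abs_le]
          omega
      · rw [Fin.lt_def, hi', ← heq]
        exact hlt'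


section Action

variable {n : ℕ}

/-- permute the columns of a labeling -/
def act (e : Equiv.Perm (Fin n)) (σ : (Fin 2 × Fin n) ≃ Fin (2 * n)) :
    (Fin 2 × Fin n) ≃ Fin (2 * n) :=
  (Equiv.prodCongr (Equiv.refl (Fin 2)) e.symm).trans σ

lemma act_apply (e : Equiv.Perm (Fin n)) (σ : (Fin 2 × Fin n) ≃ Fin (2 * n)) (i : Fin 2)
    (j : Fin n) : act e σ (i, j) = σ (i, e.symm j) := rfl

lemma act_act (e e' : Equiv.Perm (Fin n)) (σ : (Fin 2 × Fin n) ≃ Fin (2 * n)) :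
    act e (act e' σ) = act (e * e') σ := by
  apply Equiv.ext
  rintro ⟨i, j⟩
  rfl

lemma act_one (σ : (Fin 2 × Fin n) ≃ Fin (2 * n)) : act 1 σ = σ := by
  apply Equiv.ext
  rintro ⟨i, j⟩
  rfl

lemma tmin_act (e : Equiv.Perm (Fin n)) (σ : (Fin 2 × Fin n) ≃ Fin (2 * n)) :
    tmin (act e σ) = tmin σ ∘ e.symm := rfl

/-- the rank permutation of the column minima -/
noncomputable def Phi (σ : (Fin 2 × Fin n) ≃ Fin (2 * n)) : Equiv.Perm (Fin n) :=
  rkE (tmin_injective σ)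

lemma Phi_apply (σ : (Fin 2 × Fin n) ≃ Fin (2 * n)) (j : Fin n) :
    (Phi σ j : ℕ) = rkN (tmin σ) j := rfl

lemma Phi_act (e : Equiv.Perm (Fin n)) (σ : (Fin 2 × Fin n) ≃ Fin (2 * n)) :
    Phi (act e σ) = Phi σ * e.symm := by
  apply Equiv.ext
  intro j
  apply Fin.ext
  rw [Phi_apply]
  have h1 : tmin (act e σ) = tmin σ ∘ e.symm := tmin_act e σ
  calc rkN (tmin (act e σ)) j = rkN (tmin σ ∘ e.symm) j := by rw [h1]
    _ = rkN (tmin σ) (e.symm j) := rkN_comp e.symm j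
    _ = ((Phi σ * e.symm) j : ℕ) := rfl

/-- the normalized labelings -/
def F0 (n : ℕ) : Type := {τ : (Fin 2 × Fin n) ≃ Fin (2 * n) // Phi τ = 1}

/-- decomposition of labelings into order pattern and normalized labeling -/
noncomputable def mainEquiv :
    ((Fin 2 × Fin n) ≃ Fin (2 * n)) ≃ Equiv.Perm (Fin n) × F0 n where
  toFun σ := (Phi σ, ⟨act (Phi σ) σ, by
    rw [Phi_act]
    have : (Phi σ).symm = (Phi σ)⁻¹ := rfl
    rw [this, mul_inv_cancel]⟩)
  invFun p := act p.1⁻¹ p.2.1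
  left_inv σ := by
    show act (Phi σ)⁻¹ (act (Phi σ) σ) = σ
    rw [act_act, inv_mul_cancel, act_one]
  right_inv p := by
    obtain ⟨e, τ, hτ⟩ := p
    have hPhi : Phi (act e⁻¹ τ) = e := by
      rw [Phi_act, hτ, one_mul]
      ext j
      simp [Equiv.Perm.inv_def]
    refine Prod.ext ?_ ?_
    · exact hPhi
    · apply Subtype.ext
      show act (Phi (act e⁻¹ τ)) (act e⁻¹ τ) = τ
      rw [hPhi, act_act, mul_inv_cancel, act_one]

lemma qc_iff_vp (σ : (Fin 2 × Fin n) ≃ Fin (2 * n)) : QC (tmin σ) ↔ Vp (Phi σ) := by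
  unfold QC Vp
  apply forall_congr'; intro a
  apply forall_congr'; intro b
  apply forall_congr'; intro c
  apply imp_congr_right; intro _
  apply imp_congr_right; intro _
  have key : ∀ x y : Fin n, tmin σ x ≤ tmin σ y ↔ Phi σ x ≤ Phi σ y := by
    intro x y
    rw [Fin.le_def, Phi_apply, Phi_apply, rkN_le_iff (tmin_injective σ)]
  rw [key b a, key b c]

lemma valid_iff_vp (σ : (Fin 2 × Fin n) ≃ Fin (2 * n)) : KGvalid σ ↔ Vp (Phi σ) := by
  rw [valid_iff_p, ← qc_iff_vp]
  constructor
  · exact qc_of_p (tmin_injective σ)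
  · exact p_of_qc (tmin_injective σ)

/-- predicate-on-first-component product split -/
def prodSub {α β : Type*} (p : α → Prop) : {x : α × β // p x.1} ≃ {a // p a} × β where
  toFun x := (⟨x.1.1, x.2⟩, x.1.2)
  invFun y := ⟨(y.1.1, y.2), y.1.2⟩
  left_inv x := rfl
  right_inv y := rfl

lemma card_valid (n : ℕ) :
    Nat.card {σ : (Fin 2 × Fin n) ≃ Fin (2 * n) // KGvalid σ} =
      Nat.card {e : Equiv.Perm (Fin n) // Vp e} * Nat.card (F0 n) := by
  have e1 : {σ : (Fin 2 × Fin n) ≃ Fin (2 * n) // KGvalid σ} ≃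
      {x : Equiv.Perm (Fin n) × F0 n // Vp x.1} :=
    Equiv.subtypeEquiv mainEquiv (fun σ => valid_iff_vp σ)
  rw [Nat.card_congr e1, Nat.card_congr (prodSub Vp), Nat.card_prod]

lemma card_all (n : ℕ) :
    (2 * n).factorial = n.factorial * Nat.card (F0 n) := by
  have h1 : Nat.card ((Fin 2 × Fin n) ≃ Fin (2 * n)) =
      Nat.card (Equiv.Perm (Fin n)) * Nat.card (F0 n) := by
    rw [Nat.card_congr (mainEquiv (n := n)), Nat.card_prod]
  have h2 : Nat.card ((Fin 2 × Fin n) ≃ Fin (2 * n)) = (2 * n).factorial := by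
    rw [Nat.card_eq_fintype_card, Fintype.card_equiv (finProdFinEquiv)]
    simp
  have h3 : Nat.card (Equiv.Perm (Fin n)) = n.factorial := by
    rw [Nat.card_eq_fintype_card, Fintype.card_perm, Fintype.card_fin]
  rw [← h2, h1, h3]

end Action

end RWLKing

theorem rwl_king (n : ℕ) (hn : 1 ≤ n) :
    rwlCount (kingGraph n) (2 * n) = 2 ^ (n - 1) * (n + 1).factorial * catalan n := by
  obtain ⟨k, rfl⟩ : ∃ k, n = k + 1 := ⟨n - 1, by omega⟩
  have hcount : rwlCount (kingGraph (k + 1)) (2 * (k + 1)) =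
      Nat.card {σ : (Fin 2 × Fin (k + 1)) ≃ Fin (2 * (k + 1)) // RWLKing.KGvalid σ} := rfl
  have hvp : Nat.card {e : Equiv.Perm (Fin (k + 1)) // RWLKing.Vp e} = 2 ^ k :=
    RWLKing.card_vp k
  have key : rwlCount (kingGraph (k + 1)) (2 * (k + 1)) * (k + 1).factorial =
      2 ^ k * (2 * (k + 1)).factorial := by
    rw [hcount, RWLKing.card_valid (k + 1), hvp, RWLKing.card_all (k + 1)]
    ring
  have harith : 2 ^ k * (2 * (k + 1)).factorial =
      (2 ^ k * (k + 2).factorial * catalan (k + 1)) * (k + 1).factorial := by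
    have hcb : (k + 2) * catalan (k + 1) = (k + 1).centralBinom :=
      succ_mul_catalan_eq_centralBinom (k + 1)
    have hcb2 : (k + 1).centralBinom = (2 * (k + 1)).choose (k + 1) :=
      Nat.centralBinom_eq_two_mul_choose (k + 1)
    have hch : (2 * (k + 1)).choose (k + 1) * (k + 1).factorial * (k + 1).factorial =
        (2 * (k + 1)).factorial := by
      have := Nat.choose_mul_factorial_mul_factorial (n := 2 * (k + 1)) (k := k + 1) (by omega)
      have hsub : 2 * (k + 1) - (k + 1) = k + 1 := by omega
      rw [hsub] at this
      exact this
    calc 2 ^ k * (2 * (k + 1)).factorial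
        = 2 ^ k * ((2 * (k + 1)).choose (k + 1) * (k + 1).factorial * (k + 1).factorial) := by
          rw [hch]
      _ = 2 ^ k * (((k + 2) * catalan (k + 1)) * (k + 1).factorial * (k + 1).factorial) := by
          rw [hcb, hcb2]
      _ = (2 ^ k * ((k + 2) * (k + 1).factorial) * catalan (k + 1)) * (k + 1).factorial := by
          ring
      _ = (2 ^ k * (k + 2).factorial * catalan (k + 1)) * (k + 1).factorial := by
          rw [← Nat.factorial_succ]
  rw [harith] at key
  have hpos : 0 < (k + 1).factorial := Nat.factorial_pos _
  have := Nat.eq_of_mul_eq_mul_right hpos key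
  simpa using this
end

section
/- For every n ≥ 1, the number of random walk labelings of the King's graph KG_{2,n} whose label 1 lies in the first column (i.e., on a vertex (i,1) with i ∈ {1,2}) equals (2n)!/n!. -/
open Function Equiv

/-- Labels run over `0, …, m - 1`, so the paper's label `i` is `i - 1` here. -/
def IsRandomWalkLabeling {V : Type*} {m : ℕ} (G : SimpleGraph V) (σ : V ≃ Fin m) : Prop :=
  ∀ v, (σ v : ℕ) ≠ 0 → ∃ w, G.Adj v w ∧ σ w < σ v

theorem kingGraph_adj_iff {n : ℕ} {v w : Fin 2 × Fin n} :
    (kingGraph n).Adj v w ↔ v ≠ w ∧ (v.2 : ℕ) ≤ w.2 + 1 ∧ (w.2 : ℕ) ≤ v.2 + 1 := by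
  have := v.1.isLt
  have := w.1.isLt
  simp only [kingGraph, SimpleGraph.fromRel_adj, abs_le]
  exact and_congr_right fun _ => by omega

section Columns

variable {ι β : Type*}

def relabelColumns (σ : Fin 2 × ι ≃ β) (π : Perm ι) : Fin 2 × ι ≃ β :=
  (prodCongr (Equiv.refl _) π).trans σ

theorem relabelColumns_relabelColumns (σ : Fin 2 × ι ≃ β) (π π' : Perm ι) :
    relabelColumns (relabelColumns σ π) π' = relabelColumns σ (π * π') :=
  rfl

theorem relabelColumns_one (σ : Fin 2 × ι ≃ β) : relabelColumns σ 1 = σ :=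
  rfl

variable [LinearOrder β]

def columnMin (σ : Fin 2 × ι → β) (j : ι) : β := min (σ (0, j)) (σ (1, j))

theorem columnMin_le (σ : Fin 2 × ι → β) (i : Fin 2) (j : ι) : columnMin σ j ≤ σ (i, j) := by
  fin_cases i
  exacts [min_le_left _ _, min_le_right _ _]

theorem exists_eq_columnMin (σ : Fin 2 × ι → β) (j : ι) : ∃ i, σ (i, j) = columnMin σ j := by
  rcases min_choice (σ (0, j)) (σ (1, j)) with h | h
  exacts [⟨0, h.symm⟩, ⟨1, h.symm⟩]

theorem columnMin_injective {σ : Fin 2 × ι → β} (hσ : Injective σ) : Injective (columnMin σ) := by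
  intro j j' h
  obtain ⟨i, hi⟩ := exists_eq_columnMin σ j
  obtain ⟨i', hi'⟩ := exists_eq_columnMin σ j'
  exact congrArg Prod.snd (hσ (hi.trans (h.trans hi'.symm)))

theorem columnMin_relabelColumns (σ : Fin 2 × ι ≃ β) (π : Perm ι) :
    columnMin (relabelColumns σ π) = columnMin σ ∘ π :=
  rfl

end Columns

section Counting

variable {n : ℕ} {β : Type*} [LinearOrder β]

theorem bijective_relabelColumns :
    Bijective fun p : {σ : Fin 2 × Fin n ≃ β // StrictMono (columnMin σ)} × Perm (Fin n) =>
      relabelColumns p.1.1 p.2 := by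
  constructor
  · rintro ⟨⟨τ, hτ⟩, π⟩ ⟨⟨τ', hτ'⟩, π'⟩ h
    dsimp only at h
    set σ := relabelColumns τ π
    have hτσ : τ = relabelColumns σ π⁻¹ := by
      rw [relabelColumns_relabelColumns, mul_inv_cancel, relabelColumns_one]
    have hτ'σ : τ' = relabelColumns σ π'⁻¹ := by
      rw [h, relabelColumns_relabelColumns, mul_inv_cancel, relabelColumns_one]
    have hπ : π⁻¹ = π'⁻¹ := by
      have hmono := hτ.monotone
      have hmono' := hτ'.monotone
      rw [hτσ, columnMin_relabelColumns] at hmono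
      rw [hτ'σ, columnMin_relabelColumns] at hmono'
      exact DFunLike.coe_injective <|
        (columnMin_injective σ.injective).comp_left (Tuple.unique_monotone hmono hmono')
    obtain rfl : π = π' := inv_injective hπ
    obtain rfl : τ = τ' := by rw [hτσ, hτ'σ]
    rfl
  · intro σ
    set s := Tuple.sort (columnMin σ)
    refine ⟨(⟨relabelColumns σ s, ?_⟩, s⁻¹), ?_⟩
    · rw [columnMin_relabelColumns]
      exact (Tuple.monotone_sort _).strictMono_of_injective
        ((columnMin_injective σ.injective).comp s.injective)
    · dsimp only
      rw [relabelColumns_relabelColumns, mul_inv_cancel, relabelColumns_one]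

theorem card_strictMono_columnMin_mul_factorial :
    Nat.card {σ : Fin 2 × Fin n ≃ β // StrictMono (columnMin σ)} * n.factorial =
      Nat.card (Fin 2 × Fin n ≃ β) := by
  rw [← Nat.card_congr (Equiv.ofBijective _ bijective_relabelColumns), Nat.card_prod,
    Nat.card_perm, Nat.card_fin]

end Counting

section Characterization

variable {n m : ℕ} {σ : Fin 2 × Fin n ≃ Fin m}

theorem columnMin_lt_of_lt_snd (hσ : IsRandomWalkLabeling (kingGraph n) σ) (h0 : 0 < n)
    (hstart : ∃ i, (σ (i, ⟨0, h0⟩) : ℕ) = 0) (v : Fin 2 × Fin n) {j : Fin n} (hj : j < v.2) :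
    columnMin σ j < σ v := by
  -- The earlier neighbour of `v` lies at most one column to the left of `v`.
  induction hk : σ v using WellFoundedLT.induction generalizing v j with
  | ind k ih =>
    subst hk
    by_cases hv : (σ v : ℕ) = 0
    · obtain ⟨i, hi⟩ := hstart
      obtain rfl : v = (i, ⟨0, h0⟩) := σ.injective (Fin.ext (hv.trans hi.symm))
      exact absurd (Fin.lt_def.1 hj) (Nat.not_lt_zero _)
    · obtain ⟨w, hvw, hwv⟩ := hσ v hv
      rw [kingGraph_adj_iff] at hvw
      rcases lt_or_ge j w.2 with hjw | hwj
      · exact (ih (σ w) hwv w hjw rfl).trans hwv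
      · obtain rfl : j = w.2 := le_antisymm (Fin.le_def.2 (by rw [Fin.lt_def] at hj; omega)) hwj
        exact (columnMin_le σ w.1 w.2).trans_lt hwv

theorem strictMono_columnMin_of_isRandomWalkLabeling (hσ : IsRandomWalkLabeling (kingGraph n) σ)
    (h0 : 0 < n) (hstart : ∃ i, (σ (i, ⟨0, h0⟩) : ℕ) = 0) : StrictMono (columnMin σ) := by
  intro j j' hjj'
  obtain ⟨i, hi⟩ := exists_eq_columnMin σ j'
  rw [← hi]
  exact columnMin_lt_of_lt_snd hσ h0 hstart (i, j') hjj'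

theorem columnMin_zero_of_strictMono (hσ : StrictMono (columnMin σ)) (h0 : 0 < n) :
    (columnMin σ ⟨0, h0⟩ : Fin m).val = 0 := by
  set u := σ.symm ⟨0, (σ (0, ⟨0, h0⟩)).pos⟩
  have : columnMin σ ⟨0, h0⟩ ≤ σ u :=
    (hσ.monotone (Fin.le_def.2 (Nat.zero_le u.2))).trans (columnMin_le σ u.1 u.2)
  simpa [u, Fin.le_def] using this

theorem isRandomWalkLabeling_of_strictMono_columnMin (hσ : StrictMono (columnMin σ)) :
    IsRandomWalkLabeling (kingGraph n) σ := by
  intro v hv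
  obtain ⟨i, hi⟩ := exists_eq_columnMin σ v.2
  by_cases hvmin : σ v = columnMin σ v.2
  · have hcol : (v.2 : ℕ) ≠ 0 := fun h => hv <| by
      rw [hvmin, show v.2 = ⟨0, v.2.pos⟩ from Fin.ext h]
      exact columnMin_zero_of_strictMono hσ v.2.pos
    let j : Fin n := ⟨v.2 - 1, by omega⟩
    obtain ⟨i', hi'⟩ := exists_eq_columnMin σ j
    have hlt : σ (i', j) < σ v := by
      rw [hi', hvmin]
      exact hσ (Fin.lt_def.2 (by simp only [j]; omega))
    refine ⟨(i', j), kingGraph_adj_iff.2 ⟨fun h => hlt.ne (by rw [h]), ?_⟩, hlt⟩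
    simp only [j]
    omega
  · have hlt : σ (i, v.2) < σ v := hi ▸ (columnMin_le σ v.1 v.2).lt_of_ne (Ne.symm hvmin)
    exact ⟨(i, v.2),
      kingGraph_adj_iff.2 ⟨fun h => hlt.ne (by rw [h]), Nat.le_succ _, Nat.le_succ _⟩, hlt⟩

theorem isRandomWalkLabeling_and_start_iff_strictMono (h0 : 0 < n) :
    (IsRandomWalkLabeling (kingGraph n) σ ∧ ∃ i, (σ (i, ⟨0, h0⟩) : ℕ) = 0) ↔
      StrictMono (columnMin σ) := by
  refine ⟨fun h => strictMono_columnMin_of_isRandomWalkLabeling h.1 h0 h.2, fun hσ => ⟨?_, ?_⟩⟩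
  · exact isRandomWalkLabeling_of_strictMono_columnMin hσ
  · obtain ⟨i, hi⟩ := exists_eq_columnMin σ ⟨0, h0⟩
    exact ⟨i, hi ▸ columnMin_zero_of_strictMono hσ h0⟩

end Characterization

/-- The number of random walk labelings of the `2 × n` King's graph whose label `1`
(here label `0 : Fin (2*n)`) lies in the first column equals `(2n)!/n!`. -/
theorem rwl_king_first_column (n : ℕ) (hn : 1 ≤ n) :
    Nat.card {σ : (Fin 2 × Fin n) ≃ Fin (2 * n) //
        (∀ v, (σ v : ℕ) ≠ 0 → ∃ w, (kingGraph n).Adj v w ∧ σ w < σ v) ∧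
        ∃ i : Fin 2, (σ (i, ⟨0, by omega⟩) : ℕ) = 0} =
      (2 * n).factorial / n.factorial := by
  have hcount := card_strictMono_columnMin_mul_factorial (n := n) (β := Fin (2 * n))
  rw [Nat.card_eq_fintype_card (α := _ ≃ _), Fintype.card_equiv finProdFinEquiv,
    Fintype.card_prod, Fintype.card_fin, Fintype.card_fin] at hcount
  refine (Nat.card_congr (subtypeEquivRight fun σ =>
    isRandomWalkLabeling_and_start_iff_strictMono (σ := σ) hn)).trans ?_
  rw [← hcount, Nat.mul_div_cancel _ (Nat.factorial_pos n)]
end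

section
/- For every n ≥ 1, 2^(n−1) · (n−1)! · Σ_{k=0}^{n−1} [ (n·binom(2(n−1),2k) + binom(2n−1,2k)) / binom(n−1,k) ] = 2^n · (n−1)! · Σ_{k=0}^{n−1} [ binom(2(n−1),2k) · (2(k+1)(n−k) − 1) / (binom(n−1,k) · (2k+1)) ]. -/
open Finset

private lemma key_term (m k : ℕ) (hk : k ≤ m) :
    (((m:ℝ)+1) * ((2*m).choose (2*k)) + ((2*m+1).choose (2*k))) / ((m.choose k)) +
    (((m:ℝ)+1) * ((2*m).choose (2*(m-k))) + ((2*m+1).choose (2*(m-k)))) / ((m.choose (m-k))) =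
    2 * ( ((2*m).choose (2*k) : ℝ) * (2*((k:ℝ)+1)*(((m:ℝ)+1)-k)-1) / ((m.choose k) * (2*(k:ℝ)+1)) +
          ((2*m).choose (2*(m-k)) : ℝ) * (2*(((m-k:ℕ):ℝ)+1)*(((m:ℝ)+1)-((m-k:ℕ):ℝ))-1) /
            ((m.choose (m-k)) * (2*((m-k:ℕ):ℝ)+1)) ) := by
  have h1 : (2*m).choose (2*(m-k)) = (2*m).choose (2*k) := by
    rw [show 2*(m-k) = 2*m - 2*k by omega, Nat.choose_symm (by omega)]
  have h2 : (2*m+1).choose (2*(m-k)) = (2*m+1).choose (2*k+1) := by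
    rw [show 2*(m-k) = (2*m+1) - (2*k+1) by omega, Nat.choose_symm (by omega)]
  have h3 : m.choose (m-k) = m.choose k := Nat.choose_symm hk
  have hd : ((m.choose k : ℕ) : ℝ) ≠ 0 := by
    exact_mod_cast (Nat.choose_pos hk).ne'
  have hc : (2*m+1).choose (2*k+1) * (2*k+1) = (2*m+1) * (2*m).choose (2*k) := by
    have h := Nat.add_one_mul_choose_eq (2*m) (2*k)
    omega
  have hb : (2*m+1).choose (2*k) * (2*m+1-2*k) = (2*m+1) * (2*m).choose (2*k) := by
    have h4 := Nat.choose_succ_right_eq (2*m+1) (2*k)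
    omega
  have hbR : ((2*m+1).choose (2*k) : ℝ) * (2*(m:ℝ)+1-2*k) = (2*(m:ℝ)+1) * ((2*m).choose (2*k)) := by
    have := congrArg (Nat.cast : ℕ → ℝ) hb
    push_cast [Nat.cast_sub (show 2*k ≤ 2*m+1 by omega)] at this
    linarith
  have hcR : ((2*m+1).choose (2*k+1) : ℝ) * (2*(k:ℝ)+1) = (2*(m:ℝ)+1) * ((2*m).choose (2*k)) := by
    have := congrArg (Nat.cast : ℕ → ℝ) hc
    push_cast at this
    linarith
  rw [h1, h2, h3]
  push_cast [Nat.cast_sub hk]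
  have hkm : (k:ℝ) ≤ m := by exact_mod_cast hk
  have hk1 : (2*(k:ℝ)+1) ≠ 0 := by positivity
  have hk2 : (2*((m:ℝ)-(k:ℝ))+1) ≠ 0 := by nlinarith
  field_simp
  linear_combination ((2*(k:ℝ)+1)) * hbR +
    (2*((m:ℝ)-k)+1) * hcR

/-- The expression counting random walk labelings of the `2 × n` grid graph equals
the expression for the OEIS sequence A087923. -/
theorem rwl_grid_eq_A087923 (n : ℕ) (hn : 1 ≤ n) :
    2 ^ (n - 1) * ((n - 1).factorial : ℝ) *
        ∑ k ∈ Finset.range n,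
          ((n : ℝ) * ((2 * (n - 1)).choose (2 * k)) + ((2 * n - 1).choose (2 * k))) /
            ((n - 1).choose k) =
      2 ^ n * ((n - 1).factorial : ℝ) *
        ∑ k ∈ Finset.range n,
          (((2 * (n - 1)).choose (2 * k) : ℝ) * (2 * (k + 1) * ((n : ℝ) - k) - 1)) /
            (((n - 1).choose k : ℝ) * (2 * k + 1)) := by
  obtain ⟨m, rfl⟩ : ∃ m, n = m + 1 := ⟨n - 1, (Nat.succ_pred_eq_of_pos hn).symm⟩
  simp only [Nat.add_sub_cancel, show 2 * (m+1) - 1 = 2*m+1 by omega]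
  set f : ℕ → ℝ := fun k =>
    (((m:ℝ)+1) * ((2*m).choose (2*k)) + ((2*m+1).choose (2*k))) / ((m.choose k)) with hf
  set g : ℕ → ℝ := fun k =>
    ((2*m).choose (2*k) : ℝ) * (2*((k:ℝ)+1)*(((m:ℝ)+1)-k)-1) / ((m.choose k) * (2*(k:ℝ)+1)) with hg
  have hS : ∑ k ∈ Finset.range (m+1), f k = 2 * ∑ k ∈ Finset.range (m+1), g k := by
    have hrefl_f : ∑ k ∈ Finset.range (m+1), f (m - k) = ∑ k ∈ Finset.range (m+1), f k := by
      have := Finset.sum_range_reflect f (m+1)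
      simpa using this
    have hrefl_g : ∑ k ∈ Finset.range (m+1), g (m - k) = ∑ k ∈ Finset.range (m+1), g k := by
      have := Finset.sum_range_reflect g (m+1)
      simpa using this
    have h2 : (2:ℝ) * ∑ k ∈ Finset.range (m+1), f k
        = 2 * (2 * ∑ k ∈ Finset.range (m+1), g k) := by
      calc (2:ℝ) * ∑ k ∈ Finset.range (m+1), f k
          = ∑ k ∈ Finset.range (m+1), (f k + f (m - k)) := by
            rw [Finset.sum_add_distrib, hrefl_f]; ring
        _ = ∑ k ∈ Finset.range (m+1), 2 * (g k + g (m - k)) := by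
            refine Finset.sum_congr rfl fun k hk => ?_
            have hkm : k ≤ m := by
              have := Finset.mem_range.mp hk; omega
            exact key_term m k hkm
        _ = 2 * (2 * ∑ k ∈ Finset.range (m+1), g k) := by
            rw [← Finset.mul_sum, Finset.sum_add_distrib, hrefl_g]; ring
    linarith
  have hcast : (∑ k ∈ Finset.range (m+1),
      (((m+1:ℕ) : ℝ) * ((2 * m).choose (2 * k)) + ((2*m+1).choose (2 * k))) / ((m).choose k))
      = ∑ k ∈ Finset.range (m+1), f k := by
    refine Finset.sum_congr rfl fun k _ => ?_
    simp only [hf]; push_cast; ring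
  have hcast2 : (∑ k ∈ Finset.range (m+1),
      (((2 * m).choose (2 * k) : ℝ) * (2 * ((k:ℝ) + 1) * (((m+1:ℕ) : ℝ) - k) - 1)) /
        (((m).choose k : ℝ) * (2 * (k:ℝ) + 1)))
      = ∑ k ∈ Finset.range (m+1), g k := by
    refine Finset.sum_congr rfl fun k _ => ?_
    simp only [hg]; push_cast; ring
  rw [hcast, hcast2, hS, pow_succ]
  ring
end

section
/- For every n ≥ 1, n! · 2^(n+1) · ∫₀¹ 1/(1+x²)^(n+1) dx − π·(2n)! / (2^(n+1)·n!) = (n−1)! · Σ_{k=0}^{n−1} binom(2n−1,2k) / binom(n−1,k). -/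
/-!
Both sides vanish at `n = 0` and satisfy `u (n + 1) = (2n + 1) u n + n!`. For the integral side
this is the reduction formula `2m I_{m+1} = 2^{-m} + (2m - 1) I_m` for
`I_m = ∫₀¹ (1 + x²)^{-m}`, obtained by differentiating `x / (1 + x²)^m`; the `π`-term absorbs
the value `I_1 = π / 4`. For the binomial side it follows from the Pascal-type rule
`2(M+1) r(M+1, k+1) = (2M+3) (r(M, k+1) + r(M, k))` for `r(N, k) = C(2N+1, 2k) / C(N, k)`,
summed over `k`.
-/

open Real Nat Finset intervalIntegral

def A087547 : ℕ → ℕ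
  | 0 => 0
  | n + 1 => (2 * n + 1) * A087547 n + n !

lemma continuous_one_div_one_add_sq_pow (m : ℕ) : Continuous fun x : ℝ => 1 / (1 + x ^ 2) ^ m :=
  continuous_const.div (by fun_prop) fun x => by positivity

lemma hasDerivAt_div_one_add_sq_pow (m : ℕ) (x : ℝ) :
    HasDerivAt (fun x : ℝ => x / (1 + x ^ 2) ^ (m + 1))
      ((2 * m + 2) * (1 / (1 + x ^ 2) ^ (m + 2)) - (2 * m + 1) * (1 / (1 + x ^ 2) ^ (m + 1))) x := by
  have hpow : HasDerivAt (fun x : ℝ => (1 + x ^ 2) ^ (m + 1))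
      ((m + 1 : ℕ) * (1 + x ^ 2) ^ m * (2 * x)) x := by
    simpa using ((hasDerivAt_pow 2 x).const_add 1).fun_pow (m + 1)
  refine ((hasDerivAt_id' x).fun_div hpow (by positivity)).congr_deriv ?_
  push_cast
  field_simp
  ring

theorem integral_one_div_one_add_sq_pow_succ_succ (m : ℕ) (a b : ℝ) :
    (2 * m + 2) * ∫ x in a..b, 1 / (1 + x ^ 2) ^ (m + 2) =
      b / (1 + b ^ 2) ^ (m + 1) - a / (1 + a ^ 2) ^ (m + 1) +
        (2 * m + 1) * ∫ x in a..b, 1 / (1 + x ^ 2) ^ (m + 1) := by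
  have hint (j : ℕ) (c : ℝ) :
      IntervalIntegrable (fun x : ℝ => c * (1 / (1 + x ^ 2) ^ j)) MeasureTheory.volume a b :=
    (continuous_const.mul (continuous_one_div_one_add_sq_pow j)).intervalIntegrable _ _
  have hFTC := integral_eq_sub_of_hasDerivAt (fun x _ => hasDerivAt_div_one_add_sq_pow m x)
    ((hint _ _).sub (hint _ _))
  rw [integral_sub (hint _ _) (hint _ _), integral_const_mul, integral_const_mul] at hFTC
  linarith

theorem A087547_eq_integral (n : ℕ) :
    (A087547 n : ℝ) = (n ! : ℝ) * 2 ^ (n + 1) * (∫ x in (0 : ℝ)..1, 1 / (1 + x ^ 2) ^ (n + 1)) -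
        π * ((2 * n)! : ℝ) / (2 ^ (n + 1) * n !) := by
  induction n with
  | zero =>
    norm_num [A087547, arctan_one]
    ring
  | succ n ih =>
    have hrec := integral_one_div_one_add_sq_pow_succ_succ n 0 1
    rw [show (1 : ℝ) / (1 + 1 ^ 2) ^ (n + 1) - 0 / (1 + 0 ^ 2) ^ (n + 1) = 1 / 2 ^ (n + 1) by
      norm_num] at hrec
    have hscaled : ((n + 1)! : ℝ) * 2 ^ (n + 1 + 1) * (∫ x in (0 : ℝ)..1, 1 / (1 + x ^ 2) ^ (n + 2)) =
        n ! + (2 * n + 1) *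
          ((n ! : ℝ) * 2 ^ (n + 1) * ∫ x in (0 : ℝ)..1, 1 / (1 + x ^ 2) ^ (n + 1)) := by
      rw [factorial_succ, pow_succ]
      push_cast
      have hcancel : (2 : ℝ) ^ (n + 1) * (1 / 2 ^ (n + 1)) = 1 := by field_simp
      linear_combination (n ! : ℝ) * 2 ^ (n + 1) * hrec + (n ! : ℝ) * hcancel
    have hpi : π * ((2 * (n + 1))! : ℝ) / (2 ^ (n + 1 + 1) * (n + 1)!) =
        (2 * n + 1) * (π * ((2 * n)! : ℝ) / (2 ^ (n + 1) * n !)) := by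
      rw [show 2 * (n + 1) = 2 * n + 1 + 1 by ring, factorial_succ, factorial_succ, factorial_succ,
        pow_succ]
      push_cast
      field_simp
      ring
    rw [A087547]
    push_cast
    rw [ih, hscaled, hpi]
    ring

noncomputable def binomRatio (N k : ℕ) : ℝ := ((2 * N + 1).choose (2 * k) : ℝ) / N.choose k

@[simp] lemma binomRatio_zero_right (N : ℕ) : binomRatio N 0 = 1 := by
  simp [binomRatio]

@[simp] lemma binomRatio_self (N : ℕ) : binomRatio N N = 2 * N + 1 := by
  simp [binomRatio, choose_succ_self_right]

/-- Both sides equal `(2M+3) C(2M+2, 2k+1) / C(M, k)`: apply Pascal's rule to `C(2M+2, 2k+1)` and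
use `C(2M+1, 2k+2) / C(M, k+1) = C(2M+1, 2k+1) / C(M, k)`. -/
lemma binomRatio_succ_succ {M k : ℕ} (hk : k < M) :
    2 * (M + 1) * binomRatio (M + 1) (k + 1) =
      (2 * M + 3) * (binomRatio M (k + 1) + binomRatio M k) := by
  have hU : (M.choose k : ℝ) ≠ 0 := by exact_mod_cast (choose_pos hk.le).ne'
  have hA : ((2 * M + 3).choose (2 * k + 2) : ℝ) =
      (2 * M + 3) * (2 * M + 2).choose (2 * k + 1) / (2 * k + 2) := by
    rw [eq_div_iff (by positivity)]
    exact_mod_cast (add_one_mul_choose_eq (2 * M + 2) (2 * k + 1)).symm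
  have hB : ((M + 1).choose (k + 1) : ℝ) = (M + 1) * M.choose k / (k + 1) := by
    rw [eq_div_iff (by positivity)]
    exact_mod_cast (add_one_mul_choose_eq M k).symm
  have hT : ((2 * M + 1).choose (2 * k + 2) : ℝ) =
      (2 * M + 1).choose (2 * k + 1) * (2 * (M - k : ℕ)) / (2 * k + 2) := by
    rw [eq_div_iff (by positivity)]
    have := choose_succ_right_eq (2 * M + 1) (2 * k + 1)
    rw [show 2 * M + 1 - (2 * k + 1) = 2 * (M - k) by omega] at this
    exact_mod_cast this
  have hV : (M.choose (k + 1) : ℝ) = M.choose k * (M - k : ℕ) / (k + 1) := by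
    rw [eq_div_iff (by positivity)]
    exact_mod_cast choose_succ_right_eq M k
  have hP : ((2 * M + 2).choose (2 * k + 1) : ℝ) =
      (2 * M + 1).choose (2 * k) + (2 * M + 1).choose (2 * k + 1) := by
    exact_mod_cast choose_succ_succ' (2 * M + 1) (2 * k)
  have hMk : ((M - k : ℕ) : ℝ) ≠ 0 := by exact_mod_cast (Nat.sub_pos_of_lt hk).ne'
  rw [binomRatio, binomRatio, binomRatio, show 2 * (M + 1) + 1 = 2 * M + 3 by ring,
    show 2 * (k + 1) = 2 * k + 2 by ring, hA, hB, hT, hV, hP]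
  field_simp
  ring

lemma sum_binomRatio_succ (M : ℕ) :
    (M + 1) * ∑ k ∈ range (M + 2), binomRatio (M + 1) k =
      (2 * M + 3) * ∑ k ∈ range (M + 1), binomRatio M k + (M + 1) := by
  have hpascal : 2 * (M + 1) * ∑ k ∈ range M, binomRatio (M + 1) (k + 1) =
      (2 * M + 3) * (∑ k ∈ range M, binomRatio M (k + 1) + ∑ k ∈ range M, binomRatio M k) := by
    rw [mul_sum, ← sum_add_distrib, mul_sum]
    exact sum_congr rfl fun k hk => binomRatio_succ_succ (mem_range.1 hk)
  have hlast :
      ∑ k ∈ range (M + 1), binomRatio M k = ∑ k ∈ range M, binomRatio M k + (2 * M + 1) := by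
    rw [sum_range_succ, binomRatio_self]
  have hfirst : ∑ k ∈ range (M + 1), binomRatio M k = ∑ k ∈ range M, binomRatio M (k + 1) + 1 := by
    rw [sum_range_succ', binomRatio_zero_right]
  rw [sum_range_succ, sum_range_succ', binomRatio_self, binomRatio_zero_right]
  push_cast
  linear_combination (1 / 2 : ℝ) * hpascal - (2 * M + 3) / 2 * (hlast + hfirst)

theorem A087547_succ_eq_sum_binomRatio (N : ℕ) :
    (A087547 (N + 1) : ℝ) = N ! * ∑ k ∈ range (N + 1), binomRatio N k := by
  induction N with
  | zero => simp [A087547]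
  | succ M ih =>
    rw [A087547, factorial_succ]
    push_cast
    rw [ih]
    linear_combination (-(M ! : ℝ)) * sum_binomRatio_succ M

theorem A087547_integral_formula_general (n : ℕ) :
    (n.factorial : ℝ) * 2 ^ (n + 1) * (∫ x in (0 : ℝ)..1, 1 / (1 + x ^ 2) ^ (n + 1)) -
        Real.pi * ((2 * n).factorial : ℝ) / (2 ^ (n + 1) * n.factorial) =
      ((n - 1).factorial : ℝ) *
        ∑ k ∈ Finset.range n, (((2 * n - 1).choose (2 * k) : ℝ)) / ((n - 1).choose k) := by
  rw [← A087547_eq_integral]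
  cases n with
  | zero => simp [A087547]
  | succ N =>
    rw [A087547_succ_eq_sum_binomRatio, show 2 * (N + 1) - 1 = 2 * N + 1 by omega]
    rfl

/-- The integral definition of A087547(n) equals `(n-1)! Σ_{k=0}^{n-1} C(2n-1,2k)/C(n-1,k)`. -/
theorem A087547_integral_formula (n : ℕ) (hn : 1 ≤ n) :
    (n.factorial : ℝ) * 2 ^ (n + 1) * (∫ x in (0 : ℝ)..1, 1 / (1 + x ^ 2) ^ (n + 1)) -
        Real.pi * ((2 * n).factorial : ℝ) / (2 ^ (n + 1) * n.factorial) =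
      ((n - 1).factorial : ℝ) *
        ∑ k ∈ Finset.range n, (((2 * n - 1).choose (2 * k) : ℝ)) / ((n - 1).choose k) :=
  A087547_integral_formula_general n
end

section
/- For every n ≥ 1, Σ_{k=0}^{n−1} [ 2^k / ((2k+1)·binom(2k,k)) ] · binom(n+k,k) = [ binom(2n,n) / 2^n ] · Σ_{k=0}^{n−1} 2^k / ((2k+1)·binom(2k,k)). -/
open Finset

/-- The summand weight `2^k / ((2k+1) C(2k,k))`. -/
noncomputable def balaA (k : ℕ) : ℝ := 2 ^ k / ((2 * k + 1) * ((2 * k).choose k))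

/-- Gosper certificate for the auxiliary sum. -/
noncomputable def balaS (m k : ℕ) : ℝ :=
  (2 * (k:ℝ)^2 - (2*(m:ℝ)+1)*k - ((m:ℝ)+1)) * balaA k * ((m+k).choose k) / ((m:ℝ)+1)

lemma centralC_pos (k : ℕ) : (0:ℝ) < ((2*k).choose k : ℕ) := by
  exact_mod_cast Nat.choose_pos (by omega)

lemma balaA_mul (k : ℕ) : balaA k * ((2*(k:ℝ)+1) * ((2*k).choose k)) = 2^k := by
  have h := (centralC_pos k).ne'
  have h2 : (2*(k:ℝ)+1) ≠ 0 := by positivity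
  rw [balaA]; field_simp

lemma balaA_succ (k : ℕ) : balaA (k+1) * (2*(k:ℝ)+3) = balaA k * ((k:ℝ)+1) := by
  have hcb := Nat.succ_mul_centralBinom_succ k
  simp only [Nat.centralBinom, Nat.succ_eq_add_one] at hcb
  have hcbR : ((k:ℝ)+1) * ((2*(k+1)).choose (k+1)) = 2*(2*(k:ℝ)+1)*((2*k).choose k) := by
    exact_mod_cast congrArg (Nat.cast : ℕ → ℝ) hcb
  have hQ := (centralC_pos (k+1)).ne'
  have hR := (centralC_pos k).ne'
  have h1 : (2*((k:ℕ):ℝ)+1) ≠ 0 := by positivity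
  have h2 : (2*(((k+1):ℕ):ℝ)+1) ≠ 0 := by positivity
  rw [balaA, balaA]
  push_cast at hQ hR h2 ⊢
  field_simp
  linear_combination (-(2*(k:ℝ)+3))*(2:ℝ)^k*hcbR

lemma choose_shift_m_nat (m k : ℕ) :
    (m+1+k).choose k * (m+1) = (m+k).choose k * (m+1+k) := by
  have h1 : (m+k).choose m = (m+k).choose k := by
    simpa using Nat.choose_symm (Nat.le_add_left k m)
  have h2 := Nat.add_one_mul_choose_eq (m+k) m
  have h3 : (m+k+1).choose (m+1) = (m+1+k).choose k := by
    have h4 := Nat.choose_symm (show m+1 ≤ m+k+1 by omega)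
    simpa [show m+k+1-(m+1) = k by omega, show m+k+1 = m+1+k by omega] using h4.symm
  rw [h1, h3] at h2
  rw [← h2]; ring

lemma choose_shift_m (m k : ℕ) :
    (((m+1+k).choose k : ℕ) : ℝ) * ((m:ℝ)+1) = (((m+k).choose k : ℕ) : ℝ) * ((m:ℝ)+1+k) := by
  exact_mod_cast congrArg (Nat.cast : ℕ → ℝ) (choose_shift_m_nat m k)

lemma choose_shift_k (m k : ℕ) :
    (((m+k+1).choose (k+1) : ℕ) : ℝ) * ((k:ℝ)+1) = (((m+k).choose k : ℕ) : ℝ) * ((m:ℝ)+k+1) := by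
  have h := Nat.add_one_mul_choose_eq (m+k) k
  have := congrArg (Nat.cast : ℕ → ℝ) h
  push_cast at this
  linarith [this]

/-- Telescoping (Gosper) step for the auxiliary sum. -/
lemma ptU (m k : ℕ) :
    balaA k * (((m:ℝ)+1) - k) * ((m+1+k).choose k)
      = 2 * (balaA k * ((m:ℝ) - k) * ((m+k).choose k)) + (balaS m (k+1) - balaS m k) := by
  have hm1 : ((m:ℝ)+1) ≠ 0 := by positivity
  have hk1 : ((k:ℝ)+1) ≠ 0 := by positivity
  have hk3 : (2*(k:ℝ)+3) ≠ 0 := by positivity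
  have hd : (((m+1+k).choose k : ℕ) : ℝ) = ((m+k).choose k) * ((m:ℝ)+1+k) / ((m:ℝ)+1) := by
    rw [eq_div_iff hm1]; exact choose_shift_m m k
  have he : (((m+k+1).choose (k+1) : ℕ) : ℝ) = ((m+k).choose k) * ((m:ℝ)+k+1) / ((k:ℝ)+1) := by
    rw [eq_div_iff hk1]; exact choose_shift_k m k
  have hb : balaA (k+1) = balaA k * ((k:ℝ)+1) / (2*(k:ℝ)+3) := by
    rw [eq_div_iff hk3]; exact balaA_succ k
  have e1 : m + (k+1) = m + k + 1 := rfl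
  rw [balaS, balaS, e1, hb, hd, he]
  push_cast
  field_simp
  ring

lemma balaA_central (m : ℕ) : balaA m * ((m+m).choose m) = 2^m / (2*(m:ℝ)+1) := by
  have h1 : (2*(m:ℝ)+1) ≠ 0 := by positivity
  have h2 := (centralC_pos m).ne'
  rw [eq_div_iff h1, show m+m = 2*m from (two_mul m).symm]
  have := balaA_mul m
  linarith [this]

lemma balaA_bdry (m : ℕ) : balaA m * ((m+1+m).choose m) = 2^m / ((m:ℝ)+1) := by
  have hm1 : ((m:ℝ)+1) ≠ 0 := by positivity
  have h1 : (2*(m:ℝ)+1) ≠ 0 := by positivity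
  have hs := choose_shift_m m m
  have hc := balaA_central m
  rw [eq_div_iff hm1]
  have : balaA m * (((m+1+m).choose m : ℕ) : ℝ) * ((m:ℝ)+1)
      = balaA m * (((m+m).choose m : ℕ) : ℝ) * ((m:ℝ)+1+m) := by
    rw [mul_assoc, hs, mul_assoc]
  rw [this, hc]
  field_simp
  ring

/-- The auxiliary identity `Σ_{k<m} aₖ (m-k) C(m+k,k) = 2^m - 1`. -/
lemma balaU (m : ℕ) :
    ∑ k ∈ range m, balaA k * ((m:ℝ) - k) * ((m+k).choose k) = 2^m - 1 := by
  induction m with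
  | zero => simp
  | succ m ih =>
    have hm1 : ((m:ℝ)+1) ≠ 0 := by positivity
    have h2m1 : (2*(m:ℝ)+1) ≠ 0 := by positivity
    rw [Finset.sum_range_succ]
    have hcast : ∀ k ∈ range m, balaA k * ((((m+1):ℕ):ℝ) - k) * (((m+1)+k).choose k)
        = 2 * (balaA k * ((m:ℝ) - k) * ((m+k).choose k)) + (balaS m (k+1) - balaS m k) := by
      intro k _
      push_cast
      exact ptU m k
    rw [Finset.sum_congr rfl hcast, Finset.sum_add_distrib, ← Finset.mul_sum,
      Finset.sum_range_sub, ih]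
    have hS0 : balaS m 0 = -1 := by
      rw [balaS]
      norm_num [balaA]
      field_simp
      ring
    have hSm : balaS m m = -(2^m) / ((m:ℝ)+1) := by
      rw [balaS, mul_assoc, balaA_central m]
      field_simp
      ring
    have hbd : balaA m * ((((m+1):ℕ):ℝ) - (m:ℝ)) * (((m+1)+m).choose m) = 2^m/((m:ℝ)+1) := by
      push_cast
      rw [show ((m:ℝ)+1) - m = 1 by ring, mul_one]
      exact balaA_bdry m
    rw [hSm, hS0, hbd]
    push_cast
    field_simp
    ring

lemma balaMain (n : ℕ) :
    ∑ k ∈ range n, balaA k * ((n+k).choose k)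
      = (((2*n).choose n : ℝ) / 2^n) * ∑ k ∈ range n, balaA k := by
  induction n with
  | zero => simp
  | succ n ih =>
    have hn1 : ((n:ℝ)+1) ≠ 0 := by positivity
    have h2n1 : (2*(n:ℝ)+1) ≠ 0 := by positivity
    have hC := (centralC_pos n).ne'
    have hC' := (centralC_pos (n+1)).ne'
    have h2 : ((2:ℝ))^n ≠ 0 := by positivity
    have key : ∀ k ∈ range n, balaA k * ((((n+1)+k).choose k : ℕ) : ℝ)
        = (2*(n:ℝ)+1)/((n:ℝ)+1) * (balaA k * ((n+k).choose k))
          - (1/((n:ℝ)+1)) * (balaA k * ((n:ℝ) - k) * ((n+k).choose k)) := by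
      intro k _
      have hd : (((n+1+k).choose k : ℕ) : ℝ) = ((n+k).choose k) * ((n:ℝ)+1+k) / ((n:ℝ)+1) := by
        rw [eq_div_iff hn1]; exact choose_shift_m n k
      rw [hd]; field_simp; ring
    rw [Finset.sum_range_succ, Finset.sum_congr rfl key, Finset.sum_sub_distrib,
      ← Finset.mul_sum, ← Finset.mul_sum, ih, balaU n]
    rw [Finset.sum_range_succ (f := fun k => balaA k)]
    have hcb := Nat.succ_mul_centralBinom_succ n
    simp only [Nat.centralBinom, Nat.succ_eq_add_one] at hcb
    have hcbR : ((n:ℝ)+1) * ((2*(n+1)).choose (n+1)) = 2*(2*(n:ℝ)+1)*((2*n).choose n) := by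
      exact_mod_cast congrArg (Nat.cast : ℕ → ℝ) hcb
    have hCn : (((2*(n+1)).choose (n+1) : ℕ) : ℝ)
        = 2*(2*(n:ℝ)+1)*((2*n).choose n)/((n:ℝ)+1) := by
      rw [eq_div_iff hn1]; linarith [hcbR]
    have hAn : balaA n = 2^n / ((2*(n:ℝ)+1) * ((2*n).choose n)) := rfl
    have hbd := balaA_bdry n
    rw [hCn, hbd, hAn]
    field_simp
    ring

/-- Bala's conjectured identity:
`Σ_{k=0}^{n-1} 2ᵏ/((2k+1)·C(2k,k)) · C(n+k,k) = (C(2n,n)/2ⁿ) · Σ_{k=0}^{n-1} 2ᵏ/((2k+1)·C(2k,k))`. -/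
theorem bala_identity (n : ℕ) (hn : 1 ≤ n) :
    ∑ k ∈ Finset.range n,
        (2 : ℝ) ^ k / ((2 * k + 1) * ((2 * k).choose k)) * ((n + k).choose k) =
      (((2 * n).choose n : ℝ) / 2 ^ n) *
        ∑ k ∈ Finset.range n, (2 : ℝ) ^ k / ((2 * k + 1) * ((2 * k).choose k)) := by
  simpa only [balaA] using balaMain n
end

section
/- For every n ≥ 1, [ (2n)! / (n! · 2^n) ] · Σ_{k=0}^{n−1} 2^k · (k!)² / (2k+1)! = Σ_{k=1}^{n} 2^(k−1) · (k−1)! · (n+k−1)! / (2k−1)!. -/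
open Finset

private lemma factR_ne (m : ℕ) : ((m.factorial : ℝ)) ≠ 0 := by
  exact_mod_cast m.factorial_ne_zero

noncomputable def balaF (n : ℕ) : ℝ :=
  ∑ k ∈ Finset.range n, (2:ℝ)^k * k.factorial * (n+k).factorial / (2*k+1).factorial

private lemma step (n k : ℕ) :
    (2:ℝ)^(k+1) * (k+1).factorial * (n+(k+1)).factorial / (2*(k+1)).factorial
      - (2:ℝ)^k * k.factorial * (n+k).factorial / (2*k).factorial
    = ((n:ℝ) - k) * ((2:ℝ)^k * k.factorial * (n+k).factorial / (2*k+1).factorial) := by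
  have h1 : ((n+(k+1)).factorial : ℝ) = (n+k+1) * (n+k).factorial := by
    rw [show n+(k+1) = (n+k)+1 by ring, Nat.factorial_succ]; push_cast; ring
  have h2 : ((2*(k+1)).factorial : ℝ) = (2*k+2)*((2*k+1)*(2*k).factorial) := by
    rw [show 2*(k+1) = (2*k+1)+1 by ring, Nat.factorial_succ, Nat.factorial_succ]
    push_cast; ring
  have h3 : ((2*k+1).factorial : ℝ) = (2*k+1)*(2*k).factorial := by
    rw [Nat.factorial_succ]; push_cast; ring
  have h0 : (((k+1)).factorial : ℝ) = (k+1)*k.factorial := by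
    rw [Nat.factorial_succ]; push_cast; ring
  rw [h0, h1, h2, h3]
  have := factR_ne (2*k)
  field_simp
  ring

private lemma tele (n : ℕ) :
    ∑ k ∈ Finset.range n,
      ((n:ℝ)-k) * ((2:ℝ)^k * k.factorial * (n+k).factorial / (2*k+1).factorial)
    = 2^n * n.factorial - n.factorial := by
  have h := Finset.sum_range_sub
    (fun k => (2:ℝ)^k * k.factorial * (n+k).factorial / (2*k).factorial) n
  calc ∑ k ∈ Finset.range n,
      ((n:ℝ)-k) * ((2:ℝ)^k * k.factorial * (n+k).factorial / (2*k+1).factorial)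
      = ∑ k ∈ Finset.range n,
        ((2:ℝ)^(k+1) * (k+1).factorial * (n+(k+1)).factorial / (2*(k+1)).factorial
          - (2:ℝ)^k * k.factorial * (n+k).factorial / (2*k).factorial) := by
        exact (Finset.sum_congr rfl fun k _ => (step n k).symm)
    _ = (2:ℝ)^n * n.factorial * (n+n).factorial / (2*n).factorial
        - (2:ℝ)^0 * (0:ℕ).factorial * (n+0).factorial / (2*0).factorial := h
    _ = 2^n * n.factorial - n.factorial := by
        rw [show n+n = 2*n by ring]
        simp [Nat.factorial]
        field_simp [factR_ne (2*n)]

private lemma keyF (n : ℕ) : balaF (n+1) = (2*n+1) * balaF n + n.factorial := by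
  unfold balaF
  rw [Finset.sum_range_succ]
  have hlast : (2:ℝ)^n * n.factorial * ((n+1)+n).factorial / (2*n+1).factorial
      = 2^n * n.factorial := by
    rw [show (n+1)+n = 2*n+1 by ring]
    field_simp [factR_ne (2*n+1)]
  rw [hlast]
  have hsum : ∑ k ∈ Finset.range n,
      (2:ℝ)^k * k.factorial * ((n+1)+k).factorial / (2*k+1).factorial
      = ∑ k ∈ Finset.range n,
        ((2*(n:ℝ)+1) * ((2:ℝ)^k * k.factorial * (n+k).factorial / (2*k+1).factorial)
          - ((n:ℝ)-k) * ((2:ℝ)^k * k.factorial * (n+k).factorial / (2*k+1).factorial)) := by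
    refine Finset.sum_congr rfl fun k _ => ?_
    have h1 : (((n+1)+k).factorial : ℝ) = (n+k+1) * (n+k).factorial := by
      rw [show (n+1)+k = (n+k)+1 by ring, Nat.factorial_succ]; push_cast; ring
    rw [h1]; ring
  rw [hsum, Finset.sum_sub_distrib, ← Finset.mul_sum, tele n]
  ring

private lemma main (n : ℕ) :
    (((2 * n).factorial : ℝ) / (n.factorial * 2 ^ n)) *
        ∑ k ∈ Finset.range n, (2:ℝ)^k * (k.factorial : ℝ)^2 / (2*k+1).factorial
      = balaF n := by
  induction n with
  | zero => simp [balaF]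
  | succ n ih =>
    rw [keyF, ← ih, Finset.sum_range_succ]
    have e1 : ((2*(n+1)).factorial : ℝ) = (2*n+2)*((2*n+1)*(2*n).factorial) := by
      rw [show 2*(n+1) = (2*n+1)+1 by ring, Nat.factorial_succ, Nat.factorial_succ]
      push_cast; ring
    have e2 : (((n+1)).factorial : ℝ) = (n+1)*n.factorial := by
      rw [Nat.factorial_succ]; push_cast; ring
    have e3 : ((2*n+1).factorial : ℝ) = (2*n+1)*(2*n).factorial := by
      rw [Nat.factorial_succ]; push_cast; ring
    rw [e1, e2, e3]
    have h1 := factR_ne n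
    have h2 := factR_ne (2*n)
    have h3 : ((n:ℝ)+1) ≠ 0 := by positivity
    have h4 : (2*(n:ℝ)+1) ≠ 0 := by positivity
    have h5 : (2*(n:ℝ)+2) ≠ 0 := by positivity
    have h6 : (2:ℝ)^n ≠ 0 := by positivity
    field_simp
    ring

/-- Bala's two expressions for A087547 agree. -/
theorem bala_two_formulas (n : ℕ) (hn : 1 ≤ n) :
    (((2 * n).factorial : ℝ) / (n.factorial * 2 ^ n)) *
        ∑ k ∈ Finset.range n, (2 : ℝ) ^ k * (k.factorial : ℝ) ^ 2 / (2 * k + 1).factorial =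
      ∑ k ∈ Finset.Icc 1 n,
        (2 : ℝ) ^ (k - 1) * ((k - 1).factorial : ℝ) * ((n + k - 1).factorial : ℝ) /
          (2 * k - 1).factorial := by
  rw [main n]
  rw [show Finset.Icc 1 n = Finset.Ico 1 (n+1) by rfl, Finset.sum_Ico_eq_sum_range]
  unfold balaF
  simp only [Nat.add_sub_cancel]
  refine (Finset.sum_congr (by norm_num) fun k _ => ?_).symm
  have e1 : 1 + k - 1 = k := by omega
  have e2 : n + (1+k) - 1 = n + k := by omega
  have e3 : 2*(1+k) - 1 = 2*k+1 := by omega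
  rw [e1, e2, e3]
end

section
/- For every real x with 0 < x < 1/100, the series Σ_{n≥0} s_n x^n, where s_n = Σ_{k=0}^{n} binom(2n,2k) / binom(n,k), converges and its sum equals [ x · arctan( x/√(1−2x) ) + √(1−2x) ] / (1−2x)^(3/2). (Equivalently, this is the exponential generating function of the OEIS sequence A182525(n) = n! · s_n.) -/
/-!
Writing `1 / C(n,k) = (n + 1) ∫₀¹ t^k (1-t)^(n-k) dt` turns `sₙ` into `(n + 1) ∫₀¹ Pₙ`, where
`Pₙ(t) = Σₖ C(2n,2k) t^k (1-t)^(n-k)` (`evenBinomialSum`) is the even part of the binomial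
expansion of `(√t + √(1-t))^(2n)`, i.e. `Pₙ = ((1 + 2w)ⁿ + (1 - 2w)ⁿ) / 2` with
`w = √(t(1-t)) ≤ 1/2`. Summing `Σ (n + 1) yⁿ = 1 / (1 - y)²` for `y = x(1 ± 2w)` under the
integral (dominated by `(n + 1)(2|x|)ⁿ`) leaves the integral of a rational function of `t`,
which has an explicit arctangent antiderivative.
-/

open Finset Real
open scoped Nat

theorem integral_pow_mul_one_sub_pow (k m : ℕ) :
    ∫ t in (0:ℝ)..1, t ^ k * (1 - t) ^ m = (k ! * m ! : ℝ) / (k + m + 1)! := by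
  have h := Complex.betaIntegral_eq_Gamma_mul_div (k + 1) (m + 1) (by simp; positivity)
    (by simp; positivity)
  simp only [Complex.betaIntegral, add_sub_cancel_right] at h
  rw [show (k : ℂ) + 1 + (m + 1) = ((k + m + 1 : ℕ) : ℂ) + 1 by push_cast; ring] at h
  simp only [Complex.Gamma_nat_eq_factorial, Complex.cpow_natCast] at h
  apply Complex.ofReal_injective
  push_cast [← intervalIntegral.integral_ofReal]
  exact h

theorem inv_choose_eq_integral {n k : ℕ} (hk : k ≤ n) :
    ((n.choose k : ℝ))⁻¹ = (n + 1) * ∫ t in (0:ℝ)..1, t ^ k * (1 - t) ^ (n - k) := by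
  rw [integral_pow_mul_one_sub_pow, show k + (n - k) + 1 = n + 1 by omega, Nat.cast_choose ℝ hk,
    Nat.factorial_succ]
  push_cast
  field_simp

theorem add_pow_two_mul_add_sub_pow_two_mul {R : Type*} [CommRing R] (p q : R) (n : ℕ) :
    (p + q) ^ (2 * n) + (p - q) ^ (2 * n)
      = 2 * ∑ k ∈ range (n + 1),
          ((2 * n).choose (2 * k) : R) * (p ^ 2) ^ k * (q ^ 2) ^ (n - k) := by
  set g : ℕ → R := fun j => (1 + (-1) ^ j) * p ^ j * q ^ (2 * n - j) * (2 * n).choose j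
  have hexpand : (p + q) ^ (2 * n) + (p - q) ^ (2 * n) = ∑ j ∈ range (2 * n + 1), g j := by
    rw [← (even_two_mul n).neg_pow (p - q), neg_sub, sub_eq_neg_add, add_pow, add_pow,
      ← sum_add_distrib]
    refine sum_congr rfl fun j _ => ?_
    simp only [g, neg_pow p]
    ring
  have hodd : ∀ j ∈ range (2 * n + 1), j ∉ (range (n + 1)).image (2 * ·) → g j = 0 := by
    intro j hj hjimg
    have hj_odd : Odd j := by
      refine Nat.not_even_iff_odd.mp fun ⟨k, hk⟩ => hjimg (mem_image.mpr ⟨k, ?_, by omega⟩)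
      simp only [mem_range] at hj ⊢
      omega
    simp [g, hj_odd.neg_one_pow]
  rw [hexpand, ← sum_subset (fun j hj => ?_) hodd, sum_image (fun _ _ _ _ h => by omega),
    mul_sum]
  · refine sum_congr rfl fun k hk => ?_
    have hkn : 2 * n - 2 * k = 2 * (n - k) := by omega
    simp only [g, hkn, pow_mul, (even_two_mul k).neg_one_pow]
    ring
  · obtain ⟨k, hk, rfl⟩ := mem_image.mp hj
    simp only [mem_range] at hk ⊢
    omega

theorem hasSum_succ_mul_geometric {𝕜 : Type*} [NormedDivisionRing 𝕜] {y : 𝕜}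
    (hy : ‖y‖ < 1) : HasSum (fun n : ℕ => (n + 1) * y ^ n) (1 / (1 - y) ^ 2) := by
  simpa using hasSum_choose_mul_geometric_of_norm_lt_one 1 hy

theorem sqrt_mul_one_sub_le_half (t : ℝ) : √(t * (1 - t)) ≤ 1 / 2 :=
  sqrt_le_iff.mpr ⟨by norm_num, by nlinarith [sq_nonneg (2 * t - 1)]⟩

def evenBinomialSum (n : ℕ) (t : ℝ) : ℝ :=
  ∑ k ∈ range (n + 1), ((2 * n).choose (2 * k) : ℝ) * t ^ k * (1 - t) ^ (n - k)

noncomputable def evenBinomialSumGF (x t : ℝ) : ℝ :=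
  ((1 - x) ^ 2 + 4 * x ^ 2 * (t * (1 - t))) / ((1 - x) ^ 2 - 4 * x ^ 2 * (t * (1 - t))) ^ 2

@[fun_prop]
theorem continuous_evenBinomialSum (n : ℕ) : Continuous (evenBinomialSum n) := by
  unfold evenBinomialSum
  fun_prop

theorem sum_choose_div_choose_eq_integral (n : ℕ) :
    ∑ k ∈ range (n + 1), ((2 * n).choose (2 * k) : ℝ) / n.choose k
      = (n + 1) * ∫ t in (0:ℝ)..1, evenBinomialSum n t := by
  unfold evenBinomialSum
  rw [intervalIntegral.integral_finsetSum fun k _ => by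
    apply Continuous.intervalIntegrable; fun_prop, mul_sum]
  refine sum_congr rfl fun k hk => ?_
  simp_rw [mul_assoc, intervalIntegral.integral_const_mul]
  rw [div_eq_mul_inv, inv_choose_eq_integral (by simpa [Nat.lt_succ_iff] using hk)]
  ring

theorem evenBinomialSum_eq_of_mem_Icc {t : ℝ} (ht : t ∈ Set.Icc 0 1) (n : ℕ) :
    evenBinomialSum n t
      = ((1 + 2 * √(t * (1 - t))) ^ n + (1 - 2 * √(t * (1 - t))) ^ n) / 2 := by
  obtain ⟨ht0, ht1⟩ := ht
  have hsq (p : ℝ) (hp : 0 ≤ p) : √p ^ 2 = p := sq_sqrt hp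
  have h := add_pow_two_mul_add_sub_pow_two_mul (√t) (√(1 - t)) n
  rw [hsq t ht0, hsq (1 - t) (by linarith), pow_mul, pow_mul, add_sq, sub_sq, hsq t ht0,
    hsq (1 - t) (by linarith), mul_assoc 2, ← sqrt_mul ht0] at h
  rw [evenBinomialSum, eq_div_iff two_ne_zero, mul_comm, ← h]
  ring_nf

theorem abs_evenBinomialSum_le {t : ℝ} (ht : t ∈ Set.Icc 0 1) (n : ℕ) :
    |evenBinomialSum n t| ≤ 2 ^ n := by
  have hw := sqrt_mul_one_sub_le_half t
  have hw0 := sqrt_nonneg (t * (1 - t))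
  have hplus : (1 + 2 * √(t * (1 - t))) ^ n ≤ 2 ^ n :=
    pow_le_pow_left₀ (by linarith) (by linarith) n
  have hminus : (1 - 2 * √(t * (1 - t))) ^ n ≤ 2 ^ n :=
    pow_le_pow_left₀ (by linarith) (by linarith) n
  have hplus0 : 0 ≤ (1 + 2 * √(t * (1 - t))) ^ n := pow_nonneg (by linarith) n
  have hminus0 : 0 ≤ (1 - 2 * √(t * (1 - t))) ^ n := pow_nonneg (by linarith) n
  rw [evenBinomialSum_eq_of_mem_Icc ht, abs_le]
  constructor <;> linarith

theorem hasSum_succ_mul_pow_mul_evenBinomialSum {x t : ℝ} (hx : |x| < 1 / 2)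
    (ht : t ∈ Set.Icc 0 1) :
    HasSum (fun n : ℕ => (n + 1) * x ^ n * evenBinomialSum n t) (evenBinomialSumGF x t) := by
  have hw := sqrt_mul_one_sub_le_half t
  have hw0 := sqrt_nonneg (t * (1 - t))
  have hw2 : √(t * (1 - t)) ^ 2 = t * (1 - t) := sq_sqrt (mul_nonneg ht.1 (by linarith [ht.2]))
  simp_rw [evenBinomialSum_eq_of_mem_Icc ht]
  rw [evenBinomialSumGF]
  generalize √(t * (1 - t)) = w at hw hw0 hw2 ⊢
  rw [← hw2]
  have hsmall (y : ℝ) (hy0 : 0 ≤ y) (hy2 : y ≤ 2) : ‖x * y‖ < 1 := by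
    rw [norm_mul, Real.norm_eq_abs, Real.norm_of_nonneg hy0]
    nlinarith [abs_nonneg x]
  have hplus := hsmall (1 + 2 * w) (by linarith) (by linarith)
  have hminus := hsmall (1 - 2 * w) (by linarith) (by linarith)
  have hne (y : ℝ) (hy : ‖x * y‖ < 1) : 1 - x * y ≠ 0 :=
    sub_ne_zero.mpr ((Real.le_norm_self _).trans_lt hy).ne'
  have hplus_ne := hne _ hplus
  have hminus_ne := hne _ hminus
  have hvalue : ((1 - x) ^ 2 + 4 * x ^ 2 * w ^ 2) / ((1 - x) ^ 2 - 4 * x ^ 2 * w ^ 2) ^ 2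
      = (1 / (1 - x * (1 + 2 * w)) ^ 2 + 1 / (1 - x * (1 - 2 * w)) ^ 2) / 2 := by
    rw [show (1 - x) ^ 2 - 4 * x ^ 2 * w ^ 2 = (1 - x * (1 + 2 * w)) * (1 - x * (1 - 2 * w)) by
        ring,
      div_add_div _ _ (pow_ne_zero 2 hplus_ne) (pow_ne_zero 2 hminus_ne), div_div,
      div_eq_div_iff (by positivity) (by positivity)]
    ring
  rw [hvalue]
  refine (((hasSum_succ_mul_geometric hplus).add (hasSum_succ_mul_geometric hminus)).div_const
    2).congr_fun fun n => ?_
  rw [mul_pow, mul_pow]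
  ring

theorem hasSum_succ_mul_pow_mul_integral_evenBinomialSum {x : ℝ} (hx : |x| < 1 / 2) :
    HasSum (fun n : ℕ => (n + 1) * x ^ n * ∫ t in (0:ℝ)..1, evenBinomialSum n t)
      (∫ t in (0:ℝ)..1, evenBinomialSumGF x t) := by
  simp_rw [← intervalIntegral.integral_const_mul]
  refine intervalIntegral.hasSum_integral_of_dominated_convergence
    (fun n _ => (n + 1) * (2 * |x|) ^ n)
    (fun n => (by fun_prop : Continuous _).aestronglyMeasurable) (fun n => ?_) ?_
    intervalIntegrable_const ?_
  · refine MeasureTheory.ae_of_all _ fun t ht => ?_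
    rw [Set.uIoc_of_le zero_le_one] at ht
    calc ‖(n + 1) * x ^ n * evenBinomialSum n t‖
        = (n + 1) * |x| ^ n * |evenBinomialSum n t| := by
          simp only [norm_mul, norm_pow, Real.norm_eq_abs,
            abs_of_nonneg (by positivity : (0:ℝ) ≤ n + 1)]
      _ ≤ (n + 1) * |x| ^ n * 2 ^ n := by
          gcongr
          exact abs_evenBinomialSum_le (Set.Ioc_subset_Icc_self ht) n
      _ = (n + 1) * (2 * |x|) ^ n := by ring
  · have h2x : ‖2 * |x|‖ < 1 := by rw [Real.norm_of_nonneg (by positivity)]; linarith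
    exact MeasureTheory.ae_of_all _ fun _ _ => (hasSum_succ_mul_geometric h2x).summable
  · refine MeasureTheory.ae_of_all _ fun t ht => ?_
    rw [Set.uIoc_of_le zero_le_one] at ht
    exact hasSum_succ_mul_pow_mul_evenBinomialSum hx (Set.Ioc_subset_Icc_self ht)

/- With `s = 2t - 1` and `D = a² + x²s²` the integrand is `(2(a² + x²) - D) / D²`. -/
theorem hasDerivAt_evenBinomialSumGF_antideriv {x a : ℝ} (ha : 0 < a) (ha2 : a ^ 2 = 1 - 2 * x)
    (t : ℝ) :
    HasDerivAt (fun t => x / (2 * a ^ 3) * arctan (x * (2 * t - 1) / a)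
        + (a ^ 2 + x ^ 2) / 2 * ((2 * t - 1) / (a ^ 2 * (a ^ 2 + x ^ 2 * (2 * t - 1) ^ 2))))
      (evenBinomialSumGF x t) t := by
  have hs : HasDerivAt (fun t : ℝ => 2 * t - 1) 2 t := by
    simpa using ((hasDerivAt_id t).const_mul 2).sub_const 1
  have harctan := ((hs.const_mul x).div_const a).arctan
  have hquot := hs.fun_div
    (((hs.fun_pow 2).const_mul (x ^ 2)).const_add (a ^ 2) |>.const_mul (a ^ 2)) (by positivity)
  refine ((harctan.const_mul (x / (2 * a ^ 3))).add
    (hquot.const_mul ((a ^ 2 + x ^ 2) / 2))).congr_deriv ?_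
  have hden : (1 - x) ^ 2 - 4 * x ^ 2 * (t * (1 - t)) = a ^ 2 + x ^ 2 * (2 * t - 1) ^ 2 := by
    linear_combination -ha2
  rw [evenBinomialSumGF, hden]
  field_simp
  linear_combination a ^ 2 * ha2

theorem integral_evenBinomialSumGF {x : ℝ} (hx : x < 1 / 2) :
    ∫ t in (0:ℝ)..1, evenBinomialSumGF x t
      = (x * arctan (x / √(1 - 2 * x)) + √(1 - 2 * x)) / √(1 - 2 * x) ^ 3 := by
  set a := √(1 - 2 * x)
  have ha : 0 < a := sqrt_pos.mpr (by linarith)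
  have ha2 : a ^ 2 = 1 - 2 * x := sq_sqrt (by linarith)
  have hden (t : ℝ) : (1 - x) ^ 2 - 4 * x ^ 2 * (t * (1 - t)) ≠ 0 := by
    nlinarith [sq_nonneg (x * (2 * t - 1))]
  have hcont : Continuous (evenBinomialSumGF x) := by
    unfold evenBinomialSumGF
    fun_prop (disch := exact fun t => pow_ne_zero 2 (hden t))
  rw [intervalIntegral.integral_eq_sub_of_hasDerivAt
    (fun t _ => hasDerivAt_evenBinomialSumGF_antideriv ha ha2 t) (hcont.intervalIntegrable 0 1)]
  norm_num [neg_div, arctan_neg]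
  field_simp
  ring

/-- The (ordinary generating function of `sₙ = Σ_{k=0}^{n} C(2n,2k)/C(n,k)`, i.e. the)
exponential generating function of A182525: for `0 < x < 1/100`, `Σ_{n ≥ 0} sₙ xⁿ`
converges to `(x·arctan(x/√(1-2x)) + √(1-2x)) / (√(1-2x))³`. -/
theorem A182525_egf (x : ℝ) (hx : 0 < x) (hx' : x < 1 / 100) :
    HasSum (fun n : ℕ =>
      (∑ k ∈ Finset.range (n + 1), (((2 * n).choose (2 * k) : ℝ)) / (n.choose k)) * x ^ n)
      ((x * Real.arctan (x / Real.sqrt (1 - 2 * x)) + Real.sqrt (1 - 2 * x)) /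
        Real.sqrt (1 - 2 * x) ^ 3) := by
  have hx_half : |x| < 1 / 2 := abs_lt.mpr ⟨by linarith, by linarith⟩
  rw [← integral_evenBinomialSumGF (by linarith)]
  refine (hasSum_succ_mul_pow_mul_integral_evenBinomialSum hx_half).congr_fun fun n => ?_
  rw [sum_choose_div_choose_eq_integral]
  ring
end

section
/- For every n ≥ 1, Σ_{k=0}^{n} binom(2n+1,2k) / binom(n,k) = 1 + ((2n+1)/2) · ∫₀^{π/2} [ (1 + sin(2t))^n − (1 − sin(2t))^n ] dt. -/
open Real Finset intervalIntegral

private lemma sum_pair (f : ℕ → ℝ) (n : ℕ) :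
    ∑ j ∈ range (2 * n), f j = ∑ k ∈ range n, (f (2 * k) + f (2 * k + 1)) := by
  induction n with
  | zero => simp
  | succ m ih =>
      rw [show 2 * (m + 1) = (2 * m + 1) + 1 by ring, sum_range_succ, sum_range_succ, ih,
        sum_range_succ]
      ring

private lemma even_part (c s : ℝ) (n : ℕ) :
    (c + s) ^ (2 * n + 1) + (c - s) ^ (2 * n + 1) =
      2 * ∑ k ∈ range (n + 1),
        ((2 * n + 1).choose (2 * k) : ℝ) * s ^ (2 * k) * c ^ (2 * n + 1 - 2 * k) := by
  have key : (c + s) ^ (2 * n + 1) + (c - s) ^ (2 * n + 1)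
      = ∑ j ∈ range (2 * (n + 1)),
          ((s ^ j + (-s) ^ j) * c ^ (2 * n + 1 - j) * ((2 * n + 1).choose j : ℝ)) := by
    rw [show c + s = s + c by ring, show c - s = -s + c by ring, add_pow, add_pow,
      show 2 * (n + 1) = (2 * n + 1) + 1 by ring, ← Finset.sum_add_distrib]
    exact Finset.sum_congr rfl fun j _ => by ring
  rw [key, sum_pair, Finset.mul_sum]
  refine Finset.sum_congr rfl fun k hk => ?_
  have h1 : (-s) ^ (2 * k) = s ^ (2 * k) := by
    rw [pow_mul, pow_mul, neg_sq]
  have h2 : (-s) ^ (2 * k + 1) = -(s ^ (2 * k + 1)) := by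
    rw [pow_succ, pow_succ, h1]; ring
  rw [h1, h2]
  ring

private lemma beta_nat (a b : ℕ) :
    (∫ x in (0:ℝ)..1, x ^ a * (1 - x) ^ b)
      = (a.factorial : ℝ) * b.factorial / (a + b + 1).factorial := by
  induction b generalizing a with
  | zero =>
      simp only [pow_zero, mul_one, integral_pow, Nat.factorial_one, Nat.add_zero,
        Nat.factorial_succ]
      push_cast
      have : (a : ℝ) + 1 ≠ 0 := by positivity
      field_simp
      simp
  | succ b ih =>
      have hcont : ∀ (p q : ℕ), Continuous fun x : ℝ => x ^ p * (1 - x) ^ q := by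
        intro p q; fun_prop
      have hder : ∀ x : ℝ, HasDerivAt (fun y : ℝ => y ^ (a + 1) * (1 - y) ^ (b + 1))
          ((a + 1 : ℝ) * x ^ a * (1 - x) ^ (b + 1) - (b + 1 : ℝ) * (x ^ (a + 1) * (1 - x) ^ b))
          x := by
        intro x
        have h1 : HasDerivAt (fun y : ℝ => y ^ (a + 1)) ((a + 1 : ℝ) * x ^ a) x := by
          simpa using hasDerivAt_pow (a + 1) x
        have h0 : HasDerivAt (fun y : ℝ => 1 - y) (-1) x := by
          simpa using (hasDerivAt_id x).const_sub (1 : ℝ)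
        have h2 : HasDerivAt (fun y : ℝ => (1 - y) ^ (b + 1))
            (-((b + 1 : ℝ) * (1 - x) ^ b)) x := by
          have := h0.fun_pow (b + 1)
          simpa using this
        have := h1.fun_mul h2
        refine this.congr_deriv (Eq.symm ?_)
        push_cast; ring
      have hint : IntervalIntegrable
          (fun x : ℝ => (a + 1 : ℝ) * x ^ a * (1 - x) ^ (b + 1)
            - (b + 1 : ℝ) * (x ^ (a + 1) * (1 - x) ^ b)) MeasureTheory.volume 0 1 := by
        apply Continuous.intervalIntegrable; fun_prop
      have hFTC := intervalIntegral.integral_eq_sub_of_hasDerivAt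
        (f := fun y : ℝ => y ^ (a + 1) * (1 - y) ^ (b + 1)) (fun x _ => hder x) hint
      simp only [one_pow, sub_self, zero_pow, mul_zero, zero_mul, sub_zero,
        Nat.succ_ne_zero, ne_eq, not_false_iff] at hFTC
      have hsplit : (∫ x in (0:ℝ)..1, ((a + 1 : ℝ) * x ^ a * (1 - x) ^ (b + 1)
            - (b + 1 : ℝ) * (x ^ (a + 1) * (1 - x) ^ b)))
          = (a + 1 : ℝ) * (∫ x in (0:ℝ)..1, x ^ a * (1 - x) ^ (b + 1))
            - (b + 1 : ℝ) * (∫ x in (0:ℝ)..1, x ^ (a + 1) * (1 - x) ^ b) := by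
        rw [intervalIntegral.integral_sub, intervalIntegral.integral_const_mul]
        · congr 1
          rw [← intervalIntegral.integral_const_mul]
          congr 1; ext x; ring
        · apply Continuous.intervalIntegrable; fun_prop
        · apply Continuous.intervalIntegrable; fun_prop
      rw [hsplit, ih (a + 1)] at hFTC
      have e : a + (b + 1) + 1 = a + 1 + b + 1 := by omega
      rw [e]
      have hne1 : ((a + 1 + b + 1).factorial : ℝ) ≠ 0 := by
        exact_mod_cast (a + 1 + b + 1).factorial_ne_zero
      have hne2 : (a : ℝ) + 1 ≠ 0 := by positivity
      have hfs : ((a + 1).factorial : ℝ) = (a + 1) * a.factorial := by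
        rw [Nat.factorial_succ]; push_cast; ring
      have hfs2 : ((b + 1).factorial : ℝ) = (b + 1) * b.factorial := by
        rw [Nat.factorial_succ]; push_cast; ring
      rw [hfs] at hFTC
      rw [hfs2]
      field_simp at hFTC ⊢
      nlinarith [hFTC]
private lemma choose_inv (n k : ℕ) (hk : k ≤ n) :
    ((n.choose k : ℝ))⁻¹ = (n + 1 : ℝ) * ∫ x in (0:ℝ)..1, x ^ k * (1 - x) ^ (n - k) := by
  rw [beta_nat, show k + (n - k) + 1 = n + 1 by omega]
  have hcf := Nat.choose_mul_factorial_mul_factorial hk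
  have hne : (n.choose k : ℝ) ≠ 0 := Nat.cast_ne_zero.mpr (Nat.choose_pos hk).ne'
  have hcast : (n.choose k : ℝ) * (k.factorial * (n - k).factorial) = n.factorial := by
    rw [← mul_assoc]; exact_mod_cast hcf
  have hfs : ((n + 1).factorial : ℝ) = (n + 1) * n.factorial := by
    rw [Nat.factorial_succ]; push_cast; ring
  rw [hfs]
  have h1 : ((n:ℝ) + 1) ≠ 0 := by positivity
  have h2 : (n.factorial : ℝ) ≠ 0 := by exact_mod_cast n.factorial_ne_zero
  field_simp
  linear_combination (-1 : ℝ) * hcast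
theorem binom_ratio_sum_odd (n : ℕ) (hn : 1 ≤ n) :
    ∑ k ∈ Finset.range (n + 1), (((2 * n + 1).choose (2 * k) : ℝ)) / (n.choose k) =
      1 + ((2 * n + 1 : ℝ) / 2) *
        ∫ t in (0 : ℝ)..(Real.pi / 2),
          ((1 + Real.sin (2 * t)) ^ n - (1 - Real.sin (2 * t)) ^ n) := by
  set g : ℝ → ℝ := fun x =>
    ∑ k ∈ range (n + 1), ((2 * n + 1).choose (2 * k) : ℝ) * (x ^ k * (1 - x) ^ (n - k))
    with hg
  have hg_cont : Continuous g := by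
    apply continuous_finset_sum
    intro k _; fun_prop
  -- Step 1: the sum equals (n+1) * ∫₀¹ g
  have step1 : (∑ k ∈ Finset.range (n + 1), (((2 * n + 1).choose (2 * k) : ℝ)) / (n.choose k))
      = (n + 1 : ℝ) * ∫ x in (0:ℝ)..1, g x := by
    have hsum : (∫ x in (0:ℝ)..1, g x)
        = ∑ k ∈ range (n + 1), ((2 * n + 1).choose (2 * k) : ℝ) *
            ∫ x in (0:ℝ)..1, x ^ k * (1 - x) ^ (n - k) := by
      simp only [hg]
      rw [intervalIntegral.integral_finset_sum
        (fun k _ => (by fun_prop : Continuous fun x : ℝ =>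
          ((2 * n + 1).choose (2 * k) : ℝ) * (x ^ k * (1 - x) ^ (n - k))).intervalIntegrable 0 1)]
      exact Finset.sum_congr rfl fun k _ => intervalIntegral.integral_const_mul _ _
    rw [hsum, Finset.mul_sum]
    refine Finset.sum_congr rfl fun k hk => ?_
    have hk' : k ≤ n := Nat.lt_succ_iff.mp (Finset.mem_range.mp hk)
    rw [div_eq_mul_inv, choose_inv n k hk']
    ring
  -- Step 2: substitution x = sin t ^ 2
  have step2 : (∫ x in (0:ℝ)..1, g x)
      = ∫ t in (0:ℝ)..(π / 2), sin (2 * t) * g (sin t ^ 2) := by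
    have hder : ∀ t ∈ Set.uIcc (0:ℝ) (π / 2),
        HasDerivAt (fun u : ℝ => sin u ^ 2) (sin (2 * t)) t := by
      intro t _
      have h := (Real.hasDerivAt_sin t).fun_pow 2
      refine h.congr_deriv (Eq.symm ?_)
      rw [Real.sin_two_mul]; push_cast; ring
    have := intervalIntegral.integral_comp_smul_deriv hder (by fun_prop) hg_cont
    simp only [Function.comp, smul_eq_mul] at this
    rw [show Real.sin 0 ^ 2 = (0:ℝ) by simp, show Real.sin (π / 2) ^ 2 = (1:ℝ) by
      rw [Real.sin_pi_div_two]; norm_num] at this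
    exact this.symm
  -- pointwise rewrite of the substituted integrand
  have hgrw : ∀ t : ℝ, sin (2 * t) * g (sin t ^ 2)
      = sin t * ((cos t + sin t) ^ (2 * n + 1) + (cos t - sin t) ^ (2 * n + 1)) := by
    intro t
    have h1 : (1 : ℝ) - sin t ^ 2 = cos t ^ 2 := by
      have := sin_sq_add_cos_sq t; linarith
    have h3 : g (sin t ^ 2) = ∑ k ∈ range (n + 1),
        ((2 * n + 1).choose (2 * k) : ℝ) * (sin t ^ (2 * k) * cos t ^ (2 * (n - k))) := by
      rw [hg]
      refine Finset.sum_congr rfl fun k _ => ?_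
      rw [h1, ← pow_mul, ← pow_mul]
    rw [sin_two_mul, h3, even_part, Finset.mul_sum, Finset.mul_sum, Finset.mul_sum]
    refine Finset.sum_congr rfl fun k hk => ?_
    have hk' : k ≤ n := Nat.lt_succ_iff.mp (Finset.mem_range.mp hk)
    have e : 2 * n + 1 - 2 * k = 2 * (n - k) + 1 := by omega
    rw [e, pow_succ]
    ring
  -- derivative identity
  set F : ℝ → ℝ := fun t =>
    -(cos t * ((cos t + sin t) ^ (2 * n + 1) + (cos t - sin t) ^ (2 * n + 1))) / 2 with hF
  set D : ℝ → ℝ := fun t =>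
    (n + 1 : ℝ) * (sin (2 * t) * g (sin t ^ 2))
      - ((2 * n + 1 : ℝ) / 2) * ((1 + sin (2 * t)) ^ n - (1 - sin (2 * t)) ^ n) with hD
  have hDeriv : ∀ t : ℝ, HasDerivAt F (D t) t := by
    intro t
    have hs : HasDerivAt Real.sin (cos t) t := Real.hasDerivAt_sin t
    have hc : HasDerivAt Real.cos (-sin t) t := Real.hasDerivAt_cos t
    have hA : HasDerivAt (fun u => (cos u + sin u) ^ (2 * n + 1))
        ((2 * n + 1 : ℝ) * (cos t + sin t) ^ (2 * n) * (cos t - sin t)) t := by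
      have := (hc.fun_add hs).fun_pow (2 * n + 1)
      refine this.congr_deriv (Eq.symm ?_)
      push_cast; ring
    have hB : HasDerivAt (fun u => (cos u - sin u) ^ (2 * n + 1))
        ((2 * n + 1 : ℝ) * (cos t - sin t) ^ (2 * n) * (-(cos t + sin t))) t := by
      have := (hc.fun_sub hs).fun_pow (2 * n + 1)
      refine this.congr_deriv (Eq.symm ?_)
      push_cast; ring
    have hmech := ((hc.fun_mul (hA.fun_add hB)).fun_neg).div_const 2
    refine hmech.congr_deriv (Eq.symm ?_)
    -- show D t equals the mechanical derivative
    rw [hD]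
    simp only
    rw [hgrw t]
    have hpyth : sin t ^ 2 + cos t ^ 2 = 1 := sin_sq_add_cos_sq t
    have e1 : (1 : ℝ) + sin (2 * t) = (cos t + sin t) ^ 2 := by
      rw [sin_two_mul]; nlinarith [hpyth]
    have e2 : (1 : ℝ) - sin (2 * t) = (cos t - sin t) ^ 2 := by
      rw [sin_two_mul]; nlinarith [hpyth]
    rw [e1, e2, ← pow_mul, ← pow_mul]
    have eA : (cos t + sin t) ^ (2 * n + 1) = (cos t + sin t) ^ (2 * n) * (cos t + sin t) :=
      pow_succ _ _
    have eB : (cos t - sin t) ^ (2 * n + 1) = (cos t - sin t) ^ (2 * n) * (cos t - sin t) :=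
      pow_succ _ _
    rw [eA, eB]
    linear_combination (((2 * (n:ℝ) + 1) / 2) *
      ((cos t + sin t) ^ (2 * n) - (cos t - sin t) ^ (2 * n))) * hpyth
  -- FTC
  have hDcont : Continuous D := by
    rw [hD]; fun_prop
  have hFTC : (∫ t in (0:ℝ)..(π / 2), D t) = F (π / 2) - F 0 :=
    intervalIntegral.integral_eq_sub_of_hasDerivAt (fun t _ => hDeriv t)
      (hDcont.intervalIntegrable _ _)
  have hF0 : F 0 = -1 := by
    rw [hF]; norm_num
  have hFpi : F (π / 2) = 0 := by
    rw [hF]; norm_num [Real.cos_pi_div_two]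
  rw [hFpi, hF0] at hFTC
  -- assemble
  have hint1 : IntervalIntegrable (fun t => sin (2 * t) * g (sin t ^ 2))
      MeasureTheory.volume 0 (π / 2) := by
    apply Continuous.intervalIntegrable
    fun_prop
  have hint2 : IntervalIntegrable
      (fun t => ((1 + sin (2 * t)) ^ n - (1 - sin (2 * t)) ^ n))
      MeasureTheory.volume 0 (π / 2) := by
    apply Continuous.intervalIntegrable; fun_prop
  have split : (∫ t in (0:ℝ)..(π / 2), D t)
      = (n + 1 : ℝ) * (∫ t in (0:ℝ)..(π / 2), sin (2 * t) * g (sin t ^ 2))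
        - ((2 * n + 1 : ℝ) / 2) *
          ∫ t in (0:ℝ)..(π / 2), ((1 + sin (2 * t)) ^ n - (1 - sin (2 * t)) ^ n) := by
    rw [hD, intervalIntegral.integral_sub ((hint1.const_mul _)) (hint2.const_mul _),
      intervalIntegral.integral_const_mul, intervalIntegral.integral_const_mul]
  rw [step1, step2]
  rw [split] at hFTC
  linarith [hFTC]
end

section
/- For every n ≥ 1, Σ_{k=0}^{n} binom(2n,2k) / binom(n,k) = 1 + n · ∫₀^{π/2} cos t · [ (cos t + sin t)^(2n−1) − (cos t − sin t)^(2n−1) ] dt. -/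
open Real intervalIntegral

lemma sum_range_two_mul' (n : ℕ) (f : ℕ → ℝ) :
    ∑ j ∈ Finset.range (2 * n), f j = ∑ k ∈ Finset.range n, (f (2 * k) + f (2 * k + 1)) := by
  induction n with
  | zero => simp
  | succ n ih =>
    rw [show 2 * (n + 1) = 2 * n + 1 + 1 by ring, Finset.sum_range_succ, Finset.sum_range_succ,
      Finset.sum_range_succ, ih]
    ring

lemma beta_nat_s15 (m : ℕ) : ∀ k : ℕ, (∫ x in (0:ℝ)..1, x ^ k * (1 - x) ^ m)
    = (Nat.factorial k * Nat.factorial m : ℝ) / Nat.factorial (k + m + 1) := by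
  induction m with
  | zero =>
    intro k
    rw [show ((Nat.factorial 0 : ℕ) : ℝ) = 1 by norm_num]
    simp only [pow_zero, mul_one, integral_pow]
    rw [Nat.factorial_succ]
    push_cast
    rw [one_pow]
    field_simp
    simp
  | succ m ih =>
    intro k
    have hu : ∀ x ∈ Set.uIcc (0:ℝ) 1, HasDerivAt (fun x : ℝ => (1 - x) ^ (m + 1))
        (-((m + 1 : ℝ) * (1 - x) ^ m)) x := by
      intro x _
      have h1 : HasDerivAt (fun x : ℝ => 1 - x) (-1) x := by
        simpa using (hasDerivAt_id x).const_sub 1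
      have h2 := (hasDerivAt_pow (m + 1) (1 - x)).comp x h1
      refine h2.congr_deriv ?_
      push_cast; ring
    have hv : ∀ x ∈ Set.uIcc (0:ℝ) 1, HasDerivAt (fun x : ℝ => x ^ (k + 1) / (k + 1))
        (x ^ k) x := by
      intro x _
      have h2 := (hasDerivAt_pow (k + 1) x).div_const (k + 1)
      refine h2.congr_deriv ?_
      push_cast
      field_simp
    have key := intervalIntegral.integral_mul_deriv_eq_deriv_mul hu hv
      (Continuous.intervalIntegrable (by continuity) _ _)
      (Continuous.intervalIntegrable (by continuity) _ _)
    have e1 : (∫ x in (0:ℝ)..1, x ^ k * (1 - x) ^ (m + 1))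
        = ∫ x in (0:ℝ)..1, (1 - x) ^ (m + 1) * x ^ k :=
      intervalIntegral.integral_congr (fun x _ => by ring)
    have e2 : (∫ x in (0:ℝ)..1, (-((m + 1 : ℝ) * (1 - x) ^ m)) * (x ^ (k + 1) / (k + 1)))
        = (-((m + 1 : ℝ) / (k + 1))) * ∫ x in (0:ℝ)..1, x ^ (k + 1) * (1 - x) ^ m := by
      rw [← intervalIntegral.integral_const_mul]
      exact intervalIntegral.integral_congr (fun x _ => by ring)
    rw [e1, key, e2, ih (k + 1)]
    have hk : ((k:ℝ) + 1) ≠ 0 := by positivity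
    have hkf : ((k + 1 + m + 1).factorial : ℝ) ≠ 0 := by
      exact_mod_cast (Nat.factorial_pos _).ne'
    rw [show k + (m + 1) + 1 = k + 1 + m + 1 by ring]
    rw [Nat.factorial_succ k, Nat.factorial_succ m]
    push_cast
    rw [one_pow, sub_self, zero_pow (Nat.succ_ne_zero m), zero_pow (Nat.succ_ne_zero k)]
    field_simp
    ring

lemma sin_cos_int (k m : ℕ) :
    (∫ t in (0:ℝ)..(π/2), Real.sin t ^ (2 * k + 1) * Real.cos t ^ (2 * m + 1))
      = (Nat.factorial k * Nat.factorial m : ℝ) / (2 * Nat.factorial (k + m + 1)) := by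
  rw [integral_sin_pow_mul_cos_pow_odd, Real.sin_zero, Real.sin_pi_div_two]
  have h : ∀ x ∈ Set.uIcc (0:ℝ) 1, HasDerivAt (fun x : ℝ => x ^ 2) (2 * x) x := by
    intro x _
    simpa using hasDerivAt_pow 2 x
  have hsub := intervalIntegral.integral_comp_mul_deriv h
      ((continuous_const.mul continuous_id).continuousOn)
      (g := fun u : ℝ => u ^ k * (1 - u) ^ m / 2) (by continuity)
  norm_num at hsub
  have e1 : (∫ u in (0:ℝ)..1, u ^ (2 * k + 1) * (1 - u ^ 2) ^ m)
      = ∫ x in (0:ℝ)..1, (x ^ 2) ^ k * (1 - x ^ 2) ^ m / 2 * (2 * x) :=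
    intervalIntegral.integral_congr (fun x _ => by ring)
  rw [e1, hsub, beta_nat_s15 m k]
  ring

lemma expand_odd (m : ℕ) (x y : ℝ) :
    x * ((x + y) ^ (2 * m + 1) - (x - y) ^ (2 * m + 1)) =
      ∑ k ∈ Finset.range (m + 1),
        2 * (((2 * m + 1).choose (2 * k + 1)) : ℝ) * y ^ (2 * k + 1) * x ^ (2 * (m - k) + 1) := by
  have h1 : (x + y) ^ (2 * m + 1)
      = ∑ j ∈ Finset.range (2 * (m + 1)), y ^ j * x ^ (2 * m + 1 - j) * ((2 * m + 1).choose j) := by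
    rw [add_comm x y, add_pow, show 2 * m + 1 + 1 = 2 * (m + 1) by ring]
  have h2 : (x - y) ^ (2 * m + 1)
      = ∑ j ∈ Finset.range (2 * (m + 1)), (-y) ^ j * x ^ (2 * m + 1 - j) * ((2 * m + 1).choose j) := by
    rw [sub_eq_add_neg, add_comm x (-y), add_pow, show 2 * m + 1 + 1 = 2 * (m + 1) by ring]
  rw [h1, h2, ← Finset.sum_sub_distrib, Finset.mul_sum, sum_range_two_mul']
  refine Finset.sum_congr rfl fun k hk => ?_
  have hk' : k ≤ m := Nat.lt_succ_iff.mp (Finset.mem_range.mp hk)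
  have e1 : 2 * m + 1 - (2 * k + 1) = 2 * (m - k) := by omega
  rw [e1, Even.neg_pow ⟨k, by ring⟩, Odd.neg_pow ⟨k, by ring⟩]
  ring


lemma term_id (m k : ℕ) (hk : k ≤ m) :
    (((2 * (m + 1)).choose (2 * (k + 1)) : ℕ) : ℝ) / (((m + 1).choose (k + 1) : ℕ) : ℝ) =
      ((m : ℝ) + 1) * (2 * (((2 * m + 1).choose (2 * k + 1) : ℕ) : ℝ) *
        ((Nat.factorial k * Nat.factorial (m - k) : ℝ) / (2 * Nat.factorial (m + 1)))) := by
  have natid1 : (2 * (m + 1)).choose (2 * (k + 1)) * (2 * (k + 1))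
      = (2 * (m + 1)) * ((2 * m + 1).choose (2 * k + 1)) := by
    have h := Nat.add_one_mul_choose_eq (2 * m + 1) (2 * k + 1)
    rw [show 2 * m + 1 + 1 = 2 * (m + 1) by omega,
      show 2 * k + 1 + 1 = 2 * (k + 1) by omega] at h
    omega
  have natid2 : (m + 1).choose (k + 1) * Nat.factorial (k + 1) * Nat.factorial (m - k)
      = Nat.factorial (m + 1) := by
    have h := Nat.choose_mul_factorial_mul_factorial (Nat.succ_le_succ hk)
    rwa [Nat.succ_sub_succ] at h
  have r1 : (((2 * (m + 1)).choose (2 * (k + 1)) : ℕ) : ℝ) * (2 * ((k : ℝ) + 1))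
      = (2 * ((m : ℝ) + 1)) * (((2 * m + 1).choose (2 * k + 1) : ℕ) : ℝ) := by
    exact_mod_cast natid1
  have r2 : (((m + 1).choose (k + 1) : ℕ) : ℝ) * (((k : ℝ) + 1) * (Nat.factorial k : ℝ))
      * (Nat.factorial (m - k) : ℝ) = (Nat.factorial (m + 1) : ℝ) := by
    have h : ((Nat.factorial (k + 1) : ℕ) : ℝ) = ((k : ℝ) + 1) * (Nat.factorial k : ℝ) := by
      rw [Nat.factorial_succ]; push_cast; ring
    rw [← h]
    exact_mod_cast natid2
  have hD : (((m + 1).choose (k + 1) : ℕ) : ℝ) ≠ 0 :=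
    Nat.cast_ne_zero.mpr (Nat.choose_pos (Nat.succ_le_succ hk)).ne'
  have hF : ((Nat.factorial (m + 1) : ℕ) : ℝ) ≠ 0 :=
    Nat.cast_ne_zero.mpr (Nat.factorial_pos _).ne'
  have hk1 : (2 * ((k : ℝ) + 1)) ≠ 0 := by positivity
  have key2 : (((2 * (m + 1)).choose (2 * (k + 1)) : ℕ) : ℝ) * (Nat.factorial (m + 1) : ℝ)
        * (2 * ((k : ℝ) + 1))
      = (((m : ℝ) + 1) * (((2 * m + 1).choose (2 * k + 1) : ℕ) : ℝ)
          * ((Nat.factorial k : ℝ) * (Nat.factorial (m - k) : ℝ))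
          * (((m + 1).choose (k + 1) : ℕ) : ℝ)) * (2 * ((k : ℝ) + 1)) := by
    linear_combination (Nat.factorial (m + 1) : ℝ) * r1
      - 2 * ((m : ℝ) + 1) * (((2 * m + 1).choose (2 * k + 1) : ℕ) : ℝ) * r2
  have key := mul_right_cancel₀ hk1 key2
  rw [div_eq_iff hD]
  field_simp
  linear_combination key

theorem binom_ratio_sum_even (n : ℕ) (hn : 1 ≤ n) :
    ∑ k ∈ Finset.range (n + 1), (((2 * n).choose (2 * k) : ℝ)) / (n.choose k) =
      1 + (n : ℝ) *
        ∫ t in (0 : ℝ)..(Real.pi / 2),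
          Real.cos t *
            ((Real.cos t + Real.sin t) ^ (2 * n - 1) -
              (Real.cos t - Real.sin t) ^ (2 * n - 1)) := by
  obtain ⟨m, rfl⟩ : ∃ m, n = m + 1 := ⟨n - 1, by omega⟩
  rw [show 2 * (m + 1) - 1 = 2 * m + 1 by omega]
  have hint : (∫ t in (0 : ℝ)..(Real.pi / 2),
        Real.cos t * ((Real.cos t + Real.sin t) ^ (2 * m + 1)
          - (Real.cos t - Real.sin t) ^ (2 * m + 1)))
      = ∑ k ∈ Finset.range (m + 1), 2 * (((2 * m + 1).choose (2 * k + 1) : ℕ) : ℝ) *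
          ((Nat.factorial k * Nat.factorial (m - k) : ℝ)
            / (2 * Nat.factorial (k + (m - k) + 1))) := by
    rw [intervalIntegral.integral_congr (g := fun t => ∑ k ∈ Finset.range (m + 1),
        2 * (((2 * m + 1).choose (2 * k + 1) : ℕ) : ℝ) *
          (Real.sin t ^ (2 * k + 1) * Real.cos t ^ (2 * (m - k) + 1)))
        (fun t _ => by
          rw [expand_odd m (Real.cos t) (Real.sin t)]
          exact Finset.sum_congr rfl fun k _ => by ring)]
    rw [intervalIntegral.integral_finset_sum
        (fun k _ => Continuous.intervalIntegrable (by continuity) _ _)]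
    exact Finset.sum_congr rfl fun k hk => by
      rw [intervalIntegral.integral_const_mul, sin_cos_int]
  rw [hint, Finset.sum_range_succ']
  have h0 : (((2 * (m + 1)).choose (2 * 0) : ℕ) : ℝ) / (((m + 1).choose 0 : ℕ) : ℝ) = 1 := by
    norm_num
  rw [h0, Finset.mul_sum]
  rw [add_comm]
  congr 1
  refine Finset.sum_congr rfl fun k hk => ?_
  have hk' : k ≤ m := Nat.lt_succ_iff.mp (Finset.mem_range.mp hk)
  rw [show k + (m - k) + 1 = m + 1 by omega]
  push_cast [term_id m k hk']
  ring
end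

section
/- Define t_0 = 1 and t_n = (2n)!/n! for n ≥ 1 (the number of random walk labelings of the 2×n King's graph that start on the first column). Then for every n ≥ 2, the number of random walk labelings of the King's graph KG_{2,n} satisfies L(KG_{2,n}) = 2·(2n−1) · Σ_{k=1}^{n} binom(2(n−1), 2(k−1)) · t_{k−1} · t_{n−k}. -/
/-- `t n = (2n)!/n!` (with `t 0 = 1`), the number of random walk labelings of the `2 × n`
King's graph that start on the first column. -/
def t (n : ℕ) : ℕ := (2 * n).factorial / n.factorial

theorem Equiv.Perm.apply_inv_self {α : Type*} (f : Equiv.Perm α) (x : α) : f (f⁻¹ x) = x :=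
  f.apply_symm_apply x

namespace RWLProof
open Finset

variable {N n : ℕ}

/-- each column appears exactly twice -/
def F2 (w : Fin N → Fin n) : Prop := ∀ x, (Finset.univ.filter (fun i => w i = x)).card = 2

/-- column-validity of a word -/
def CV (w : Fin N → Fin n) : Prop :=
  ∀ i : Fin N, (i : ℕ) ≠ 0 → ∃ j, j < i ∧ ((w i : ℤ) - (w j : ℤ)).natAbs ≤ 1

/-- interval-growing permutation -/
def IG (π : Equiv.Perm (Fin n)) : Prop :=
  ∀ k : Fin n, (k : ℕ) ≠ 0 → ∃ j, j < k ∧ ((π k : ℤ) - (π j : ℤ)).natAbs ≤ 1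

/-- first-occurrence position of column x in w -/
noncomputable def fo (w : Fin N → Fin n) (x : Fin n) : ℕ :=
  sInf {i : ℕ | ∃ h : i < N, w ⟨i, h⟩ = x}

def FOmono (w : Fin N → Fin n) : Prop := StrictMono (fo w)

def Surj (w : Fin N → Fin n) : Prop := ∀ x, ∃ i, w i = x

lemma F2.surj {w : Fin N → Fin n} (h : F2 w) : Surj w := by
  intro x
  have := h x
  rcases Finset.card_eq_two.mp this with ⟨a, b, _, hs⟩
  exact ⟨a, by have : a ∈ Finset.univ.filter (fun i => w i = x) := by rw [hs]; simp
               simpa using this⟩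

section fo
variable {w : Fin N → Fin n} (hs : Surj w)
include hs

lemma fo_lt (x : Fin n) : fo w x < N := by
  obtain ⟨i, hi⟩ := hs x
  have hne : {j : ℕ | ∃ h : j < N, w ⟨j, h⟩ = x}.Nonempty := ⟨i, i.isLt, by simpa using hi⟩
  obtain ⟨h, _⟩ := Nat.sInf_mem hne
  exact h

lemma fo_spec (x : Fin n) : w ⟨fo w x, fo_lt hs x⟩ = x := by
  obtain ⟨i, hi⟩ := hs x
  have hne : {j : ℕ | ∃ h : j < N, w ⟨j, h⟩ = x}.Nonempty := ⟨i, i.isLt, by simpa using hi⟩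
  obtain ⟨_, h2⟩ := Nat.sInf_mem hne
  exact h2

omit hs in
lemma fo_le {x : Fin n} {i : Fin N} (hi : w i = x) : fo w x ≤ i :=
  Nat.sInf_le ⟨i.isLt, by simpa using hi⟩

omit hs in
lemma fo_min {x : Fin n} {i : Fin N} (hlt : (i : ℕ) < fo w x) : w i ≠ x := by
  intro h
  have := fo_le (w := w) h
  omega

lemma fo_inj : Function.Injective (fo w) := by
  intro x y hxy
  have h1 := fo_spec hs x
  have h2 := fo_spec hs y
  rw [show (⟨fo w x, fo_lt hs x⟩ : Fin N) = ⟨fo w y, fo_lt hs y⟩ from by simp [hxy]] at h1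
  rw [← h1, h2]

omit hs in
lemma fo_w_zero (h0 : 0 < N) : fo w (w ⟨0, h0⟩) = 0 :=
  Nat.le_zero.mp (fo_le (w := w) (i := ⟨0, h0⟩) rfl)

end fo

/-- the first-occurrence sorting permutation -/
noncomputable def sp (w : Fin N → Fin n) : Equiv.Perm (Fin n) := Tuple.sort (fo w)

lemma sp_strictMono {w : Fin N → Fin n} (hs : Surj w) : StrictMono (fo w ∘ sp w) := by
  have hm : Monotone (fo w ∘ sp w) := Tuple.monotone_sort (fo w)
  have hinj : Function.Injective (fo w ∘ sp w) := (fo_inj hs).comp (sp w).injective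
  exact hm.strictMono_of_injective hinj

lemma sp_unique {w : Fin N → Fin n} (hs : Surj w) {π : Equiv.Perm (Fin n)}
    (hπ : Monotone (fo w ∘ π)) : π = sp w := by
  have := Tuple.unique_monotone (f := fo w) (σ := π) (τ := sp w) hπ (Tuple.monotone_sort (fo w))
  ext k
  exact congrArg Fin.val (fo_inj hs (congrFun this k))

/-- key equivalence: CV is equivalent to the sorting permutation being interval-growing -/
lemma cv_iff_ig {w : Fin N → Fin n} (hf : F2 w) (h0 : 0 < N) : CV w ↔ IG (sp w) := by
  have hs := hf.surj
  set τ := sp w with hτ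
  have hsm := sp_strictMono hs
  constructor
  · intro hcv k hk
    have hkpos : (⟨0, k.pos⟩ : Fin n) < k := by
      rw [Fin.lt_def]; simpa using Nat.pos_of_ne_zero hk
    have hine : fo w (τ k) ≠ 0 := by
      intro hzero
      have := hsm hkpos
      simp only [Function.comp_apply, ← hτ] at this
      omega
    obtain ⟨j, hji, hd⟩ := hcv ⟨fo w (τ k), fo_lt hs _⟩ hine
    rw [Fin.lt_def] at hji
    simp only at hji
    refine ⟨τ⁻¹ (w j), ?_, ?_⟩
    · by_contra hle
      push_neg at hle
      have hmono : fo w (τ k) ≤ fo w (τ (τ⁻¹ (w j))) := hsm.monotone hle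
      rw [Equiv.Perm.coe_inv, Equiv.apply_symm_apply] at hmono
      have hjy : fo w (w j) ≤ (j : ℕ) := fo_le (w := w) rfl
      omega
    · rw [Equiv.Perm.coe_inv, Equiv.apply_symm_apply]
      rw [fo_spec hs (τ k)] at hd
      exact hd
  · intro hig i hi
    by_cases h : fo w (w i) < (i : ℕ)
    · refine ⟨⟨fo w (w i), lt_trans h i.isLt⟩, by rw [Fin.lt_def]; exact h, ?_⟩
      rw [fo_spec hs (w i)]
      simp
    · have heq : fo w (w i) = (i : ℕ) := by
        have := fo_le (w := w) (i := i) rfl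
        omega
      set k := τ⁻¹ (w i) with hk
      have hτk : τ k = w i := Equiv.apply_symm_apply _ _
      have hknz : (k : ℕ) ≠ 0 := by
        intro hk0
        have hle : k ≤ τ⁻¹ (w ⟨0, h0⟩) := by
          rw [Fin.le_def, hk0]; exact Nat.zero_le _
        have := hsm.monotone hle
        rw [← hτ] at this
        simp only [Function.comp_apply, Equiv.Perm.apply_inv_self, hτk] at this
        rw [fo_w_zero (w := w) h0, heq] at this
        omega
      obtain ⟨j', hj', hd⟩ := hig k hknz
      have hlt : fo w (τ j') < fo w (τ k) := hsm hj'
      rw [hτk, heq] at hlt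
      refine ⟨⟨fo w (τ j'), lt_trans hlt i.isLt⟩, by rw [Fin.lt_def]; exact hlt, ?_⟩
      rw [fo_spec hs (τ j')]
      rw [hτk] at hd
      exact hd

/-- composing with a permutation -/
lemma fo_comp (π : Equiv.Perm (Fin n)) (w : Fin N → Fin n) (x : Fin n) :
    fo (⇑π ∘ w) x = fo w (π⁻¹ x) := by
  unfold fo
  congr 1
  ext i
  constructor
  · rintro ⟨h, h2⟩; exact ⟨h, by simp [← h2]⟩
  · rintro ⟨h, h2⟩; exact ⟨h, by simp [h2]⟩

lemma F2_comp {w : Fin N → Fin n} (π : Equiv.Perm (Fin n)) (hf : F2 w) : F2 (⇑π ∘ w) := by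
  intro x
  have : (Finset.univ.filter (fun i => (⇑π ∘ w) i = x)) =
      (Finset.univ.filter (fun i => w i = π⁻¹ x)) := by
    ext i; simp [Equiv.eq_symm_apply, Function.comp]
  rw [this]; exact hf _

/-- sp of a composed word -/
lemma sp_comp {w : Fin N → Fin n} (hs : Surj w) (hm : FOmono w) (π : Equiv.Perm (Fin n)) :
    sp (⇑π ∘ w) = π := by
  symm
  apply sp_unique (fun x => by obtain ⟨i, hi⟩ := hs (π⁻¹ x); exact ⟨i, by simp [hi]⟩)
  have : fo (⇑π ∘ w) ∘ ⇑π = fo w := by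
    funext x; rw [Function.comp_apply, fo_comp]; simp
  rw [this]
  exact hm.monotone

/-- main factorization: words with F2 and property Qw correspond to
(perm with Qp) × (F2 ∧ FOmono words) -/
lemma card_factor (Qw : (Fin N → Fin n) → Prop) (Qp : Equiv.Perm (Fin n) → Prop)
    (hcompat : ∀ (π : Equiv.Perm (Fin n)) (w : Fin N → Fin n), F2 w → FOmono w →
      (Qw (⇑π ∘ w) ↔ Qp π)) :
    Nat.card {w : Fin N → Fin n // F2 w ∧ Qw w} =
      Nat.card {π : Equiv.Perm (Fin n) // Qp π} *
        Nat.card {w : Fin N → Fin n // F2 w ∧ FOmono w} := by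
  have hbij : Function.Bijective
      (fun pw : {π : Equiv.Perm (Fin n) // Qp π} × {w : Fin N → Fin n // F2 w ∧ FOmono w} =>
        (⟨⇑pw.1.1 ∘ pw.2.1, F2_comp _ pw.2.2.1,
          (hcompat _ _ pw.2.2.1 pw.2.2.2).mpr pw.1.2⟩ : {w : Fin N → Fin n // F2 w ∧ Qw w})) := by
    constructor
    · rintro ⟨⟨π, hπ⟩, ⟨w, hwf, hwm⟩⟩ ⟨⟨π', hπ'⟩, ⟨w', hwf', hwm'⟩⟩ h
      simp only [Subtype.mk.injEq] at h
      have hs := hwf.surj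
      have hs' := hwf'.surj
      have hππ' : π = π' := by rw [← sp_comp hs hwm π, h, sp_comp hs' hwm' π']
      subst hππ'
      have hww' : w = w' := by
        funext i
        have := congrFun h i
        simp only [Function.comp_apply] at this
        exact π.injective this
      simp [hww']
    · rintro ⟨v, hvf, hvq⟩
      have hvs := hvf.surj
      have hsm := sp_strictMono hvs
      set π := sp v with hπd
      have hw0f : F2 (⇑π⁻¹ ∘ v) := F2_comp _ hvf
      have hw0m : FOmono (⇑π⁻¹ ∘ v) := by
        intro a b hab
        rw [fo_comp, fo_comp]
        simp only [inv_inv]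
        exact hsm hab
      have hcomp : ⇑π ∘ (⇑π⁻¹ ∘ v) = v := by funext i; simp
      refine ⟨⟨⟨π, ?_⟩, ⟨⇑π⁻¹ ∘ v, hw0f, hw0m⟩⟩, ?_⟩
      · exact (hcompat π _ hw0f hw0m).mp (by rwa [hcomp])
      · exact Subtype.ext hcomp
  rw [← Nat.card_eq_of_bijective _ hbij, Nat.card_prod]

def flip2 : Fin 2 → Fin 2 := fun a => 1 - a

lemma flip2_ne : ∀ a : Fin 2, flip2 a ≠ a := by decide

lemma eq_flip2_of_ne : ∀ {a b : Fin 2}, a ≠ b → a = flip2 b := by decide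

lemma fin2_cases : ∀ a : Fin 2, a = 0 ∨ a = 1 := by decide

def isF (w : Fin N → Fin n) (i : Fin N) : Prop := ∀ j, j < i → w j ≠ w i

instance {w : Fin N → Fin n} : DecidablePred (isF w) := fun i => by
  unfold isF; infer_instance

def pairF (f : Fin n → Fin 2) (w : Fin N → Fin n) : Fin N → Fin 2 × Fin n :=
  fun i => (if isF w i then f (w i) else flip2 (f (w i)), w i)

lemma fiber_two {w : Fin N → Fin n} (hf : F2 w) (x : Fin n) :
    ∃ i1 i2 : Fin N, i1 < i2 ∧ ∀ i, w i = x ↔ i = i1 ∨ i = i2 := by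
  rcases Finset.card_eq_two.mp (hf x) with ⟨a, b, hab, hset⟩
  have hmem : ∀ i, w i = x ↔ i = a ∨ i = b := by
    intro i
    have := Finset.ext_iff.mp hset i
    simpa using this
  rcases lt_or_gt_of_ne hab with h | h
  · exact ⟨a, b, h, hmem⟩
  · exact ⟨b, a, h, fun i => by rw [hmem i]; tauto⟩

lemma isF_iff_fo {w : Fin N → Fin n} (hs : Surj w) (i : Fin N) :
    isF w i ↔ fo w (w i) = (i : ℕ) := by
  constructor
  · intro hF
    have hle : fo w (w i) ≤ (i : ℕ) := fo_le (w := w) rfl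
    rcases eq_or_lt_of_le hle with h | h
    · exact h
    · exfalso
      exact hF ⟨fo w (w i), lt_trans h i.isLt⟩ (by rw [Fin.lt_def]; exact h) (fo_spec hs _)
  · intro hfo j hj hcontra
    have := fo_le (w := w) hcontra
    rw [Fin.lt_def] at hj
    omega

lemma pairF_bijective (f : Fin n → Fin 2) {w : Fin (2*n) → Fin n} (hf : F2 w) :
    Function.Bijective (pairF f w) := by
  rw [Fintype.bijective_iff_injective_and_card]
  constructor
  · intro i i' h
    have hsnd : w i = w i' := congrArg Prod.snd h
    have hfst := congrArg Prod.fst h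
    obtain ⟨i1, i2, h12, hiff⟩ := fiber_two hf (w i)
    have hI : i = i1 ∨ i = i2 := (hiff i).mp rfl
    have hI' : i' = i1 ∨ i' = i2 := (hiff i').mp hsnd.symm
    have hF1 : isF w i1 := by
      intro j hj hc
      have : j = i1 ∨ j = i2 := by
        rw [← hiff]
        rw [hc, (hiff i1).mpr (Or.inl rfl)]
      rcases this with rfl | rfl
      · exact absurd hj (lt_irrefl _)
      · exact absurd (lt_trans hj h12) (lt_irrefl _)
    have hF2' : ¬ isF w i2 := by
      intro hF
      exact hF i1 h12 (by rw [(hiff i1).mpr (Or.inl rfl), (hiff i2).mpr (Or.inr rfl)])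
    rcases hI with rfl | rfl <;> rcases hI' with rfl | rfl <;> try rfl
    · simp only [pairF, hF1, if_pos, hF2'] at hfst
      rw [← hsnd] at hfst
      simp only [hF1, if_pos, hF2', if_neg, not_false_iff] at hfst
      exact absurd hfst.symm (flip2_ne _)
    · simp only [pairF] at hfst
      rw [hsnd] at hfst
      simp only [hF1, if_pos, hF2', if_neg, not_false_iff] at hfst
      exact absurd hfst (flip2_ne _)
  · simp [two_mul]

lemma card_fiber_p (p : Fin (2*n) ≃ Fin 2 × Fin n) : F2 (fun i => (p i).2) := by
  intro x
  have hset : (Finset.univ.filter (fun i => (p i).2 = x)) = {p.symm (0, x), p.symm (1, x)} := by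
    ext i
    simp only [Finset.mem_filter, Finset.mem_univ, true_and, Finset.mem_insert,
      Finset.mem_singleton]
    constructor
    · intro hx
      have hpi : p i = ((p i).1, x) := by rw [← hx]
      rcases fin2_cases (p i).1 with h0 | h1
      · left; rw [← Equiv.symm_apply_apply p i, hpi, h0]
      · right; rw [← Equiv.symm_apply_apply p i, hpi, h1]
    · rintro (rfl | rfl) <;> simp
  rw [hset]
  rw [Finset.card_insert_of_notMem (by simp), Finset.card_singleton]

/-- pairing: equivs Fin N ≃ Fin 2 × Fin n with word-property Q correspond to
row-choices × F2-words with Q. Here N = 2*n. -/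
lemma card_pair (Q : (Fin (2*n) → Fin n) → Prop) :
    Nat.card {p : Fin (2*n) ≃ Fin 2 × Fin n // Q (fun i => (p i).2)} =
      2^n * Nat.card {w : Fin (2*n) → Fin n // F2 w ∧ Q w} := by
  have hbij : Function.Bijective
      (fun fw : (Fin n → Fin 2) × {w : Fin (2*n) → Fin n // F2 w ∧ Q w} =>
        (⟨Equiv.ofBijective _ (pairF_bijective fw.1 fw.2.2.1), fw.2.2.2⟩ :
          {p : Fin (2*n) ≃ Fin 2 × Fin n // Q (fun i => (p i).2)})) := by
    constructor
    · rintro ⟨f, ⟨w, hwf, hwq⟩⟩ ⟨f', ⟨w', hwf', hwq'⟩⟩ h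
      simp only [Subtype.mk.injEq] at h
      have hfun : pairF f w = pairF f' w' := by
        funext i
        exact congrFun (congrArg (fun (e : Fin (2*n) ≃ Fin 2 × Fin n) => ⇑e) (congrArg Subtype.val h)) i
      have hww' : w = w' := by
        funext i
        exact congrArg Prod.snd (congrFun hfun i)
      subst hww'
      have hff' : f = f' := by
        funext x
        obtain ⟨i1, i2, h12, hiff⟩ := fiber_two hwf x
        have hwi1 : w i1 = x := (hiff i1).mpr (Or.inl rfl)
        have hF1 : isF w i1 := by
          intro j hj hc
          have : j = i1 ∨ j = i2 := (hiff j).mp (by rw [hc, hwi1])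
          rcases this with rfl | rfl
          · exact absurd hj (lt_irrefl _)
          · exact absurd (lt_trans hj h12) (lt_irrefl _)
        have := congrArg Prod.fst (congrFun hfun i1)
        simp only [pairF, hF1, if_pos] at this
        rwa [hwi1] at this
      simp [hff']
    · rintro ⟨p, hQ⟩
      set w : Fin (2*n) → Fin n := fun i => (p i).2 with hwdef
      have hwf : F2 w := card_fiber_p p
      have hs := hwf.surj
      set f : Fin n → Fin 2 := fun x => (p ⟨fo w x, fo_lt hs x⟩).1 with hfdef
      have hkey : pairF f w = ⇑p := by
        funext i
        refine Prod.ext ?_ rfl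
        by_cases hF : isF w i
        · have hfo : fo w (w i) = (i : ℕ) := (isF_iff_fo hs i).mp hF
          simp only [pairF, hF, if_pos]
          have : (⟨fo w (w i), fo_lt hs (w i)⟩ : Fin (2*n)) = i := by
            exact Fin.ext hfo
          rw [hfdef]
          simp only []
          rw [this]
        · simp only [pairF, hF, if_neg, not_false_iff]
          have hfo : fo w (w i) ≠ (i : ℕ) := fun hc => hF ((isF_iff_fo hs i).mpr hc)
          have hne : (⟨fo w (w i), fo_lt hs (w i)⟩ : Fin (2*n)) ≠ i := fun hc =>
            hfo (congrArg Fin.val hc)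
          have hpne : p ⟨fo w (w i), fo_lt hs (w i)⟩ ≠ p i := fun hc =>
            hne (p.injective hc)
          have hsnd : (p ⟨fo w (w i), fo_lt hs (w i)⟩).2 = (p i).2 := fo_spec hs (w i)
          have hfst : (p ⟨fo w (w i), fo_lt hs (w i)⟩).1 ≠ (p i).1 := by
            intro hc
            exact hpne (Prod.ext hc hsnd)
          exact (eq_flip2_of_ne (Ne.symm hfst)).symm
      refine ⟨⟨f, ⟨w, hwf, hQ⟩⟩, ?_⟩
      refine Subtype.ext ?_
      refine Equiv.coe_fn_injective ?_
      exact hkey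
  rw [← Nat.card_eq_of_bijective _ hbij, Nat.card_prod]
  congr 1
  simp [Nat.card_eq_fintype_card]

lemma ig_interval {m : ℕ} {π : Equiv.Perm (Fin m)} (hig : IG π) :
    ∀ k, k < m → ∃ a : ℕ,
      (∀ j : Fin m, (j : ℕ) ≤ k → a ≤ (π j : ℕ) ∧ (π j : ℕ) ≤ a + k) ∧
      (∀ v : ℕ, a ≤ v → v ≤ a + k → ∃ j : Fin m, (j : ℕ) ≤ k ∧ (π j : ℕ) = v) := by
  intro k
  induction k with
  | zero =>
    intro hk
    refine ⟨π ⟨0, hk⟩, ?_, ?_⟩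
    · intro j hj
      have hj0 : j = ⟨0, hk⟩ := Fin.ext (Nat.le_zero.mp hj)
      rw [hj0]; omega
    · intro v hv1 hv2
      exact ⟨⟨0, hk⟩, le_refl _, by omega⟩
  | succ k ih =>
    intro hk
    obtain ⟨a, hbound, hcover⟩ := ih (Nat.lt_of_succ_lt hk)
    set K : Fin m := ⟨k+1, hk⟩ with hKdef
    have hKnz : (K : ℕ) ≠ 0 := Nat.succ_ne_zero k
    obtain ⟨j0, hj0, hd⟩ := hig K hKnz
    have hj0le : (j0 : ℕ) ≤ k := by rw [Fin.lt_def] at hj0; simp [hKdef] at hj0; omega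
    have hj0b := hbound j0 hj0le
    have hnew : (π K : ℕ) < a ∨ a + k < (π K : ℕ) := by
      by_contra hcon
      push_neg at hcon
      obtain ⟨j, hjle, hjv⟩ := hcover (π K) hcon.1 hcon.2
      have hjK : j = K := π.injective (Fin.ext hjv)
      rw [hjK] at hjle
      simp [hKdef] at hjle
    rcases hnew with hlt | hgt
    · refine ⟨a - 1, ?_, ?_⟩
      · intro j hj
        by_cases hjk : (j : ℕ) ≤ k
        · have := hbound j hjk; omega
        · have hjK : j = K := Fin.ext (by simp [hKdef]; omega)
          rw [hjK]; omega
      · intro v hv1 hv2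
        by_cases hva : v = a - 1
        · exact ⟨K, by simp [hKdef], by omega⟩
        · obtain ⟨j, hjle, hjv⟩ := hcover v (by omega) (by omega)
          exact ⟨j, by omega, hjv⟩
    · refine ⟨a, ?_, ?_⟩
      · intro j hj
        by_cases hjk : (j : ℕ) ≤ k
        · have := hbound j hjk; omega
        · have hjK : j = K := Fin.ext (by simp [hKdef]; omega)
          rw [hjK]; omega
      · intro v hv1 hv2
        by_cases hva : v = a + k + 1
        · exact ⟨K, by simp [hKdef], by omega⟩
        · obtain ⟨j, hjle, hjv⟩ := hcover v (by omega) (by omega)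
          exact ⟨j, by omega, hjv⟩

lemma ig_last_val {m : ℕ} {π : Equiv.Perm (Fin (m+2))} (hig : IG π) :
    π (Fin.last (m+1)) = 0 ∨ π (Fin.last (m+1)) = Fin.last (m+1) := by
  obtain ⟨a, hbound, hcover⟩ := ig_interval hig (m+1-1) (by omega)
  -- indices ≤ m cover all but the last
  have hnotin : ((π (Fin.last (m+1)) : ℕ) < a ∨ a + m < (π (Fin.last (m+1)) : ℕ)) := by
    by_contra hcon
    push_neg at hcon
    obtain ⟨j, hjle, hjv⟩ := hcover _ hcon.1 hcon.2
    have : j = Fin.last (m+1) := π.injective (Fin.ext hjv)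
    rw [this] at hjle
    simp [Fin.val_last] at hjle
  have ha1 : a + m ≤ m + 1 := by
    obtain ⟨j, _, hjv⟩ := hcover (a + m) (by omega) (by omega)
    have := (π j).isLt
    omega
  have hlast := (π (Fin.last (m+1))).isLt
  rcases hnotin with h | h
  · left
    have : a = 1 ∧ (π (Fin.last (m+1)) : ℕ) = 0 := by
      constructor
      · omega
      · omega
    exact Fin.ext this.2
  · right
    refine Fin.ext ?_
    simp only [Fin.val_last]
    omega

/-- the extension map for the induction on interval-growing permutations -/
def extIG {m : ℕ} (b : Bool) (π : Equiv.Perm (Fin (m+1))) : Equiv.Perm (Fin (m+2)) :=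
  finSuccEquivLast.trans ((π.optionCongr).trans
    (if b then finSuccEquivLast.symm else (finSuccEquiv (m+1)).symm))

lemma extIG_castSucc {m : ℕ} (b : Bool) (π : Equiv.Perm (Fin (m+1))) (j : Fin (m+1)) :
    ((extIG b π) (Fin.castSucc j) : ℕ) = (π j : ℕ) + (if b then 0 else 1) := by
  cases b <;>
    simp [extIG, finSuccEquivLast_castSucc, finSuccEquivLast_symm_some, finSuccEquiv_symm_some]

lemma extIG_last {m : ℕ} (b : Bool) (π : Equiv.Perm (Fin (m+1))) :
    ((extIG b π) (Fin.last (m+1)) : ℕ) = if b then m+1 else 0 := by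
  cases b <;>
    simp [extIG, finSuccEquivLast_last, finSuccEquivLast_symm_none, finSuccEquiv_symm_none]

lemma ig_extIG {m : ℕ} (b : Bool) (π : Equiv.Perm (Fin (m+1))) (h : IG π) : IG (extIG b π) := by
  intro k hk
  induction k using Fin.lastCases with
  | last =>
    rcases b with _ | _
    · -- b = false : last value 0, use preimage of 0
      refine ⟨Fin.castSucc (π⁻¹ 0), Fin.castSucc_lt_last _, ?_⟩
      have h1 := extIG_last false π
      have h2 := extIG_castSucc false π (π⁻¹ 0)
      simp only [Equiv.Perm.apply_inv_self] at h2
      norm_num at h1 h2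
      have h3 : ((0 : Fin (m+1)) : ℕ) = 0 := rfl
      rw [Equiv.Perm.coe_inv, h1, Fin.val_zero]
      omega
    · refine ⟨Fin.castSucc (π⁻¹ (Fin.last m)), Fin.castSucc_lt_last _, ?_⟩
      have h1 := extIG_last true π
      have h2 := extIG_castSucc true π (π⁻¹ (Fin.last m))
      simp only [Equiv.Perm.apply_inv_self] at h2
      have h3 : (Fin.last m : ℕ) = m := Fin.val_last m
      norm_num at h1 h2
      rw [Equiv.Perm.coe_inv]
      omega
  | cast j =>
    have hjnz : (j : ℕ) ≠ 0 := by simpa using hk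
    obtain ⟨j', hj', hd⟩ := h j hjnz
    refine ⟨Fin.castSucc j', by rwa [Fin.castSucc_lt_castSucc_iff], ?_⟩
    have h1 := extIG_castSucc b π j
    have h2 := extIG_castSucc b π j'
    omega

lemma ig_of_extIG {m : ℕ} (b : Bool) (π : Equiv.Perm (Fin (m+1))) (h : IG (extIG b π)) :
    IG π := by
  intro k hk
  have hknz : ((Fin.castSucc k : Fin (m+2)) : ℕ) ≠ 0 := by simpa using hk
  obtain ⟨j, hj, hd⟩ := h (Fin.castSucc k) hknz
  have hjlt : (j : ℕ) < m + 1 := by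
    rw [Fin.lt_def] at hj
    simp only [Fin.coe_castSucc] at hj
    omega
  refine ⟨⟨(j : ℕ), hjlt⟩, by rw [Fin.lt_def] at hj ⊢; simpa using hj, ?_⟩
  have hjc : j = Fin.castSucc (⟨(j : ℕ), hjlt⟩ : Fin (m+1)) := Fin.ext rfl
  rw [hjc] at hd
  have h1 := extIG_castSucc b π k
  have h2 := extIG_castSucc b π ⟨(j : ℕ), hjlt⟩
  omega

lemma card_ig_aux : ∀ m : ℕ, Nat.card {π : Equiv.Perm (Fin (m+1)) // IG π} = 2^m := by
  intro m
  induction m with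
  | zero =>
    have hall : ∀ π : Equiv.Perm (Fin 1), IG π := by
      intro π k hk
      exact absurd (Fin.val_eq_zero k) hk
    rw [Nat.card_congr (Equiv.subtypeUnivEquiv hall)]
    simp [Nat.card_eq_fintype_card]
  | succ m ih =>
    have hbij : Function.Bijective
        (fun bp : Bool × {π : Equiv.Perm (Fin (m+1)) // IG π} =>
          (⟨extIG bp.1 bp.2.1, ig_extIG bp.1 bp.2.1 bp.2.2⟩ :
            {π : Equiv.Perm (Fin (m+2)) // IG π})) := by
      constructor
      · rintro ⟨b, ⟨π, hπ⟩⟩ ⟨b', ⟨π', hπ'⟩⟩ h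
        simp only [Subtype.mk.injEq] at h
        have hlast := congrArg (fun (ρ : Equiv.Perm (Fin (m+2))) => ((ρ (Fin.last (m+1))) : ℕ)) h
        simp only [extIG_last] at hlast
        have hbb' : b = b' := by
          rcases b with _|_ <;> rcases b' with _|_ <;> simp_all
        subst hbb'
        have hππ' : π = π' := by
          ext j
          have := congrArg (fun (ρ : Equiv.Perm (Fin (m+2))) => ((ρ (Fin.castSucc j)) : ℕ)) h
          simp only [extIG_castSucc] at this
          omega
        simp [hππ']
      · rintro ⟨ρ, hρ⟩
        rcases ig_last_val hρ with h0 | hl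
        · -- b = false
          have hne : ∀ j : Fin (m+1), ρ (Fin.castSucc j) ≠ 0 := by
            intro j hc
            have heq : Fin.castSucc j = Fin.last (m+1) := ρ.injective (by rw [hc, h0])
            have := congrArg Fin.val heq
            simp [Fin.coe_castSucc, Fin.val_last] at this
            omega
          have hinj : Function.Injective (fun j : Fin (m+1) => (ρ (Fin.castSucc j)).pred (hne j)) := by
            intro j j' hjj'
            have := ρ.injective ((Fin.pred_inj (ha := hne j) (hb := hne j')).mp hjj')
            exact Fin.castSucc_injective _ this
          set πe := Equiv.ofBijective _ (Finite.injective_iff_bijective.mp hinj) with hπe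
          have hext : extIG false πe = ρ := by
            apply Equiv.ext
            intro k
            induction k using Fin.lastCases with
            | last =>
              refine Fin.ext ?_
              have := extIG_last false πe
              norm_num at this
              rw [this, h0]
            | cast j =>
              refine Fin.ext ?_
              have h1 := extIG_castSucc false πe j
              norm_num at h1
              have h2 : (πe j : ℕ) = ((ρ (Fin.castSucc j)).pred (hne j) : ℕ) := rfl
              have h3 : ((ρ (Fin.castSucc j)).pred (hne j) : ℕ) = (ρ (Fin.castSucc j) : ℕ) - 1 :=
                Fin.coe_pred _ _
              have h4 : (ρ (Fin.castSucc j) : ℕ) ≠ 0 := fun hc => hne j (Fin.ext (by simp [hc]))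
              omega
          refine ⟨⟨false, ⟨πe, ig_of_extIG false πe (by rwa [hext])⟩⟩, Subtype.ext hext⟩
        · -- b = true
          have hne : ∀ j : Fin (m+1), ρ (Fin.castSucc j) ≠ Fin.last (m+1) := by
            intro j hc
            have heq : Fin.castSucc j = Fin.last (m+1) := ρ.injective (by rw [hc, hl])
            have := congrArg Fin.val heq
            simp [Fin.coe_castSucc, Fin.val_last] at this
            omega
          have hinj : Function.Injective
              (fun j : Fin (m+1) => (ρ (Fin.castSucc j)).castPred (hne j)) := by
            intro j j' hjj'
            have := ρ.injective ((Fin.castPred_inj (hi := hne j) (hj := hne j')).mp hjj')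
            exact Fin.castSucc_injective _ this
          set πe := Equiv.ofBijective _ (Finite.injective_iff_bijective.mp hinj) with hπe
          have hext : extIG true πe = ρ := by
            apply Equiv.ext
            intro k
            induction k using Fin.lastCases with
            | last =>
              refine Fin.ext ?_
              have := extIG_last true πe
              norm_num at this
              rw [this, hl, Fin.val_last]
            | cast j =>
              refine Fin.ext ?_
              have h1 := extIG_castSucc true πe j
              norm_num at h1
              have h2 : (πe j : ℕ) = ((ρ (Fin.castSucc j)).castPred (hne j) : ℕ) := rfl
              have h3 : ((ρ (Fin.castSucc j)).castPred (hne j) : ℕ) = (ρ (Fin.castSucc j) : ℕ) :=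
                Fin.coe_castPred _ _
              omega
          refine ⟨⟨true, ⟨πe, ig_of_extIG true πe (by rwa [hext])⟩⟩, Subtype.ext hext⟩
    rw [← Nat.card_eq_of_bijective _ hbij, Nat.card_prod]
    rw [ih]
    simp [Nat.card_eq_fintype_card]
    ring

lemma card_ig (hn : 1 ≤ n) :
    Nat.card {π : Equiv.Perm (Fin n) // IG π} = 2^(n-1) := by
  rcases n with _ | m
  · omega
  · simpa using card_ig_aux m

lemma abs_le_one_iff_natAbs {x : ℤ} : |x| ≤ 1 ↔ x.natAbs ≤ 1 := by
  rw [Int.abs_eq_natAbs]; omega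

lemma king_adj {a b : Fin 2 × Fin n} :
    (kingGraph n).Adj a b ↔ a ≠ b ∧ ((a.2 : ℤ) - (b.2 : ℤ)).natAbs ≤ 1 := by
  have h2 : ∀ u v : Fin 2, |(u : ℤ) - (v : ℤ)| ≤ 1 := by decide
  constructor
  · rintro ⟨hne, h | h⟩
    · exact ⟨hne, abs_le_one_iff_natAbs.mp h.2⟩
    · refine ⟨hne, abs_le_one_iff_natAbs.mp ?_⟩
      rw [abs_sub_comm]
      exact h.2
  · rintro ⟨hne, h⟩
    exact ⟨hne, Or.inl ⟨h2 _ _, abs_le_one_iff_natAbs.mpr h⟩⟩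

lemma valid_iff (σ : (Fin 2 × Fin n) ≃ Fin (2*n)) :
    (∀ v, (σ v : ℕ) ≠ 0 → ∃ u, (kingGraph n).Adj v u ∧ σ u < σ v) ↔
      CV (fun i => (σ.symm i).2) := by
  constructor
  · intro h i hi
    obtain ⟨u, hadj, hlt⟩ := h (σ.symm i) (by rwa [Equiv.apply_symm_apply])
    refine ⟨σ u, by rwa [Equiv.apply_symm_apply] at hlt, ?_⟩
    simpa [Equiv.symm_apply_apply] using (king_adj.mp hadj).2
  · intro h v hv
    obtain ⟨j, hji, hd⟩ := h (σ v) hv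
    refine ⟨σ.symm j, ?_, ?_⟩
    · rw [king_adj]
      refine ⟨?_, ?_⟩
      · intro hc
        rw [hc, Equiv.apply_symm_apply] at hji
        exact absurd hji (lt_irrefl _)
      · simpa [Equiv.symm_apply_apply] using hd
    · rw [Equiv.apply_symm_apply]
      exact hji

/-- step 1: rwlCount as a count of valid equivs -/
lemma card_step1 :
    rwlCount (kingGraph n) (2*n) =
      Nat.card {p : Fin (2*n) ≃ Fin 2 × Fin n // CV (fun i => (p i).2)} := by
  unfold rwlCount
  exact Nat.card_congr (Equiv.subtypeEquiv
    ⟨Equiv.symm, Equiv.symm, fun σ => σ.symm_symm, fun p => p.symm_symm⟩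
    (fun σ => valid_iff σ))

lemma t_mul (m : ℕ) : t m * m.factorial = (2*m).factorial :=
  Nat.div_mul_cancel (Nat.factorial_dvd_factorial (by omega))

lemma main_count (hn : 1 ≤ n) :
    rwlCount (kingGraph n) (2*n) = 2^(n-1) * t n := by
  have h0 : 0 < 2*n := by omega
  set S := Nat.card {w : Fin (2*n) → Fin n // F2 w ∧ FOmono w} with hS
  have hcv : Nat.card {w : Fin (2*n) → Fin n // F2 w ∧ CV w} = 2^(n-1) * S := by
    rw [card_factor CV IG ?_, card_ig hn]
    intro π w hf hm
    have hs := hf.surj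
    rw [cv_iff_ig (F2_comp π hf) h0, sp_comp hs hm π]
  have htriv : Nat.card {w : Fin (2*n) → Fin n // F2 w ∧ (fun _ => True) w} =
      Nat.card (Equiv.Perm (Fin n)) * S := by
    rw [card_factor (fun _ => True) (fun _ => True) (fun _ _ _ _ => Iff.rfl)]
    congr 1
    exact Nat.card_congr (Equiv.subtypeUnivEquiv (fun _ => trivial))
  have hfac : (2*n).factorial = 2^n * (Nat.card (Equiv.Perm (Fin n)) * S) := by
    rw [← htriv, ← card_pair (fun _ => True)]
    rw [Nat.card_congr (Equiv.subtypeUnivEquiv (fun _ => trivial))]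
    rw [Nat.card_eq_fintype_card, Fintype.card_equiv finProdFinEquiv.symm]
    congr 1
    simp
  have hperm : Nat.card (Equiv.Perm (Fin n)) = n.factorial := by
    rw [Nat.card_eq_fintype_card, Fintype.card_perm, Fintype.card_fin]
  have htn : t n = 2^n * S := by
    have h1 : t n * n.factorial = (2^n * S) * n.factorial := by
      rw [t_mul, hfac, hperm]
      ring
    exact Nat.eq_of_mul_eq_mul_right (Nat.factorial_pos n) h1
  rw [card_step1, card_pair CV, hcv, htn]
  ring

end RWLProof

theorem rwl_king_recursion (n : ℕ) (hn : 2 ≤ n) :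
    rwlCount (kingGraph n) (2 * n) =
      2 * (2 * n - 1) *
        ∑ k ∈ Finset.Icc 1 n, (2 * (n - 1)).choose (2 * (k - 1)) * t (k - 1) * t (n - k) := by
  obtain ⟨m, rfl⟩ : ∃ m, n = m + 1 := ⟨n - 1, by omega⟩
  have choose_t : ∀ c : ℕ, c ≤ m →
      (2*m).choose (2*c) * t c * t (m - c) = m.choose c * t m := by
    intro c hc
    have hpos : 0 < c.factorial * (m-c).factorial :=
      Nat.mul_pos (Nat.factorial_pos _) (Nat.factorial_pos _)
    apply Nat.eq_of_mul_eq_mul_right hpos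
    have e3 := Nat.choose_mul_factorial_mul_factorial (show 2*c ≤ 2*m by omega)
    have e4 : 2*m - 2*c = 2*(m-c) := by omega
    rw [e4] at e3
    have h1 : ((2*m).choose (2*c) * t c * t (m-c)) * (c.factorial * (m-c).factorial)
        = (2*m).factorial := by
      rw [show ((2*m).choose (2*c) * t c * t (m-c)) * (c.factorial * (m-c).factorial)
          = (2*m).choose (2*c) * (t c * c.factorial) * (t (m-c) * (m-c).factorial) from by ring,
        RWLProof.t_mul, RWLProof.t_mul]
      exact e3
    have h2 : (m.choose c * t m) * (c.factorial * (m-c).factorial) = (2*m).factorial := by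
      rw [show (m.choose c * t m) * (c.factorial * (m-c).factorial)
          = (m.choose c * c.factorial * (m-c).factorial) * t m from by ring,
        Nat.choose_mul_factorial_mul_factorial hc, mul_comm, RWLProof.t_mul]
    rw [h1, h2]
  have t_succ : t (m+1) = 2*(2*m+1) * t m := by
    have hpos : 0 < (m+1) * m.factorial := Nat.mul_pos (by omega) (Nat.factorial_pos m)
    apply Nat.eq_of_mul_eq_mul_right hpos
    have h1 : t (m+1) * ((m+1) * m.factorial) = (2*(m+1)).factorial := by
      rw [← Nat.factorial_succ, ← RWLProof.t_mul]
    have h2 : (2*(m+1)).factorial = (2*m+2) * ((2*m+1) * (2*m).factorial) := by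
      rw [show 2*(m+1) = (2*m+1)+1 from by ring, Nat.factorial_succ, Nat.factorial_succ]
    rw [h1, h2, ← RWLProof.t_mul m]
    ring
  have hterm : ∀ k ∈ Finset.Icc 1 (m+1),
      (2 * (m+1-1)).choose (2 * (k - 1)) * t (k - 1) * t (m+1 - k)
        = m.choose (k-1) * t m := by
    intro k hk
    rw [Finset.mem_Icc] at hk
    have hc : k - 1 ≤ m := by omega
    have h5 : m + 1 - k = m - (k-1) := by omega
    have h6 : m + 1 - 1 = m := by omega
    rw [h5, h6]
    exact choose_t (k-1) hc
  rw [Finset.sum_congr rfl hterm, ← Finset.sum_mul]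
  have hsum : ∑ k ∈ Finset.Icc 1 (m+1), m.choose (k-1) = 2^m := by
    rw [← Finset.Ico_add_one_right_eq_Icc, Finset.sum_Ico_eq_sum_range]
    simp only [Nat.add_sub_cancel, Nat.add_sub_cancel_left, Nat.succ_sub_one]
    exact Nat.sum_range_choose m
  rw [hsum]
  rw [RWLProof.main_count (by omega), t_succ]
  have h7 : 2*(m+1) - 1 = 2*m+1 := by omega
  rw [h7]
  have h8 : m + 1 - 1 = m := by omega
  rw [h8]
  ring
end
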